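/- arXiv:1609.03537 — 9 statements merged into one kernel-verified Lean document; each statement's English description precedes it below -/
import Mathlib

section
/- Let A be an m×n integer matrix that is totally unimodular, let b ∈ ℤ^m, and let c ∈ ℚ^n. If x* ∈ ℚ^n satisfies A x* ≤ b and c·x* ≥ c·x for every x ∈ ℚ^n with A x ≤ b (i.e., x* is an optimal solution of the linear program max c·x subject to Ax ≤ b over the rationals), then there exists an integral vector z ∈ ℤ^n with A z ≤ b and c·z = c·x*. In particular, the integer program max c·x subject to Ax ≤ b, x ∈ ℤ^n, has the same optimal value as its LP relaxation. -/
/-!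
Add to `A x ≤ b` the integral bounds `⌊A x*⌋ ≤ A x` and `⌊x*⌋ ≤ x ≤ ⌈x*⌉`. The enlarged system
is still totally unimodular, has full column rank and is satisfied by `x*`, so it has a vertex;
the active rows at that vertex contain a square submatrix with determinant `±1`, which makes
the vertex an integral point `z`. The lower bounds `⌊A x*⌋ ≤ A z ≤ b` keep every row of `A` that
is active at `x*` active at `z`, so `x* + t (x* - z)` is still feasible for small `t > 0`, and
optimality of `x*` then forces `c ⬝ z = c ⬝ x*`.
-/

/-- An integer matrix is totally unimodular if every square submatrix
(given by a choice of distinct rows and distinct columns) has determinant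
in `{-1, 0, 1}`. -/
def IsTotallyUnimodularZ {m n : ℕ} (A : Matrix (Fin m) (Fin n) ℤ) : Prop :=
  ∀ (k : ℕ) (f : Fin k → Fin m) (g : Fin k → Fin n),
    Function.Injective f → Function.Injective g →
      (A.submatrix f g).det ∈ ({-1, 0, 1} : Set ℤ)

lemma SignType.range_cast_int : Set.range (SignType.cast : SignType → ℤ) = {-1, 0, 1} := by
  rw [SignType.range_eq]
  ext
  simp only [SignType.zero_eq_zero, SignType.coe_zero, SignType.neg_eq_neg_one, SignType.coe_neg,
    SignType.coe_one, SignType.pos_eq_one, Set.mem_insert_iff, Set.mem_singleton_iff]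
  tauto

lemma isTotallyUnimodularZ_iff {m n : ℕ} (A : Matrix (Fin m) (Fin n) ℤ) :
    IsTotallyUnimodularZ A ↔ A.IsTotallyUnimodular := by
  rw [IsTotallyUnimodularZ, Matrix.IsTotallyUnimodular, SignType.range_cast_int]

namespace Matrix

section Polyhedron

variable {ι κ K : Type*} [Fintype κ]

def activeRows [NonUnitalNonAssocSemiring K] (M : Matrix ι κ K) (d : ι → K) (x : κ → K) :
    Set ι :=
  {i | (M *ᵥ x) i = d i}

def IsBasicSolution [NonUnitalNonAssocSemiring K] (M : Matrix ι κ K) (d : ι → K) (x : κ → K) :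
    Prop :=
  ∀ v, (∀ i ∈ M.activeRows d x, (M *ᵥ v) i = 0) → v = 0

lemma mulVec_add_smul_apply [CommSemiring K] (M : Matrix ι κ K) (x w : κ → K) (t : K) (i : ι) :
    (M *ᵥ (x + t • w)) i = (M *ᵥ x) i + t * (M *ᵥ w) i := by
  simp [mulVec_add, mulVec_smul]

variable [Finite ι] [Field K] [LinearOrder K] [IsStrictOrderedRing K] {M : Matrix ι κ K}
  {d : ι → K} {x w : κ → K}

lemma exists_step_to_blocking_row (hx : M *ᵥ x ≤ d)
    (hw : ∀ i ∈ M.activeRows d x, (M *ᵥ w) i ≤ 0) {i₀ : ι} (hi₀ : 0 < (M *ᵥ w) i₀) :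
    ∃ t : K, 0 < t ∧ M *ᵥ (x + t • w) ≤ d ∧
      ∃ i, 0 < (M *ᵥ w) i ∧ i ∈ M.activeRows d (x + t • w) := by
  classical
  have := Fintype.ofFinite ι
  set P := Finset.univ.filter fun i => 0 < (M *ᵥ w) i
  have hP : P.Nonempty := ⟨i₀, by simpa [P] using hi₀⟩
  have hslack : ∀ i ∈ P, (M *ᵥ x) i < d i := fun i hi =>
    (hx i).lt_of_ne fun h => ((Finset.mem_filter.1 hi).2.trans_le (hw i h)).false
  set ratio : ι → K := fun i => (d i - (M *ᵥ x) i) / (M *ᵥ w) i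
  obtain ⟨i, hiP, hi⟩ := P.exists_mem_eq_inf' hP ratio
  have hpos : ∀ j ∈ P, 0 < (M *ᵥ w) j := fun j hj => (Finset.mem_filter.1 hj).2
  have ht : 0 < P.inf' hP ratio :=
    (Finset.lt_inf'_iff hP).2 fun j hj => div_pos (sub_pos.2 (hslack j hj)) (hpos j hj)
  refine ⟨P.inf' hP ratio, ht, fun j => ?_, i, hpos i hiP, ?_⟩
  · rw [mulVec_add_smul_apply]
    by_cases hj : j ∈ P
    · have := (le_div_iff₀ (hpos j hj)).1 (Finset.inf'_le ratio hj)
      linarith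
    · have hle : (M *ᵥ w) j ≤ 0 := by simpa [P] using hj
      linarith [hx j, mul_nonpos_of_nonneg_of_nonpos ht.le hle]
  · rw [activeRows, Set.mem_ofPred_eq, mulVec_add_smul_apply, hi,
      div_mul_cancel₀ _ (hpos i hiP).ne']
    ring

lemma exists_pos_mulVec_add_smul_le (hx : M *ᵥ x ≤ d)
    (hw : ∀ i ∈ M.activeRows d x, (M *ᵥ w) i ≤ 0) :
    ∃ t : K, 0 < t ∧ M *ᵥ (x + t • w) ≤ d := by
  by_cases h : ∃ i, 0 < (M *ᵥ w) i
  · obtain ⟨i₀, hi₀⟩ := h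
    obtain ⟨t, ht, hfeas, -⟩ := exists_step_to_blocking_row hx hw hi₀
    exact ⟨t, ht, hfeas⟩
  · push Not at h
    refine ⟨1, one_pos, fun i => ?_⟩
    rw [mulVec_add_smul_apply, one_mul]
    linarith [hx i, h i]

lemma exists_isBasicSolution (hM : Function.Injective M.mulVec) (hx : M *ᵥ x ≤ d) :
    ∃ y, M *ᵥ y ≤ d ∧ M.IsBasicSolution d y := by
  -- At a feasible point with a maximal active set, a common kernel vector of the active rows
  -- would lead, by a ratio-test step, to a feasible point with a strictly larger active set.
  obtain ⟨_, ⟨y, hy, rfl⟩, hmax⟩ := (wellFounded_gt (α := Set ι)).has_min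
    {s | ∃ y, M *ᵥ y ≤ d ∧ M.activeRows d y = s} ⟨_, x, hx, rfl⟩
  refine ⟨y, hy, fun v hv => by_contra fun hv0 => ?_⟩
  obtain ⟨i₀, hi₀⟩ : ∃ i, (M *ᵥ v) i ≠ 0 := by
    by_contra! h
    exact hv0 (hM (by rw [mulVec_zero]; exact funext h))
  obtain ⟨w, hw, hw₀⟩ : ∃ w, (∀ i ∈ M.activeRows d y, (M *ᵥ w) i = 0) ∧ 0 < (M *ᵥ w) i₀ := by
    rcases hi₀.lt_or_gt with h | h
    · exact ⟨-v, fun i hi => by simp [mulVec_neg, hv i hi], by simpa [mulVec_neg] using h⟩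
    · exact ⟨v, hv, h⟩
  obtain ⟨t, -, hfeas, i, hi, hiact⟩ := exists_step_to_blocking_row hy (fun i h => (hw i h).le) hw₀
  refine hmax _ ⟨_, hfeas, rfl⟩ ⟨fun j hj => ?_, fun hsub => hi.ne' (hw i (hsub hiact))⟩
  simp only [activeRows, Set.mem_ofPred_eq, mulVec_add_smul_apply] at hj ⊢
  rw [hw j hj, mul_zero, add_zero, hj]

lemma dotProduct_eq_of_activeRows_subset {c y : κ → K} (hx : M *ᵥ x ≤ d)
    (hopt : ∀ v, M *ᵥ v ≤ d → c ⬝ᵥ v ≤ c ⬝ᵥ x) (hy : M *ᵥ y ≤ d)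
    (hxy : M.activeRows d x ⊆ M.activeRows d y) : c ⬝ᵥ y = c ⬝ᵥ x := by
  refine (hopt y hy).antisymm ?_
  obtain ⟨t, ht, hfeas⟩ := exists_pos_mulVec_add_smul_le (w := x - y) hx fun i hi => by
    rw [mulVec_sub, Pi.sub_apply, hi, hxy hi, sub_self]
  have := hopt _ hfeas
  rw [dotProduct_add, dotProduct_smul, dotProduct_sub, smul_eq_mul] at this
  nlinarith

end Polyhedron

section TotallyUnimodular

variable {ι κ : Type*}

lemma IsTotallyUnimodular.isUnit_submatrix {κ' : Type*} [Fintype κ'] [DecidableEq κ']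
    {K : Type*} [Field K] [CharZero K] {M : Matrix ι κ ℤ} (hM : M.IsTotallyUnimodular)
    (f : κ' → ι) (g : κ' → κ) (h : IsUnit ((M.submatrix f g).map (Int.cast : ℤ → K))) :
    IsUnit (M.submatrix f g) := by
  rw [isUnit_iff_isUnit_det, ← Int.cast_det, isUnit_iff_ne_zero, Int.cast_ne_zero] at h
  rw [isUnit_iff_isUnit_det]
  obtain ⟨s, hs⟩ := (isTotallyUnimodular_iff_fintype M).1 hM κ' f g
  cases s <;> simp [← hs] at h ⊢

lemma IsTotallyUnimodular.fromRows_neg {R m : Type*} [CommRing R] {A : Matrix m κ R}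
    (hA : A.IsTotallyUnimodular) : (fromRows A (-A)).IsTotallyUnimodular := by
  rw [isTotallyUnimodular_iff]
  intro k f g
  let sign : m ⊕ m → R := Sum.elim 1 (-1)
  have hsub : (fromRows A (-A)).submatrix f g =
      of fun i j => sign (f i) * (A.submatrix (Sum.elim id id ∘ f) g) i j := by
    ext i j
    cases hfi : f i <;> simp [sign, hfi]
  rw [hsub, det_mul_column]
  change _ ∈ MonoidHom.mrange SignType.castHom.toMonoidHom
  refine mul_mem (prod_mem fun i _ => ?_) ((isTotallyUnimodular_iff A).1 hA k _ g)
  cases f i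
  · exact ⟨1, by simp [sign]⟩
  · exact ⟨-1, by simp [sign]⟩

variable [Fintype κ]

lemma map_intCast_mulVec {K : Type*} [Ring K] (M : Matrix ι κ ℤ) (z : κ → ℤ) :
    M.map (Int.cast : ℤ → K) *ᵥ (fun j => (z j : K)) = fun i => ((M *ᵥ z) i : K) :=
  funext fun i => (RingHom.map_mulVec (Int.castRingHom K) M z i).symm

variable [DecidableEq κ]

lemma fromRows_one_mulVec_injective {R : Type*} [Semiring R] (M : Matrix ι κ R) :
    Function.Injective (fromRows M (1 : Matrix κ κ R)).mulVec :=
  fun v w h => funext fun j => by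
    simpa only [fromRows_mulVec, Sum.elim_inr, one_mulVec] using congrFun h (Sum.inr j)

variable [Finite ι]

lemma exists_isUnit_submatrix_of_mulVec_injective {K : Type*} [Field K] (R : Matrix ι κ K)
    (hR : Function.Injective R.mulVec) :
    ∃ f : κ → ι, IsUnit (R.submatrix f id) := by
  have hspan : Submodule.span K (Set.range R.row) = ⊤ := by
    apply Submodule.eq_top_of_finrank_eq
    rw [← rank_eq_finrank_span_row, Matrix.rank, LinearMap.finrank_range_of_inj hR]
  obtain ⟨κ', a, -, hspan', hli⟩ := exists_linearIndependent' K R.row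
  let e := (Pi.basisFun K κ).indexEquiv (Module.Basis.mk hli (by rw [hspan', hspan]))
  refine ⟨a ∘ e, ?_⟩
  rw [← linearIndependent_rows_iff_isUnit]
  exact hli.comp e e.injective

lemma IsTotallyUnimodular.exists_intCast_eq_of_isBasicSolution {K : Type*} [Field K]
    [CharZero K] {M : Matrix ι κ ℤ} (hM : M.IsTotallyUnimodular) {d : ι → ℤ} {x : κ → K}
    (hx : (M.map (Int.cast : ℤ → K)).IsBasicSolution (fun i => (d i : K)) x) :
    ∃ z : κ → ℤ, (fun j => (z j : K)) = x := by
  set M' := M.map (Int.cast : ℤ → K)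
  let T := M'.activeRows (fun i => (d i : K)) x
  have hT : Function.Injective (M'.submatrix ((↑) : T → ι) id).mulVec := by
    intro v w h
    refine sub_eq_zero.1 (hx _ fun i hi => ?_)
    rw [mulVec_sub, Pi.sub_apply, sub_eq_zero]
    exact congrFun h ⟨i, hi⟩
  obtain ⟨f, hf⟩ := exists_isUnit_submatrix_of_mulVec_injective _ hT
  set B := M.submatrix ((↑) ∘ f) id
  have hB : IsUnit B.det := (isUnit_iff_isUnit_det B).1 (hM.isUnit_submatrix _ id (K := K) hf)
  refine ⟨B⁻¹ *ᵥ (d ∘ (↑) ∘ f), mulVec_injective_iff_isUnit.2 hf (funext fun k => ?_)⟩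
  calc _ = (((B *ᵥ (B⁻¹ *ᵥ (d ∘ (↑) ∘ f))) k : ℤ) : K) :=
        congrFun (map_intCast_mulVec B _) k
    _ = d (f k) := by rw [mulVec_mulVec, mul_nonsing_inv B hB, one_mulVec]; rfl
    _ = _ := (f k).2.symm

variable {K : Type*} [Field K] [LinearOrder K] [IsStrictOrderedRing K]

lemma IsTotallyUnimodular.exists_int_mulVec_le {M : Matrix ι κ ℤ} (hM : M.IsTotallyUnimodular)
    (hinj : Function.Injective (M.map (Int.cast : ℤ → K)).mulVec) {d : ι → ℤ} {x : κ → K}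
    (hx : M.map (Int.cast : ℤ → K) *ᵥ x ≤ fun i => (d i : K)) :
    ∃ z : κ → ℤ, M *ᵥ z ≤ d := by
  obtain ⟨y, hy, hbasic⟩ := exists_isBasicSolution hinj hx
  obtain ⟨z, rfl⟩ := hM.exists_intCast_eq_of_isBasicSolution hbasic
  rw [map_intCast_mulVec] at hy
  exact ⟨z, fun i => Int.cast_le.1 (hy i)⟩

lemma IsTotallyUnimodular.exists_int_le_mulVec_le {M : Matrix ι κ ℤ} (hM : M.IsTotallyUnimodular)
    (hinj : Function.Injective (M.map (Int.cast : ℤ → K)).mulVec) {l u : ι → ℤ} {x : κ → K}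
    (hl : (fun i => (l i : K)) ≤ M.map (Int.cast : ℤ → K) *ᵥ x)
    (hu : M.map (Int.cast : ℤ → K) *ᵥ x ≤ fun i => (u i : K)) :
    ∃ z : κ → ℤ, l ≤ M *ᵥ z ∧ M *ᵥ z ≤ u := by
  have hinj' : Function.Injective ((fromRows M (-M)).map (Int.cast : ℤ → K)).mulVec := by
    intro v w h
    refine hinj (funext fun i => ?_)
    simpa [fromRows_map] using congrFun h (Sum.inl i)
  have hx : (fromRows M (-M)).map (Int.cast : ℤ → K) *ᵥ x ≤
      fun i => ((Sum.elim u (-l) i : ℤ) : K) := by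
    rintro (i | i)
    · simpa [fromRows_map] using hu i
    · simpa [fromRows_map, neg_mulVec, Matrix.map_neg _ (Int.cast_neg (R := K))] using hl i
  obtain ⟨z, hz⟩ := hM.fromRows_neg.exists_int_mulVec_le hinj' hx
  refine ⟨z, fun i => ?_, fun i => ?_⟩
  · simpa [neg_mulVec] using hz (Sum.inr i)
  · simpa using hz (Sum.inl i)

lemma IsTotallyUnimodular.exists_int_floor_le_mulVec_le [FloorRing K] {A : Matrix ι κ ℤ}
    (hA : A.IsTotallyUnimodular) {b : ι → ℤ} {x : κ → K}
    (hx : A.map (Int.cast : ℤ → K) *ᵥ x ≤ fun i => (b i : K)) :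
    ∃ z : κ → ℤ, (fun i => ⌊(A.map (Int.cast : ℤ → K) *ᵥ x) i⌋) ≤ A *ᵥ z ∧ A *ᵥ z ≤ b := by
  -- The rows of `1`, with the bounds `⌊x⌋ ≤ · ≤ ⌈x⌉`, give full column rank without losing `x`.
  have hinj : Function.Injective
      ((fromRows A (1 : Matrix κ κ ℤ)).map (Int.cast : ℤ → K)).mulVec := by
    rw [fromRows_map, Matrix.map_one _ Int.cast_zero Int.cast_one]
    exact fromRows_one_mulVec_injective _
  set l : ι ⊕ κ → ℤ := Sum.elim (fun i => ⌊(A.map (Int.cast : ℤ → K) *ᵥ x) i⌋) fun j => ⌊x j⌋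
  set u : ι ⊕ κ → ℤ := Sum.elim b fun j => ⌈x j⌉
  have hl : (fun i => (l i : K)) ≤ (fromRows A 1).map (Int.cast : ℤ → K) *ᵥ x := by
    rintro (i | j)
    · simpa [l, fromRows_map] using Int.floor_le ((A.map (Int.cast : ℤ → K) *ᵥ x) i)
    · simpa [l, fromRows_map] using Int.floor_le (x j)
  have hu : (fromRows A 1).map (Int.cast : ℤ → K) *ᵥ x ≤ fun i => (u i : K) := by
    rintro (i | j)
    · simpa [u, fromRows_map] using hx i
    · simpa [u, fromRows_map] using Int.le_ceil (x j)
  obtain ⟨z, hlz, hzu⟩ := hA.fromRows_one.exists_int_le_mulVec_le hinj hl hu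
  exact ⟨z, fun i => by simpa [l] using hlz (Sum.inl i),
    fun i => by simpa [u] using hzu (Sum.inl i)⟩

end TotallyUnimodular

end Matrix

open Matrix

/-- If `A` is totally unimodular, `b` is integral, and `x*` is an optimal
solution of the linear program `max cᵀx s.t. Ax ≤ b` over the rationals,
then there is an integral vector `z` that is feasible and attains the same
objective value; in particular the integer program has the same optimal
value as its LP relaxation. -/
theorem stmt0 {m n : ℕ} (A : Matrix (Fin m) (Fin n) ℤ)
    (hTU : IsTotallyUnimodularZ A)
    (b : Fin m → ℤ) (c : Fin n → ℚ) (xstar : Fin n → ℚ)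
    (hfeas : ∀ i, ∑ j, (A i j : ℚ) * xstar j ≤ (b i : ℚ))
    (hopt : ∀ x : Fin n → ℚ, (∀ i, ∑ j, (A i j : ℚ) * x j ≤ (b i : ℚ)) →
      ∑ j, c j * x j ≤ ∑ j, c j * xstar j) :
    ∃ z : Fin n → ℤ, (∀ i, ∑ j, A i j * z j ≤ b i) ∧
      ∑ j, c j * (z j : ℚ) = ∑ j, c j * xstar j := by
  have hfeas' : A.map (Int.cast : ℤ → ℚ) *ᵥ xstar ≤ fun i => (b i : ℚ) := hfeas
  obtain ⟨z, hlz, hAz⟩ :=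
    ((isTotallyUnimodularZ_iff A).1 hTU).exists_int_floor_le_mulVec_le hfeas'
  refine ⟨z, hAz, dotProduct_eq_of_activeRows_subset hfeas' hopt ?_ fun i hi => ?_⟩
  · rw [map_intCast_mulVec]
    exact fun i => Int.cast_le.2 (hAz i)
  · have hi : (A.map (Int.cast : ℤ → ℚ) *ᵥ xstar) i = b i := hi
    have hbz : b i ≤ (A *ᵥ z) i := by simpa [hi] using hlz i
    change (A.map (Int.cast : ℤ → ℚ) *ᵥ fun j => (z j : ℚ)) i = b i
    rw [map_intCast_mulVec]
    exact congrArg Int.cast ((hAz i).antisymm hbz)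
end

section
/- Every matrix with entries in {0,1} that has the consecutive ones property is totally unimodular. -/
/-- A rational matrix is totally unimodular if every square submatrix
(given by a choice of distinct rows and distinct columns) has determinant
in `{-1, 0, 1}`. -/
def IsTU {R C : Type*} (A : Matrix R C ℚ) : Prop :=
  ∀ (k : ℕ) (f : Fin k → R) (g : Fin k → C),
    Function.Injective f → Function.Injective g →
      (A.submatrix f g).det ∈ ({-1, 0, 1} : Set ℚ)

/-- A matrix has the strong consecutive ones property if in every row the
`1`-entries form a contiguous block of columns. -/
def HasStrongC1P {R : Type*} {n : ℕ} (M : Matrix R (Fin n) ℚ) : Prop :=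
  ∀ (r : R) (i j l : Fin n), i ≤ j → j ≤ l → M r i = 1 → M r l = 1 → M r j = 1

/-- A matrix has the consecutive ones property if its columns can be permuted
so that the resulting matrix has the strong consecutive ones property. -/
def HasC1P {R : Type*} {n : ℕ} (M : Matrix R (Fin n) ℚ) : Prop :=
  ∃ σ : Equiv.Perm (Fin n), HasStrongC1P (M.submatrix id σ)

/-- A row is "OK" if all entries are in {-1,0,1}, with at most one `1`
and at most one `-1`. -/
def RowOK {k : ℕ} (v : Fin k → ℚ) : Prop :=
  (∀ j, v j = -1 ∨ v j = 0 ∨ v j = 1) ∧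
  (∀ j1 j2, v j1 = 1 → v j2 = 1 → j1 = j2) ∧
  (∀ j1 j2, v j1 = -1 → v j2 = -1 → j1 = j2)

lemma rowOK_comp {k m : ℕ} {v : Fin m → ℚ} (h : RowOK v) (g : Fin k → Fin m)
    (hg : Function.Injective g) : RowOK (v ∘ g) := by
  obtain ⟨h1, h2, h3⟩ := h
  refine ⟨fun j => h1 (g j), fun j1 j2 a b => hg (h2 _ _ a b),
    fun j1 j2 a b => hg (h3 _ _ a b)⟩

lemma det_rowOK : ∀ (k : ℕ) (B : Matrix (Fin k) (Fin k) ℚ),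
    (∀ i, RowOK (B i)) → B.det = -1 ∨ B.det = 0 ∨ B.det = 1 := by
  intro k
  induction k with
  | zero => intro B _; right; right; simp [Matrix.det_fin_zero]
  | succ m ih =>
    intro B hB
    by_cases hall : ∀ i, (∃ j, B i j = 1) ∧ (∃ j, B i j = -1)
    · right; left
      rw [← Matrix.exists_mulVec_eq_zero_iff]
      refine ⟨fun _ => 1, ?_, ?_⟩
      · intro h0
        have := congrFun h0 0
        simp at this
      · funext i
        obtain ⟨⟨j1, hj1⟩, ⟨j2, hj2⟩⟩ := hall i
        have hne : j1 ≠ j2 := by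
          intro h; rw [h, hj2] at hj1; norm_num at hj1
        have hz : ∀ j : Fin (m+1), j ∉ ({j1, j2} : Finset (Fin (m+1))) → B i j = 0 := by
          intro j hj
          simp only [Finset.mem_insert, Finset.mem_singleton] at hj
          push_neg at hj
          rcases (hB i).1 j with h | h | h
          · exact absurd ((hB i).2.2 j j2 h hj2) hj.2
          · exact h
          · exact absurd ((hB i).2.1 j j1 h hj1) hj.1
        have hsub : ∑ j, B i j = ∑ j ∈ ({j1, j2} : Finset (Fin (m+1))), B i j := by
          refine (Finset.sum_subset (Finset.subset_univ _) ?_).symm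
          intro x _ hx; exact hz x hx
        have key : ∑ j, B i j = 0 := by
          rw [hsub, Finset.sum_pair hne, hj1, hj2]; norm_num
        simpa [Matrix.mulVec, dotProduct] using key
    · push_neg at hall
      obtain ⟨i, hi⟩ := hall
      by_cases hz : ∀ j, B i j = 0
      · right; left; exact Matrix.det_eq_zero_of_row_eq_zero i hz
      · push_neg at hz
        obtain ⟨j0, hj0⟩ := hz
        have hcase : (∀ j, B i j ≠ 1) ∨ (∀ j, B i j ≠ -1) := by
          by_cases h1 : ∀ j, B i j ≠ 1
          · exact Or.inl h1
          · push_neg at h1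
            exact Or.inr (hi h1)
        have huniq : ∀ j, j ≠ j0 → B i j = 0 := by
          intro j hj
          rcases hcase with h1 | h1
          · -- no entry equals 1, so all nonzero entries are -1 and unique
            rcases (hB i).1 j with h | h | h
            · -- B i j = -1 ; B i j0 must also be -1
              exfalso
              rcases (hB i).1 j0 with h0 | h0 | h0
              · exact hj ((hB i).2.2 j j0 h h0)
              · exact hj0 h0
              · exact h1 j0 h0
            · exact h
            · exact absurd h (h1 j)
          · rcases (hB i).1 j with h | h | h
            · exact absurd h (h1 j)
            · exact h
            · exfalso
              rcases (hB i).1 j0 with h0 | h0 | h0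
              · exact h1 j0 h0
              · exact hj0 h0
              · exact hj ((hB i).2.1 j j0 h h0)
        rw [Matrix.det_succ_row B i]
        rw [Finset.sum_eq_single j0]
        · have hmem := ih (B.submatrix i.succAbove j0.succAbove) ?_
          · rcases hmem with h | h | h <;> rw [h] <;>
              rcases (hB i).1 j0 with h0 | h0 | h0 <;>
              first
                | (exact absurd h0 hj0)
                | (rw [h0];
                   rcases Nat.even_or_odd ((i : ℕ) + (j0 : ℕ)) with hp | hp
                   · rw [hp.neg_one_pow]; norm_num
                   · rw [hp.neg_one_pow]; norm_num)
          · intro i'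
            exact rowOK_comp (hB (i.succAbove i')) j0.succAbove
              (Fin.succAbove_right_injective)
        · intro j _ hj
          rw [huniq j hj]; ring
        · intro h; exact absurd (Finset.mem_univ j0) h

lemma interval_det {k : ℕ} (A : Matrix (Fin k) (Fin k) ℚ)
    (h01 : ∀ r j, A r j = 0 ∨ A r j = 1)
    (hint : ∀ (r i j l : Fin k), i ≤ j → j ≤ l → A r i = 1 → A r l = 1 → A r j = 1) :
    A.det = -1 ∨ A.det = 0 ∨ A.det = 1 := by
  classical
  set U : Matrix (Fin k) (Fin k) ℚ :=
    fun l j => (if l = j then 1 else 0) - (if (l : ℕ) + 1 = (j : ℕ) then 1 else 0) with hU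
  have hUtri : U.BlockTriangular id := by
    intro a b hab
    have h1 : ¬ (a = b) := by
      intro h; subst h; exact lt_irrefl _ hab
    have h2 : ¬ ((a : ℕ) + 1 = (b : ℕ)) := by
      have : (b : ℕ) < (a : ℕ) := hab
      omega
    simp [hU, h1, h2]
  have hUdet : U.det = 1 := by
    rw [Matrix.det_of_upperTriangular hUtri]
    apply Finset.prod_eq_one
    intro a _
    simp [hU]
  have hAU : (A * U).det = A.det := by rw [Matrix.det_mul, hUdet, mul_one]
  rw [← hAU]
  apply det_rowOK
  intro i
  have hent : ∀ j : Fin k, (A * U) i j =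
      A i j - (if h : (j : ℕ) = 0 then 0 else A i ⟨(j : ℕ) - 1, by omega⟩) := by
    intro j
    rw [Matrix.mul_apply]
    simp only [hU, mul_sub]
    rw [Finset.sum_sub_distrib]
    congr 1
    · simp
    · by_cases hj : (j : ℕ) = 0
      · rw [dif_pos hj]
        apply Finset.sum_eq_zero
        intro l _
        have : ¬ ((l : ℕ) + 1 = (j : ℕ)) := by omega
        simp [this]
      · rw [dif_neg hj]
        have hlt : (j : ℕ) - 1 < k := by omega
        have hiff : ∀ l : Fin k, ((l : ℕ) + 1 = (j : ℕ)) = (l = ⟨(j : ℕ) - 1, hlt⟩) := by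
          intro l
          apply propext
          rw [Fin.ext_iff]
          constructor <;> intro h <;> simp only [] at h ⊢ <;> omega
        simp only [hiff]
        simp
  have hone : ∀ j : Fin k, (A * U) i j = 1 →
      A i j = 1 ∧ ∀ (h : ¬ (j : ℕ) = 0), A i ⟨(j : ℕ) - 1, by omega⟩ = 0 := by
    intro j hw
    rw [hent j] at hw
    by_cases hj : (j : ℕ) = 0
    · rw [dif_pos hj] at hw
      constructor
      · linarith
      · intro h; exact absurd hj h
    · rw [dif_neg hj] at hw
      rcases h01 i j with h | h <;> rcases h01 i ⟨(j : ℕ) - 1, by omega⟩ with h' | h' <;>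
        rw [h, h'] at hw <;> norm_num at hw <;>
        exact ⟨h, fun _ => h'⟩
  have hneg : ∀ j : Fin k, (A * U) i j = -1 →
      A i j = 0 ∧ ∃ (h : ¬ (j : ℕ) = 0), A i ⟨(j : ℕ) - 1, by omega⟩ = 1 := by
    intro j hw
    rw [hent j] at hw
    by_cases hj : (j : ℕ) = 0
    · rw [dif_pos hj] at hw
      rcases h01 i j with h | h <;> rw [h] at hw <;> norm_num at hw
    · rw [dif_neg hj] at hw
      rcases h01 i j with h | h <;> rcases h01 i ⟨(j : ℕ) - 1, by omega⟩ with h' | h' <;>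
        rw [h, h'] at hw <;> norm_num at hw <;>
        exact ⟨h, hj, h'⟩
  refine ⟨?_, ?_, ?_⟩
  · intro j
    rw [hent j]
    by_cases hj : (j : ℕ) = 0
    · rw [dif_pos hj]
      rcases h01 i j with h | h <;> rw [h] <;> norm_num
    · rw [dif_neg hj]
      rcases h01 i j with h | h <;> rcases h01 i ⟨(j : ℕ) - 1, by omega⟩ with h' | h' <;>
        rw [h, h'] <;> norm_num
  · intro j1 j2 h1 h2
    by_contra hne
    obtain ⟨ha1, hb1⟩ := hone j1 h1
    obtain ⟨ha2, hb2⟩ := hone j2 h2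
    rcases lt_trichotomy j1 j2 with hlt | heq | hlt
    · have hj2 : ¬ (j2 : ℕ) = 0 := by
        have : (j1 : ℕ) < (j2 : ℕ) := hlt
        omega
      have hmid : A i ⟨(j2 : ℕ) - 1, by omega⟩ = 1 := by
        apply hint i j1 _ j2
        · rw [Fin.le_def]
          have : (j1 : ℕ) < (j2 : ℕ) := hlt
          simp only []
          omega
        · rw [Fin.le_def]
          simp only []
          omega
        · exact ha1
        · exact ha2
      rw [hb2 hj2] at hmid
      norm_num at hmid
    · exact hne heq
    · have hj1 : ¬ (j1 : ℕ) = 0 := by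
        have : (j2 : ℕ) < (j1 : ℕ) := hlt
        omega
      have hmid : A i ⟨(j1 : ℕ) - 1, by omega⟩ = 1 := by
        apply hint i j2 _ j1
        · rw [Fin.le_def]
          have : (j2 : ℕ) < (j1 : ℕ) := hlt
          simp only []
          omega
        · rw [Fin.le_def]
          simp only []
          omega
        · exact ha2
        · exact ha1
      rw [hb1 hj1] at hmid
      norm_num at hmid
  · intro j1 j2 h1 h2
    by_contra hne
    obtain ⟨ha1, hj1, hb1⟩ := hneg j1 h1
    obtain ⟨ha2, hj2, hb2⟩ := hneg j2 h2
    rcases lt_trichotomy j1 j2 with hlt | heq | hlt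
    · have hlt' : (j1 : ℕ) < (j2 : ℕ) := hlt
      have hmid : A i j1 = 1 := by
        apply hint i ⟨(j1 : ℕ) - 1, by omega⟩ j1 ⟨(j2 : ℕ) - 1, by omega⟩
        · rw [Fin.le_def]; simp only []; omega
        · rw [Fin.le_def]; simp only []; omega
        · exact hb1
        · exact hb2
      rw [ha1] at hmid
      norm_num at hmid
    · exact hne heq
    · have hlt' : (j2 : ℕ) < (j1 : ℕ) := hlt
      have hmid : A i j2 = 1 := by
        apply hint i ⟨(j2 : ℕ) - 1, by omega⟩ j2 ⟨(j1 : ℕ) - 1, by omega⟩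
        · rw [Fin.le_def]; simp only []; omega
        · rw [Fin.le_def]; simp only []; omega
        · exact hb2
        · exact hb1
      rw [ha2] at hmid
      norm_num at hmid

lemma strong_tu {R : Type*} {n : ℕ} (M : Matrix R (Fin n) ℚ)
    (h01 : ∀ r j, M r j = 0 ∨ M r j = 1) (h : HasStrongC1P M) : IsTU M := by
  intro k f g hf hg
  set π := Tuple.sort g with hπ
  have hmono : Monotone (g ∘ π) := Tuple.monotone_sort g
  have hdet : ((M.submatrix f g).submatrix id ⇑π).det
      = Equiv.Perm.sign π * (M.submatrix f g).det := Matrix.det_permute' π _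
  have hsub : (M.submatrix f g).submatrix id ⇑π = M.submatrix f (g ∘ π) := by
    ext i j; rfl
  have hmem : (M.submatrix f (g ∘ π)).det = -1 ∨ (M.submatrix f (g ∘ π)).det = 0
      ∨ (M.submatrix f (g ∘ π)).det = 1 := by
    apply interval_det
    · intro r j; exact h01 (f r) ((g ∘ π) j)
    · intro r i j l hij hjl h1 h2
      exact h (f r) _ _ _ (hmono hij) (hmono hjl) h1 h2
  rw [hsub] at hdet
  simp only [Set.mem_insert_iff, Set.mem_singleton_iff]
  rcases Int.units_eq_one_or (Equiv.Perm.sign π) with hs | hs <;>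
    rw [hs] at hdet <;> simp only [Units.val_one, Units.val_neg, Int.cast_one,
      Int.cast_neg, one_mul, neg_mul] at hdet <;>
    rcases hmem with hd | hd | hd <;> rw [hd] at hdet <;>
    [skip; skip; skip; skip; skip; skip] <;>
    first
      | (left; linarith)
      | (right; left; linarith)
      | (right; right; linarith)

/-- Every `{0,1}`-matrix with the consecutive ones property is totally
unimodular. -/
theorem stmt2 {R : Type*} {n : ℕ} (M : Matrix R (Fin n) ℚ)
    (h01 : ∀ r j, M r j = 0 ∨ M r j = 1) (hC1P : HasC1P M) :
    IsTU M := by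
  obtain ⟨σ, hσ⟩ := hC1P
  intro k f g hf hg
  have h01' : ∀ r j, (M.submatrix id ⇑σ) r j = 0 ∨ (M.submatrix id ⇑σ) r j = 1 :=
    fun r j => h01 r (σ j)
  have key := strong_tu (M.submatrix id ⇑σ) h01' hσ k f (⇑σ.symm ∘ g) hf
    (σ.symm.injective.comp hg)
  have heq : (M.submatrix id ⇑σ).submatrix f (⇑σ.symm ∘ g) = M.submatrix f g := by
    ext i j
    simp [Matrix.submatrix_apply]
  rwa [heq] at key
end

section
/- Let P = (≻_1,…,≻_n) be a profile of linear orders over a finite set C of m candidates, and for each voter i and each t ∈ {1,…,m} let T_{i,t} = {c ∈ C : rank_i(c) ≤ t} be the top-initial segment consisting of voter i's t most-preferred candidates (rank_i(c) is the position of c in ≻_i, with rank 1 the most preferred). Then P is single-peaked with respect to some axis ◁ if and only if the {0,1}-matrix M_SP^P, which has one column per candidate and one row per pair (i,t) equal to the incidence vector of T_{i,t}, has the consecutive ones property. -/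
private lemma ite_eq_one_iff (P : Prop) [Decidable P] :
    ((if P then (1 : ℚ) else 0) = 1) ↔ P := by
  split_ifs with h <;> simp [h]

/-- Candidates are `Fin m`; voter `i`'s linear order is encoded by the
bijective rank function `rank i` (rank `0` is most preferred, so
`b ≻_i a ↔ rank i b < rank i a`); an axis `◁` is encoded by a bijective
position function `pos` (so `a ◁ b ↔ pos a < pos b`), and the peak of voter
`i` is the candidate of rank `0`.  The profile is single-peaked with respect
to some axis if and only if the matrix whose rows are the incidence vectors
of all top-initial segments `T_{i,t} = {c : rank i c ≤ t}` has the
consecutive ones property. -/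
theorem stmt3 {n m : ℕ} (hm : 0 < m) (rank : Fin n → Equiv.Perm (Fin m)) :
    (∃ pos : Equiv.Perm (Fin m), ∀ (i : Fin n) (a b : Fin m),
        ((pos ((rank i).symm ⟨0, hm⟩) < pos b ∧ pos b < pos a) ∨
          (pos a < pos b ∧ pos b < pos ((rank i).symm ⟨0, hm⟩))) →
        rank i b < rank i a)
    ↔ HasC1P (Matrix.of fun (p : Fin n × Fin m) (c : Fin m) =>
        if rank p.1 c ≤ p.2 then (1 : ℚ) else 0) := by
  constructor
  · rintro ⟨pos, hsp⟩
    refine ⟨pos.symm, ?_⟩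
    rintro ⟨i, t⟩ x y z hxy hyz hx hz
    simp only [Matrix.submatrix_apply, Matrix.of_apply, id_eq, ite_eq_one_iff] at hx hz ⊢
    rcases eq_or_lt_of_le hxy with h1 | h1
    · rw [← h1]; exact hx
    rcases eq_or_lt_of_le hyz with h2 | h2
    · rw [h2]; exact hz
    set p := (rank i).symm ⟨0, hm⟩ with hp
    set a := pos.symm x with ha
    set b := pos.symm y with hb
    set c := pos.symm z with hc
    have hpa : pos a = x := pos.apply_symm_apply x
    have hpb : pos b = y := pos.apply_symm_apply y
    have hpc : pos c = z := pos.apply_symm_apply z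
    have hrp : rank i p = ⟨0, hm⟩ := (rank i).apply_symm_apply _
    have hpt : rank i p ≤ t := by rw [hrp]; exact Fin.mk_le_of_le_val (Nat.zero_le _)
    rcases lt_trichotomy (pos b) (pos p) with hcase | hcase | hcase
    · have := hsp i a b (Or.inr ⟨by rw [hpa, hpb]; exact h1, hcase⟩)
      exact le_of_lt (lt_of_lt_of_le this hx)
    · have : b = p := pos.injective hcase
      rw [this]; exact hpt
    · have := hsp i c b (Or.inl ⟨hcase, by rw [hpb, hpc]; exact h2⟩)
      exact le_of_lt (lt_of_lt_of_le this hz)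
  · rintro ⟨σ, H⟩
    refine ⟨σ.symm, ?_⟩
    rintro i a b (⟨h1, h2⟩ | ⟨h1, h2⟩)
    · -- peak < b < a
      set p := (rank i).symm ⟨0, hm⟩ with hp
      have hrp : rank i p = ⟨0, hm⟩ := (rank i).apply_symm_apply _
      have key := H (i, rank i a) (σ.symm p) (σ.symm b) (σ.symm a)
        (le_of_lt h1) (le_of_lt h2)
      simp only [Matrix.submatrix_apply, Matrix.of_apply, id_eq,
        Equiv.apply_symm_apply, ite_eq_one_iff] at key
      have hb : rank i b ≤ rank i a := key
        (by rw [hrp]; exact Fin.mk_le_of_le_val (Nat.zero_le _)) le_rfl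
      have hne : b ≠ a := fun h => absurd (h ▸ h2) (lt_irrefl _)
      exact lt_of_le_of_ne hb (fun h => hne ((rank i).injective h))
    · -- a < b < peak
      set p := (rank i).symm ⟨0, hm⟩ with hp
      have hrp : rank i p = ⟨0, hm⟩ := (rank i).apply_symm_apply _
      have key := H (i, rank i a) (σ.symm a) (σ.symm b) (σ.symm p)
        (le_of_lt h1) (le_of_lt h2)
      simp only [Matrix.submatrix_apply, Matrix.of_apply, id_eq,
        Equiv.apply_symm_apply, ite_eq_one_iff] at key
      have hb : rank i b ≤ rank i a := key le_rfl
        (by rw [hrp]; exact Fin.mk_le_of_le_val (Nat.zero_le _))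
      have hne : b ≠ a := fun h => absurd (h ▸ h1) (lt_irrefl _)
      exact lt_of_le_of_ne hb (fun h => hne ((rank i).injective h))
end

section
/- Let C be a finite set of candidates, N = {1,…,n} a set of voters with approval sets v_i ⊆ C such that there exists a linear order ◁ on C for which every v_i is an interval of ◁, let k ≤ |C|, and let α_1 ≥ … ≥ α_k ≥ 0 be rationals. Then the supremum of ∑_{i∈N} ∑_{ℓ=1}^{k} α_ℓ·x_{i,ℓ} over all rational vectors y ∈ [0,1]^C and x ∈ [0,1]^{N×{1,…,k}} satisfying ∑_{c∈C} y_c = k and ∑_{ℓ=1}^{k} x_{i,ℓ} ≤ ∑_{c∈v_i} y_c for every i, is attained by an integral solution (y ∈ {0,1}^C, x ∈ {0,1}^{N×{1,…,k}}); in particular this supremum equals the maximum α-PAV value over committees W ⊆ C with |W| = k. -/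
open Finset

lemma abel_sum (g x : ℕ → ℚ) (nn : ℕ) :
    ∑ ℓ ∈ range nn, (g ℓ - g (ℓ+1)) * (∑ j ∈ range (ℓ+1), x j)
      = (∑ ℓ ∈ range nn, g ℓ * x ℓ) - g nn * ∑ j ∈ range nn, x j := by
  induction nn with
  | zero => simp
  | succ nn ih =>
    rw [sum_range_succ, ih, sum_range_succ (fun ℓ => g ℓ * x ℓ), sum_range_succ x]
    ring

lemma floor_sub_t (s t : ℚ) (h0 : 0 < t) (h1 : t ≤ 1) :
    (⌊s - t⌋ : ℚ) = (⌊s⌋ : ℚ) - 1 + (if t ≤ Int.fract s then 1 else 0) := by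
  have hfr : Int.fract s = s - ⌊s⌋ := Int.self_sub_floor s ▸ rfl
  split_ifs with h
  · have : ⌊s - t⌋ = ⌊s⌋ := by
      rw [Int.floor_eq_iff]
      constructor
      · rw [Int.fract] at h; linarith
      · have := Int.lt_floor_add_one s; push_cast; linarith
    rw [this]; ring
  · push_neg at h
    have : ⌊s - t⌋ = ⌊s⌋ - 1 := by
      rw [Int.floor_eq_iff]
      have hf0 : 0 ≤ Int.fract s := Int.fract_nonneg s
      rw [Int.fract] at h hf0
      constructor
      · push_cast; linarith
      · push_cast; linarith
    rw [this]; push_cast; ring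

def Spre {m : ℕ} (σ : Equiv.Perm (Fin m)) (y : Fin m → ℚ) (j : ℕ) : ℚ :=
  ∑ c : Fin m, if (σ c : ℕ) < j then y c else 0

def comW {m : ℕ} (σ : Equiv.Perm (Fin m)) (y : Fin m → ℚ) (t : ℚ) : Finset (Fin m) :=
  Finset.univ.filter (fun c =>
    ⌊Spre σ y ((σ c : ℕ)+1) - t⌋ - ⌊Spre σ y (σ c : ℕ) - t⌋ = 1)

lemma Spre_zero {m : ℕ} (σ : Equiv.Perm (Fin m)) (y : Fin m → ℚ) : Spre σ y 0 = 0 := by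
  simp [Spre]


lemma Spre_step {m : ℕ} (σ : Equiv.Perm (Fin m)) (y : Fin m → ℚ) (j : ℕ) :
    Spre σ y (j+1) - Spre σ y j = ∑ c : Fin m, if (σ c : ℕ) = j then y c else 0 := by
  unfold Spre
  rw [← Finset.sum_sub_distrib]
  apply Finset.sum_congr rfl
  intro c _
  split_ifs <;> (try omega) <;> ring

lemma Spre_step_mem {m : ℕ} (σ : Equiv.Perm (Fin m)) (y : Fin m → ℚ)
    (hy : ∀ c, 0 ≤ y c ∧ y c ≤ 1) (j : ℕ) :
    0 ≤ Spre σ y (j+1) - Spre σ y j ∧ Spre σ y (j+1) - Spre σ y j ≤ 1 := by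
  rw [Spre_step]
  by_cases hj : j < m
  · have : ∀ c : Fin m, ((σ c : ℕ) = j) ↔ (c = σ.symm ⟨j, hj⟩) := by
      intro c
      constructor
      · intro h
        have : σ c = ⟨j, hj⟩ := Fin.ext h
        simp [← this]
      · intro h; subst h; simp
    rw [Finset.sum_congr rfl (fun c _ => by rw [if_congr (this c) rfl rfl])]
    rw [Finset.sum_ite_eq' Finset.univ (σ.symm ⟨j, hj⟩) y]
    simpa using hy _
  · have : ∀ c : Fin m, ¬ ((σ c : ℕ) = j) := by
      intro c h
      exact hj (h ▸ (σ c).isLt)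
    rw [Finset.sum_congr rfl (fun c _ => by rw [if_neg (this c)])]
    simp

-- floor difference in {0,1}
lemma floor_diff01 (a b t : ℚ) (h0 : 0 ≤ b - a) (h1 : b - a ≤ 1) :
    ⌊b - t⌋ - ⌊a - t⌋ = 0 ∨ ⌊b - t⌋ - ⌊a - t⌋ = 1 := by
  have hmono : ⌊a - t⌋ ≤ ⌊b - t⌋ := Int.floor_le_floor (by linarith)
  have hub : ⌊b - t⌋ ≤ ⌊(a - t) + 1⌋ := Int.floor_le_floor (by linarith)
  rw [Int.floor_add_one] at hub
  omega

lemma Spre_ge {m : ℕ} (σ : Equiv.Perm (Fin m)) (y : Fin m → ℚ) (j : ℕ) (hj : m ≤ j) :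
    Spre σ y j = ∑ c, y c := by
  unfold Spre
  exact Finset.sum_congr rfl (fun c _ => by rw [if_pos (lt_of_lt_of_le (σ c).isLt hj)])

lemma sum_perm_cond {m : ℕ} {M : Type*} [AddCommMonoid M] (σ : Equiv.Perm (Fin m))
    (F : ℕ → M) (P : ℕ → Prop) [DecidablePred P] :
    ∑ c : Fin m, (if P (σ c : ℕ) then F (σ c : ℕ) else 0)
      = ∑ j ∈ (range m).filter P, F j := by
  have h1 : ∑ c : Fin m, (if P (σ c : ℕ) then F (σ c : ℕ) else 0)
      = ∑ d : Fin m, (if P (d : ℕ) then F (d : ℕ) else 0) :=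
    Equiv.sum_comp σ (fun d : Fin m => if P (d : ℕ) then F (d : ℕ) else 0)
  rw [h1, Fin.sum_univ_eq_sum_range (fun j => if P j then F j else 0) m,
    Finset.sum_filter]

lemma tele_sum (f : ℕ → ℤ) (a nlen : ℕ) :
    ∑ j ∈ Finset.Ico a (a + nlen), (f (j+1) - f j) = f (a + nlen) - f a := by
  rw [Finset.sum_Ico_eq_sum_range]
  simp only [add_tsub_cancel_left]
  have h := Finset.sum_range_sub (fun i => f (a + i)) nlen
  simp only [Nat.add_zero] at h
  rw [← h]
  exact Finset.sum_congr rfl (fun j _ => by rw [show a + j + 1 = a + (j+1) by omega])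
lemma card_as_int {m : ℕ} (s : Finset (Fin m)) (p : Fin m → Prop) [DecidablePred p] :
    (((s.filter p).card : ℤ)) = ∑ c ∈ s, (if p c then (1:ℤ) else 0) := by
  rw [Finset.card_filter]
  push_cast
  rfl

lemma comW_count {m : ℕ} (σ : Equiv.Perm (Fin m)) (y : Fin m → ℚ)
    (hy : ∀ c, 0 ≤ y c ∧ y c ≤ 1) (t : ℚ)
    (A : Finset (Fin m)) (a b : ℕ) (hb : b < m) (hab : a ≤ b)
    (hmem : ∀ c, c ∈ A ↔ (a ≤ (σ c : ℕ) ∧ (σ c : ℕ) ≤ b)) :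
    ((comW σ y t ∩ A).card : ℤ)
      = ⌊Spre σ y (b+1) - t⌋ - ⌊Spre σ y a - t⌋ := by
  classical
  have h1 : comW σ y t ∩ A = Finset.univ.filter (fun c =>
      (a ≤ (σ c : ℕ) ∧ (σ c : ℕ) ≤ b) ∧
      ⌊Spre σ y ((σ c : ℕ)+1) - t⌋ - ⌊Spre σ y (σ c : ℕ) - t⌋ = 1) := by
    ext c
    simp [comW, hmem c, and_comm]
  rw [h1, card_as_int]
  have h2 : ∑ c : Fin m, (if ((a ≤ (σ c : ℕ) ∧ (σ c : ℕ) ≤ b) ∧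
        ⌊Spre σ y ((σ c : ℕ)+1) - t⌋ - ⌊Spre σ y (σ c : ℕ) - t⌋ = 1) then (1:ℤ) else 0)
      = ∑ j ∈ (range m).filter (fun j => (a ≤ j ∧ j ≤ b) ∧
          ⌊Spre σ y (j+1) - t⌋ - ⌊Spre σ y j - t⌋ = 1), (1:ℤ) :=
    sum_perm_cond σ (fun _ => (1:ℤ)) (fun j => (a ≤ j ∧ j ≤ b) ∧
          ⌊Spre σ y (j+1) - t⌋ - ⌊Spre σ y j - t⌋ = 1)
  rw [h2]
  have h3 : (range m).filter (fun j => (a ≤ j ∧ j ≤ b) ∧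
      ⌊Spre σ y (j+1) - t⌋ - ⌊Spre σ y j - t⌋ = 1)
      = (Finset.Ico a (b+1)).filter (fun j =>
        ⌊Spre σ y (j+1) - t⌋ - ⌊Spre σ y j - t⌋ = 1) := by
    ext j
    simp only [Finset.mem_filter, Finset.mem_range, Finset.mem_Ico]
    constructor
    · rintro ⟨_, ⟨h5, h6⟩, h7⟩; exact ⟨⟨h5, by omega⟩, h7⟩
    · rintro ⟨⟨h5, h6⟩, h7⟩; exact ⟨by omega, ⟨h5, by omega⟩, h7⟩
  rw [h3, Finset.sum_filter]
  have h4 : ∀ j ∈ Finset.Ico a (b+1),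
      (if ⌊Spre σ y (j+1) - t⌋ - ⌊Spre σ y j - t⌋ = 1 then (1:ℤ) else 0)
        = ⌊Spre σ y (j+1) - t⌋ - ⌊Spre σ y j - t⌋ := by
    intro j _
    rcases floor_diff01 (Spre σ y j) (Spre σ y (j+1)) t (Spre_step_mem σ y hy j).1
      (Spre_step_mem σ y hy j).2 with h | h <;> simp [h]
  rw [Finset.sum_congr rfl h4, show b + 1 = a + (b+1-a) by omega,
    tele_sum (fun j => ⌊Spre σ y j - t⌋) a (b+1-a), show a + (b+1-a) = b+1 by omega]

lemma comW_card {m k : ℕ} (σ : Equiv.Perm (Fin m)) (y : Fin m → ℚ)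
    (hy : ∀ c, 0 ≤ y c ∧ y c ≤ 1) (hsum : ∑ c, y c = (k : ℚ))
    (t : ℚ) (ht0 : 0 < t) (ht1 : t ≤ 1) :
    (comW σ y t).card = k := by
  classical
  have h0 : ((comW σ y t).card : ℤ) = ∑ c : Fin m,
      (if ⌊Spre σ y ((σ c : ℕ)+1) - t⌋ - ⌊Spre σ y (σ c : ℕ) - t⌋ = 1
        then (1:ℤ) else 0) := card_as_int _ _
  rw [sum_perm_cond σ (fun _ => (1:ℤ))
    (fun j => ⌊Spre σ y (j+1) - t⌋ - ⌊Spre σ y j - t⌋ = 1)] at h0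
  have h3 : (range m).filter (fun j => ⌊Spre σ y (j+1) - t⌋ - ⌊Spre σ y j - t⌋ = 1)
      = (Finset.Ico 0 (0 + m)).filter
        (fun j => ⌊Spre σ y (j+1) - t⌋ - ⌊Spre σ y j - t⌋ = 1) := by
    rw [Nat.zero_add, Finset.range_eq_Ico]
  rw [h3, Finset.sum_filter] at h0
  have h4 : ∀ j ∈ Finset.Ico 0 (0 + m),
      (if ⌊Spre σ y (j+1) - t⌋ - ⌊Spre σ y j - t⌋ = 1 then (1:ℤ) else 0)
        = ⌊Spre σ y (j+1) - t⌋ - ⌊Spre σ y j - t⌋ := by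
    intro j _
    rcases floor_diff01 (Spre σ y j) (Spre σ y (j+1)) t (Spre_step_mem σ y hy j).1
      (Spre_step_mem σ y hy j).2 with h | h <;> simp [h]
  rw [Finset.sum_congr rfl h4, tele_sum (fun j => ⌊Spre σ y j - t⌋) 0 m] at h0
  simp only [Nat.zero_add] at h0
  rw [Spre_ge σ y m le_rfl, hsum, Spre_zero, zero_sub] at h0
  have hk : ⌊(k : ℚ) - t⌋ = k + ⌊-t⌋ := by
    rw [sub_eq_add_neg, add_comm, show ((k:ℚ)) = ((k:ℤ):ℚ) by push_cast; ring,
      Int.floor_add_intCast]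
    omega
  have hnt : ⌊-t⌋ = -1 := by
    rw [Int.floor_eq_iff]
    constructor
    · push_cast; linarith
    · push_cast; linarith
  rw [hk, hnt] at h0
  omega
lemma qmin (nn j : ℕ) :
    ∑ i ∈ range j, (if i+1 ≤ nn then (1:ℚ) else 0) = min (j:ℚ) (nn:ℚ) := by
  have h1 : ∀ i, (i+1 ≤ nn) = (i < nn) := fun i => by rw [Nat.succ_le_iff]
  simp only [h1]
  rw [Finset.sum_ite, Finset.sum_const_zero, add_zero, Finset.sum_const]
  have h2 : (range j).filter (fun i => i < nn) = range (min j nn) := by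
    ext i; simp only [Finset.mem_filter, Finset.mem_range]; omega
  rw [h2, Finset.card_range, nsmul_eq_mul, mul_one]
  push_cast
  rfl

lemma Gmin (k : ℕ) (β : ℕ → ℚ) (hβk : β k = 0) (nn : ℕ) :
    ∑ ℓ ∈ range k, (if ℓ+1 ≤ nn then β ℓ else 0)
      = ∑ ℓ ∈ range k, (β ℓ - β (ℓ+1)) * min ((ℓ:ℚ)+1) (nn:ℚ) := by
  have h := abel_sum β (fun i => if i+1 ≤ nn then (1:ℚ) else 0) k
  simp only [qmin nn] at h
  rw [hβk, zero_mul, sub_zero] at h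
  have h2 : ∀ ℓ ∈ range k, β ℓ * (if ℓ+1 ≤ nn then (1:ℚ) else 0)
      = (if ℓ+1 ≤ nn then β ℓ else 0) := by
    intro ℓ _; split_ifs <;> ring
  rw [Finset.sum_congr rfl h2] at h
  rw [← h]
  apply Finset.sum_congr rfl
  intro ℓ _
  push_cast
  ring_nf

lemma chainA (k : ℕ) (β : ℕ → ℚ) (hβk : β k = 0)
    (hβmono : ∀ ℓ, β (ℓ+1) ≤ β ℓ)
    (x : ℕ → ℚ) (hx0 : ∀ i, 0 ≤ x i) (hx1 : ∀ i, x i ≤ 1)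
    (B : ℚ) (hB : ∑ i ∈ range k, x i ≤ B) :
    ∑ ℓ ∈ range k, β ℓ * x ℓ
      ≤ ∑ ℓ ∈ range k, (β ℓ - β (ℓ+1)) * min ((ℓ:ℚ)+1) B := by
  have h := abel_sum β x k
  rw [hβk, zero_mul, sub_zero] at h
  rw [← h]
  apply Finset.sum_le_sum
  intro ℓ hℓ
  apply mul_le_mul_of_nonneg_left _ (by linarith [hβmono ℓ])
  apply le_min
  · calc ∑ j ∈ range (ℓ+1), x j ≤ ∑ j ∈ range (ℓ+1), 1 :=
        Finset.sum_le_sum (fun j _ => hx1 j)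
      _ = ((ℓ:ℚ)+1) := by rw [Finset.sum_const, Finset.card_range]; push_cast; ring
  · calc ∑ j ∈ range (ℓ+1), x j
        ≤ ∑ j ∈ range k, x j :=
          Finset.sum_le_sum_of_subset_of_nonneg
            (Finset.range_subset_range.2 (Nat.succ_le_of_lt (Finset.mem_range.1 hℓ)))
            (fun j _ _ => hx0 j)
      _ ≤ B := hB
lemma breakpoints (Bset : Finset ℚ) (h0 : (0:ℚ) ∈ Bset) (h1 : (1:ℚ) ∈ Bset)
    (hlb : ∀ z ∈ Bset, 0 ≤ z) (hub : ∀ z ∈ Bset, z ≤ 1) :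
    ∃ (r : ℕ) (e : ℕ → ℚ),
      e 0 = 0 ∧ e r = 1 ∧
      (∀ j1 j2, j1 < j2 → j2 ≤ r → e j1 < e j2) ∧
      (∀ z ∈ Bset, ∃ J, J ≤ r ∧ e J = z) := by
  classical
  have hne : Bset.Nonempty := ⟨0, h0⟩
  set r := Bset.card - 1 with hr
  have hc : Bset.card = r + 1 := by
    have := Finset.card_pos.2 hne; omega
  set f := Bset.orderIsoOfFin hc with hf
  refine ⟨r, fun j => ((f ⟨min j r, by omega⟩ : Bset) : ℚ), ?_, ?_, ?_, ?_⟩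
  · apply le_antisymm
    · obtain ⟨jj, hjj⟩ := f.surjective ⟨0, h0⟩
      have h2 : f ⟨min 0 r, by omega⟩ ≤ f jj := by
        apply f.monotone
        simp [Fin.mk_le_mk]
      have h3 : ((f jj : Bset) : ℚ) = 0 := by rw [hjj]
      calc ((f ⟨min 0 r, by omega⟩ : Bset) : ℚ) ≤ ((f jj : Bset) : ℚ) := h2
        _ = 0 := h3
    · exact hlb _ (f _).2
  · apply le_antisymm
    · exact hub _ (f _).2
    · obtain ⟨jj, hjj⟩ := f.surjective ⟨1, h1⟩
      have h2 : f jj ≤ f ⟨min r r, by omega⟩ := by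
        apply f.monotone
        rw [Fin.mk_le_mk]
        have := jj.2; omega
      have h3 : ((f jj : Bset) : ℚ) = 1 := by rw [hjj]
      calc (1:ℚ) = ((f jj : Bset) : ℚ) := h3.symm
        _ ≤ _ := h2
  · intro j1 j2 hlt hle
    have : f ⟨min j1 r, by omega⟩ < f ⟨min j2 r, by omega⟩ := by
      apply f.strictMono
      rw [Fin.mk_lt_mk]
      omega
    exact_mod_cast this
  · intro z hz
    refine ⟨(f.symm ⟨z, hz⟩ : Fin (r+1)).val, by have := (f.symm ⟨z, hz⟩).2; omega, ?_⟩
    have h4 : (⟨min (f.symm ⟨z, hz⟩ : Fin (r+1)).val r, by omega⟩ : Fin (r+1))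
        = f.symm ⟨z, hz⟩ := by
      apply Fin.ext
      simp only []
      have := (f.symm ⟨z, hz⟩).2
      omega
    beta_reduce
    rw [h4]
    simp

lemma L1 (r : ℕ) (e : ℕ → ℚ) (he0 : e 0 = 0) (her : e r = 1)
    (hmono : ∀ j1 j2, j1 < j2 → j2 ≤ r → e j1 < e j2)
    (s : ℚ) (J : ℕ) (hJ : J ≤ r) (hfr : e J = Int.fract s) :
    ∑ j ∈ range r, (e (j+1) - e j) * (⌊s - e (j+1)⌋ : ℚ) = s - 1 := by
  have hmono' : ∀ j1 j2, j1 ≤ j2 → j2 ≤ r → e j1 ≤ e j2 := by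
    intro j1 j2 hle hler
    rcases Nat.lt_or_ge j1 j2 with h | h
    · exact le_of_lt (hmono _ _ h hler)
    · have : j1 = j2 := by omega
      rw [this]
  have hterm : ∀ j ∈ range r, (e (j+1) - e j) * (⌊s - e (j+1)⌋ : ℚ)
      = (e (j+1) - e j) * ((⌊s⌋ : ℚ) - 1)
        + (if e (j+1) ≤ Int.fract s then e (j+1) - e j else 0) := by
    intro j hj
    have hjr : j < r := Finset.mem_range.1 hj
    have hpos : 0 < e (j+1) := he0 ▸ hmono 0 (j+1) (by omega) (by omega)
    have hle1 : e (j+1) ≤ 1 := her ▸ hmono' (j+1) r (by omega) le_rfl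
    rw [floor_sub_t s (e (j+1)) hpos hle1]
    split_ifs <;> ring
  rw [Finset.sum_congr rfl hterm, Finset.sum_add_distrib, ← Finset.sum_mul,
    Finset.sum_range_sub e r, he0, her]
  have hfilter : (range r).filter (fun j => e (j+1) ≤ Int.fract s) = range J := by
    ext j
    simp only [Finset.mem_filter, Finset.mem_range]
    constructor
    · rintro ⟨hjr, hle⟩
      by_contra hc
      push_neg at hc
      have : e J < e (j+1) := hmono J (j+1) (by omega) (by omega)
      rw [hfr] at this
      linarith
    · intro hjJ
      exact ⟨by omega, hfr ▸ hmono' (j+1) J (by omega) hJ⟩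
  rw [Finset.sum_ite, Finset.sum_const_zero, add_zero, hfilter,
    Finset.sum_range_sub e J, he0, hfr]
  have := Int.floor_add_fract s
  linarith

lemma avgmin (r : ℕ) (w : ℕ → ℚ) (hw : ∀ j ∈ range r, 0 ≤ w j)
    (hw1 : ∑ j ∈ range r, w j = 1)
    (nj : ℕ → ℕ) (p : ℕ) (hlow : ∀ j ∈ range r, p ≤ nj j)
    (hhigh : ∀ j ∈ range r, nj j ≤ p+1)
    (B : ℚ) (hB : ∑ j ∈ range r, w j * (nj j : ℚ) = B)
    (c : ℕ) :
    min (c:ℚ) B ≤ ∑ j ∈ range r, w j * min ((c:ℚ)) ((nj j : ℚ)) := by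
  rcases le_or_gt c p with hc | hc
  · have h1 : ∀ j ∈ range r, w j * min ((c:ℚ)) ((nj j : ℚ)) = w j * c := by
      intro j hj
      rw [min_eq_left (by exact_mod_cast Nat.le_trans hc (hlow j hj))]
    rw [Finset.sum_congr rfl h1, ← Finset.sum_mul, hw1, one_mul]
    exact min_le_left _ _
  · have h1 : ∀ j ∈ range r, w j * min ((c:ℚ)) ((nj j : ℚ)) = w j * (nj j : ℚ) := by
      intro j hj
      rw [min_eq_right (by exact_mod_cast Nat.le_trans (hhigh j hj) hc)]
    rw [Finset.sum_congr rfl h1, hB]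
    exact min_le_right _ _

lemma voter_interval {m : ℕ} (σ : Equiv.Perm (Fin m)) (A : Finset (Fin m))
    (hA : A.Nonempty)
    (hconv : ∀ a b c : Fin m, σ a < σ b → σ b < σ c → a ∈ A → c ∈ A → b ∈ A) :
    ∃ a b : ℕ, a ≤ b ∧ b < m ∧ (∀ c, c ∈ A ↔ (a ≤ (σ c : ℕ) ∧ (σ c : ℕ) ≤ b)) := by
  classical
  have hAi : (A.image (fun c => (σ c : ℕ))).Nonempty := hA.image _
  obtain ⟨ca, hca, hcaa⟩ := Finset.mem_image.1 ((A.image (fun c => (σ c : ℕ))).min'_mem hAi)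
  obtain ⟨cb, hcb, hcbb⟩ := Finset.mem_image.1 ((A.image (fun c => (σ c : ℕ))).max'_mem hAi)
  refine ⟨(A.image (fun c => (σ c : ℕ))).min' hAi, (A.image (fun c => (σ c : ℕ))).max' hAi,
    Finset.min'_le _ _ ((A.image _).max'_mem hAi), ?_, fun c => ⟨fun hc => ?_, fun h => ?_⟩⟩
  · rw [← hcbb]; exact (σ cb).isLt
  · exact ⟨Finset.min'_le _ _ (Finset.mem_image_of_mem _ hc),
      Finset.le_max' _ _ (Finset.mem_image_of_mem (fun c => (σ c : ℕ)) hc)⟩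
  · obtain ⟨h1, h2⟩ := h
    rcases lt_or_ge ((A.image (fun c => (σ c : ℕ))).min' hAi) (σ c : ℕ) with h3 | h3
    · rcases lt_or_ge (σ c : ℕ) ((A.image (fun c => (σ c : ℕ))).max' hAi) with h4 | h4
      · exact hconv ca c cb (by rw [Fin.lt_def, hcaa]; exact h3)
          (by rw [Fin.lt_def, hcbb]; exact h4) hca hcb
      · have h5 : (σ c : ℕ) = (σ cb : ℕ) := by rw [hcbb]; omega
        have h6 : c = cb := σ.injective (Fin.ext h5)
        rw [h6]; exact hcb
    · have h5 : (σ c : ℕ) = (σ ca : ℕ) := by rw [hcaa]; omega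
      have h6 : c = ca := σ.injective (Fin.ext h5)
      rw [h6]; exact hca

lemma B_sum {m : ℕ} (σ : Equiv.Perm (Fin m)) (y : Fin m → ℚ) (A : Finset (Fin m))
    (a b : ℕ) (hab : a ≤ b)
    (hmem : ∀ c, c ∈ A ↔ (a ≤ (σ c : ℕ) ∧ (σ c : ℕ) ≤ b)) :
    ∑ c ∈ A, y c = Spre σ y (b+1) - Spre σ y a := by
  classical
  have h1 : ∑ c ∈ A, y c = ∑ c : Fin m, if c ∈ A then y c else 0 := by
    rw [Finset.sum_ite_mem, Finset.univ_inter]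
  rw [h1]
  unfold Spre
  rw [← Finset.sum_sub_distrib]
  apply Finset.sum_congr rfl
  intro c _
  rw [if_congr (hmem c) rfl rfl]
  split_ifs <;> (try omega) <;> ring

/-- For a candidate-interval (single-peaked) approval profile, the LP
relaxation of (PAV-IP) has an optimal solution that is integral; in
particular its optimal value equals the maximum `α`-PAV value over
committees of size `k`. -/
theorem stmt6 {n m k : ℕ} (hk : k ≤ m) (v : Fin n → Finset (Fin m))
    (hCI : ∃ pos : Equiv.Perm (Fin m), ∀ (i : Fin n) (a b c : Fin m),
      pos a < pos b → pos b < pos c → a ∈ v i → c ∈ v i → b ∈ v i)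
    (α : Fin k → ℚ) (hαmono : ∀ i j : Fin k, i ≤ j → α j ≤ α i)
    (hαnonneg : ∀ ℓ, 0 ≤ α ℓ) :
    ∃ q : ℚ,
      IsGreatest {val : ℚ | ∃ (y : Fin m → ℚ) (x : Fin n → Fin k → ℚ),
        (∀ c, 0 ≤ y c ∧ y c ≤ 1) ∧
        (∀ i ℓ, 0 ≤ x i ℓ ∧ x i ℓ ≤ 1) ∧
        (∑ c, y c) = (k : ℚ) ∧
        (∀ i, (∑ ℓ, x i ℓ) ≤ ∑ c ∈ v i, y c) ∧
        val = ∑ i, ∑ ℓ, α ℓ * x i ℓ} q ∧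
      (∃ (y : Fin m → ℚ) (x : Fin n → Fin k → ℚ),
        (∀ c, y c = 0 ∨ y c = 1) ∧
        (∀ i ℓ, x i ℓ = 0 ∨ x i ℓ = 1) ∧
        (∑ c, y c) = (k : ℚ) ∧
        (∀ i, (∑ ℓ, x i ℓ) ≤ ∑ c ∈ v i, y c) ∧
        q = ∑ i, ∑ ℓ, α ℓ * x i ℓ) ∧
      IsGreatest {val : ℚ | ∃ W : Finset (Fin m), W.card = k ∧
        val = ∑ i, ∑ ℓ : Fin k,
          if (ℓ : ℕ) + 1 ≤ (W ∩ v i).card then α ℓ else 0} q := by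
  classical
  obtain ⟨σ, hσ⟩ := hCI
  -- the PAV score function
  set G : ℕ → ℚ := fun nn => ∑ ℓ : Fin k, if (ℓ : ℕ) + 1 ≤ nn then α ℓ else 0 with hG
  -- maximum over committees
  have hpow : ((Finset.univ : Finset (Fin m)).powersetCard k).Nonempty := by
    rw [Finset.powersetCard_nonempty]
    simpa using hk
  have hFne : (((Finset.univ : Finset (Fin m)).powersetCard k).image
      (fun W => ∑ i, G ((W ∩ v i).card))).Nonempty := hpow.image _
  set q := (((Finset.univ : Finset (Fin m)).powersetCard k).image
      (fun W => ∑ i, G ((W ∩ v i).card))).max' hFne with hq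
  obtain ⟨Wstar, hWmem, hWval⟩ := Finset.mem_image.1 (Finset.max'_mem _ hFne)
  have hWcard : Wstar.card = k := (Finset.mem_powersetCard.1 hWmem).2
  have hub_com : ∀ W : Finset (Fin m), W.card = k → ∑ i, G ((W ∩ v i).card) ≤ q := by
    intro W hW
    apply Finset.le_max'
    exact Finset.mem_image_of_mem _ (Finset.mem_powersetCard.2 ⟨Finset.subset_univ _, hW⟩)
  -- the extended weight sequence β
  set β : ℕ → ℚ := fun ℓ => if h : ℓ < k then α ⟨ℓ, h⟩ else 0 with hβ
  have hβα : ∀ ℓ : Fin k, β (ℓ : ℕ) = α ℓ := by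
    intro ℓ
    simp only [hβ, ℓ.isLt, dif_pos, Fin.eta]
  have hβk : β k = 0 := by simp [hβ]
  have hβ0 : ∀ ℓ, 0 ≤ β ℓ := by
    intro ℓ
    by_cases h : ℓ < k
    · simp only [hβ, dif_pos h]; exact hαnonneg _
    · simp [hβ, h]
  have hβmono : ∀ ℓ, β (ℓ+1) ≤ β ℓ := by
    intro ℓ
    by_cases h1 : ℓ + 1 < k
    · have h0 : ℓ < k := by omega
      simp only [hβ, dif_pos h1, dif_pos h0]
      exact hαmono ⟨ℓ, h0⟩ ⟨ℓ+1, h1⟩ (by rw [Fin.mk_le_mk]; omega)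
    · by_cases h0 : ℓ < k
      · simp only [hβ, dif_neg h1, dif_pos h0]
        exact hαnonneg _
      · simp [hβ, h1, h0]
  have hG0 : ∀ nn, 0 ≤ G nn := by
    intro nn
    apply Finset.sum_nonneg
    intro ℓ _
    split_ifs
    · exact hαnonneg _
    · exact le_rfl
  have hGrange : ∀ nn : ℕ, G nn = ∑ ℓ ∈ range k, (if ℓ+1 ≤ nn then β ℓ else 0) := by
    intro nn
    rw [hG]
    rw [← Fin.sum_univ_eq_sum_range (fun ℓ => if ℓ+1 ≤ nn then β ℓ else 0) k]
    exact Finset.sum_congr rfl (fun ℓ _ => by rw [hβα])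
  have hGmin : ∀ nn : ℕ, G nn
      = ∑ ℓ ∈ range k, (β ℓ - β (ℓ+1)) * min ((ℓ:ℚ)+1) (nn:ℚ) := by
    intro nn
    rw [hGrange nn, Gmin k β hβk nn]
  -- integral witness
  set ystar : Fin m → ℚ := fun c => if c ∈ Wstar then 1 else 0 with hystar
  set xstar : Fin n → Fin k → ℚ :=
    fun i ℓ => if (ℓ : ℕ) + 1 ≤ ((Wstar ∩ v i).card) then 1 else 0 with hxstar
  have hystar01 : ∀ c, ystar c = 0 ∨ ystar c = 1 := by
    intro c; simp only [hystar]; split_ifs <;> simp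
  have hxstar01 : ∀ i ℓ, xstar i ℓ = 0 ∨ xstar i ℓ = 1 := by
    intro i ℓ; simp only [hxstar]; split_ifs <;> simp
  have hystar_sum : ∑ c, ystar c = (k : ℚ) := by
    simp only [hystar]
    rw [Finset.sum_ite_mem, Finset.univ_inter, Finset.sum_const, nsmul_eq_mul, mul_one,
      hWcard]
  have hystar_vi : ∀ i, ∑ c ∈ v i, ystar c = ((Wstar ∩ v i).card : ℚ) := by
    intro i
    simp only [hystar]
    rw [Finset.sum_ite_mem, Finset.sum_const, nsmul_eq_mul, mul_one, Finset.inter_comm]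
  have hxstar_sum : ∀ i, ∑ ℓ, xstar i ℓ = min (k:ℚ) (((Wstar ∩ v i).card : ℕ) : ℚ) := by
    intro i
    simp only [hxstar]
    rw [Fin.sum_univ_eq_sum_range
      (fun ℓ => if ℓ + 1 ≤ ((Wstar ∩ v i).card) then (1:ℚ) else 0) k]
    exact qmin _ k
  have hxstar_cons : ∀ i, ∑ ℓ, xstar i ℓ ≤ ∑ c ∈ v i, ystar c := by
    intro i
    rw [hxstar_sum i, hystar_vi i]
    exact min_le_right _ _
  have hxstar_val : ∑ i, ∑ ℓ, α ℓ * xstar i ℓ = ∑ i, G ((Wstar ∩ v i).card) := by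
    apply Finset.sum_congr rfl
    intro i _
    rw [hG]
    apply Finset.sum_congr rfl
    intro ℓ _
    simp only [hxstar]
    split_ifs <;> ring
  have hqval : q = ∑ i, ∑ ℓ, α ℓ * xstar i ℓ := by rw [hxstar_val, hWval]
  -- LP upper bound
  have hLPub : ∀ (y : Fin m → ℚ) (x : Fin n → Fin k → ℚ),
      (∀ c, 0 ≤ y c ∧ y c ≤ 1) → (∀ i ℓ, 0 ≤ x i ℓ ∧ x i ℓ ≤ 1) →
      (∑ c, y c) = (k : ℚ) → (∀ i, (∑ ℓ, x i ℓ) ≤ ∑ c ∈ v i, y c) →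
      ∑ i, ∑ ℓ, α ℓ * x i ℓ ≤ q := by
    intro y x hy hx hsumy hcons
    -- breakpoints
    set Bset : Finset ℚ := ((Finset.range (m+1)).image
      (fun j => Int.fract (Spre σ y j))) ∪ {0, 1} with hBset
    have h0B : (0:ℚ) ∈ Bset := by
      rw [hBset]; apply Finset.mem_union_right; simp
    have h1B : (1:ℚ) ∈ Bset := by
      rw [hBset]; apply Finset.mem_union_right; simp
    have hlbB : ∀ z ∈ Bset, 0 ≤ z := by
      intro z hz
      rw [hBset, Finset.mem_union] at hz
      rcases hz with hz | hz
      · obtain ⟨j, _, hj⟩ := Finset.mem_image.1 hz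
        rw [← hj]; exact Int.fract_nonneg _
      · simp only [Finset.mem_insert, Finset.mem_singleton] at hz
        rcases hz with rfl | rfl <;> norm_num
    have hubB : ∀ z ∈ Bset, z ≤ 1 := by
      intro z hz
      rw [hBset, Finset.mem_union] at hz
      rcases hz with hz | hz
      · obtain ⟨j, _, hj⟩ := Finset.mem_image.1 hz
        rw [← hj]; exact le_of_lt (Int.fract_lt_one _)
      · simp only [Finset.mem_insert, Finset.mem_singleton] at hz
        rcases hz with rfl | rfl <;> norm_num
    have hfracB : ∀ j ≤ m, Int.fract (Spre σ y j) ∈ Bset := by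
      intro j hj
      rw [hBset]
      apply Finset.mem_union_left
      exact Finset.mem_image_of_mem _ (Finset.mem_range.2 (by omega))
    obtain ⟨r, e, he0, her, hemono, hesurj⟩ := breakpoints Bset h0B h1B hlbB hubB
    have hemono' : ∀ j1 j2, j1 ≤ j2 → j2 ≤ r → e j1 ≤ e j2 := by
      intro j1 j2 hle hler
      rcases Nat.lt_or_ge j1 j2 with h | h
      · exact le_of_lt (hemono _ _ h hler)
      · have : j1 = j2 := by omega
        rw [this]
    have hw0 : ∀ j ∈ range r, 0 ≤ e (j+1) - e j := by
      intro j hj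
      have := hemono j (j+1) (by omega) (by exact Finset.mem_range.1 hj)
      linarith
    have hw1 : ∑ j ∈ range r, (e (j+1) - e j) = 1 := by
      rw [Finset.sum_range_sub e r, he0, her, sub_zero]
    have ht0 : ∀ j ∈ range r, 0 < e (j+1) := by
      intro j hj
      have := hemono 0 (j+1) (by omega) (Finset.mem_range.1 hj)
      rw [he0] at this; linarith
    have ht1 : ∀ j ∈ range r, e (j+1) ≤ 1 := by
      intro j hj
      rw [← her]
      exact hemono' (j+1) r (Finset.mem_range.1 hj) le_rfl
    -- the committees
    have hcardW : ∀ j ∈ range r, (comW σ y (e (j+1))).card = k := by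
      intro j hj
      exact comW_card σ y hy hsumy (e (j+1)) (ht0 j hj) (ht1 j hj)
    have hcomq : ∀ j ∈ range r, ∑ i, G ((comW σ y (e (j+1)) ∩ v i).card) ≤ q := by
      intro j hj
      exact hub_com _ (hcardW j hj)
    -- weighted floor averages
    have hL1 : ∀ jj ≤ m, ∑ j ∈ range r,
        (e (j+1) - e j) * ((⌊Spre σ y jj - e (j+1)⌋ : ℚ)) = Spre σ y jj - 1 := by
      intro jj hjj
      obtain ⟨J, hJ, hJe⟩ := hesurj _ (hfracB jj hjj)
      exact L1 r e he0 her hemono (Spre σ y jj) J hJ hJe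
    -- per-voter inequality
    have keyvoter : ∀ i, ∑ ℓ, α ℓ * x i ℓ
        ≤ ∑ j ∈ range r, (e (j+1) - e j) * G ((comW σ y (e (j+1)) ∩ v i).card) := by
      intro i
      by_cases hAe : (v i).Nonempty
      · obtain ⟨a, b, hab, hbm, hmem⟩ := voter_interval σ (v i) hAe (hσ i)
        set B : ℚ := ∑ c ∈ v i, y c with hB
        have hBS : B = Spre σ y (b+1) - Spre σ y a := B_sum σ y (v i) a b hab hmem
        have hB0 : 0 ≤ B := Finset.sum_nonneg (fun c _ => (hy c).1)
        set p : ℕ := (⌊B⌋).toNat with hp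
        have hpfloor : (p : ℤ) = ⌊B⌋ := Int.toNat_of_nonneg (Int.le_floor.2 (by exact_mod_cast hB0))
        have hpB : (p:ℚ) ≤ B := by
          have := Int.floor_le B
          rw [← hpfloor] at this
          exact_mod_cast this
        have hBp1 : B < (p:ℚ) + 1 := by
          have := Int.lt_floor_add_one B
          rw [← hpfloor] at this
          exact_mod_cast this
        have hcnt : ∀ j ∈ range r, (((comW σ y (e (j+1)) ∩ v i).card : ℤ))
            = ⌊Spre σ y (b+1) - e (j+1)⌋ - ⌊Spre σ y a - e (j+1)⌋ := by
          intro j hj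
          exact comW_count σ y hy (e (j+1)) (v i) a b hbm hab hmem
        have hlow : ∀ j ∈ range r, p ≤ (comW σ y (e (j+1)) ∩ v i).card := by
          intro j hj
          have h1 := hcnt j hj
          have h2 : (⌊Spre σ y a - e (j+1)⌋ : ℤ) + ⌊B⌋ ≤ ⌊Spre σ y (b+1) - e (j+1)⌋ := by
            rw [show (⌊Spre σ y a - e (j+1)⌋ : ℤ) + ⌊B⌋ = ⌊B⌋ + ⌊Spre σ y a - e (j+1)⌋ by ring]
            apply Int.le_floor.2
            push_cast
            have h3 := Int.floor_le (Spre σ y a - e (j+1))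
            have h4 := Int.floor_le B
            have h5 : Spre σ y (b+1) - e (j+1) = B + (Spre σ y a - e (j+1)) := by
              rw [hBS]; ring
            linarith
          omega
        have hhigh : ∀ j ∈ range r, (comW σ y (e (j+1)) ∩ v i).card ≤ p + 1 := by
          intro j hj
          have h1 := hcnt j hj
          have h2 : ⌊Spre σ y (b+1) - e (j+1)⌋ < (⌊Spre σ y a - e (j+1)⌋ + ⌊B⌋ + 1) + 1 := by
            apply Int.floor_lt.2
            push_cast
            have h3 := Int.lt_floor_add_one (Spre σ y a - e (j+1))
            have h4 := Int.lt_floor_add_one B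
            have h5 : Spre σ y (b+1) - e (j+1) = B + (Spre σ y a - e (j+1)) := by
              rw [hBS]; ring
            linarith
          omega
        have havg : ∑ j ∈ range r,
            (e (j+1) - e j) * (((comW σ y (e (j+1)) ∩ v i).card : ℕ) : ℚ) = B := by
          have hu := hL1 (b+1) (by omega)
          have hl := hL1 a (by omega)
          have hterm : ∀ j ∈ range r, (e (j+1) - e j) *
              (((comW σ y (e (j+1)) ∩ v i).card : ℕ) : ℚ)
              = (e (j+1) - e j) * ((⌊Spre σ y (b+1) - e (j+1)⌋ : ℚ))
                - (e (j+1) - e j) * ((⌊Spre σ y a - e (j+1)⌋ : ℚ)) := by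
            intro j hj
            have h1 := hcnt j hj
            have h2 : (((comW σ y (e (j+1)) ∩ v i).card : ℕ) : ℚ)
                = ((⌊Spre σ y (b+1) - e (j+1)⌋ : ℚ)) - ((⌊Spre σ y a - e (j+1)⌋ : ℚ)) := by
              exact_mod_cast congrArg (fun z : ℤ => (z : ℚ)) h1
            rw [h2]; ring
          rw [Finset.sum_congr rfl hterm, Finset.sum_sub_distrib, hu, hl, hBS]
          ring
        -- now the chain
        set x' : ℕ → ℚ := fun ℓ => if h : ℓ < k then x i ⟨ℓ, h⟩ else 0 with hx'
        have hx'0 : ∀ ℓ, 0 ≤ x' ℓ := by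
          intro ℓ
          rw [hx']
          by_cases h : ℓ < k
          · simp only [dif_pos h]; exact (hx i _).1
          · simp [h]
        have hx'1 : ∀ ℓ, x' ℓ ≤ 1 := by
          intro ℓ
          rw [hx']
          by_cases h : ℓ < k
          · simp only [dif_pos h]; exact (hx i _).2
          · simp [h]
        have hx'sum : ∑ ℓ ∈ range k, x' ℓ = ∑ ℓ, x i ℓ := by
          rw [← Fin.sum_univ_eq_sum_range x' k]
          exact Finset.sum_congr rfl (fun ℓ _ => by rw [hx']; simp [ℓ.isLt, Fin.eta])
        have hfin : ∑ ℓ, α ℓ * x i ℓ = ∑ ℓ ∈ range k, β ℓ * x' ℓ := by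
          rw [← Fin.sum_univ_eq_sum_range (fun ℓ => β ℓ * x' ℓ) k]
          apply Finset.sum_congr rfl
          intro ℓ _
          rw [hβα, hx']
          simp [ℓ.isLt, Fin.eta]
        calc ∑ ℓ, α ℓ * x i ℓ
            = ∑ ℓ ∈ range k, β ℓ * x' ℓ := hfin
          _ ≤ ∑ ℓ ∈ range k, (β ℓ - β (ℓ+1)) * min ((ℓ:ℚ)+1) B := by
              apply chainA k β hβk hβmono x' hx'0 hx'1 B
              rw [hx'sum]
              exact hcons i
          _ ≤ ∑ ℓ ∈ range k, (β ℓ - β (ℓ+1)) * (∑ j ∈ range r, (e (j+1) - e j)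
                * min ((ℓ:ℚ)+1) (((comW σ y (e (j+1)) ∩ v i).card : ℕ) : ℚ)) := by
              apply Finset.sum_le_sum
              intro ℓ _
              apply mul_le_mul_of_nonneg_left _ (by linarith [hβmono ℓ])
              have := avgmin r (fun j => e (j+1) - e j) hw0 hw1
                (fun j => (comW σ y (e (j+1)) ∩ v i).card) p hlow hhigh B havg (ℓ+1)
              push_cast at this ⊢
              exact this
          _ = ∑ j ∈ range r, (e (j+1) - e j) * G ((comW σ y (e (j+1)) ∩ v i).card) := by
              have hl : ∀ ℓ ∈ range k, (β ℓ - β (ℓ+1)) * (∑ j ∈ range r, (e (j+1) - e j)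
                  * min ((ℓ:ℚ)+1) (((comW σ y (e (j+1)) ∩ v i).card : ℕ) : ℚ))
                  = ∑ j ∈ range r, ((β ℓ - β (ℓ+1)) * ((e (j+1) - e j)
                    * min ((ℓ:ℚ)+1) (((comW σ y (e (j+1)) ∩ v i).card : ℕ) : ℚ))) :=
                fun ℓ _ => Finset.mul_sum _ _ _
              have hr : ∀ j ∈ range r, (e (j+1) - e j) * G ((comW σ y (e (j+1)) ∩ v i).card)
                  = ∑ ℓ ∈ range k, ((β ℓ - β (ℓ+1)) * ((e (j+1) - e j)
                    * min ((ℓ:ℚ)+1) (((comW σ y (e (j+1)) ∩ v i).card : ℕ) : ℚ))) := by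
                intro j _
                rw [hGmin, Finset.mul_sum]
                exact Finset.sum_congr rfl (fun ℓ _ => by ring)
              rw [Finset.sum_congr rfl hl, Finset.sum_congr rfl hr, Finset.sum_comm]
      · -- empty approval set
        have hvi : v i = ∅ := Finset.not_nonempty_iff_eq_empty.1 hAe
        have hzero : ∀ ℓ, x i ℓ = 0 := by
          have h1 : ∑ ℓ, x i ℓ ≤ 0 := by
            have := hcons i
            rw [hvi] at this
            simpa using this
          have h2 : ∑ ℓ, x i ℓ = 0 :=
            le_antisymm h1 (Finset.sum_nonneg (fun ℓ _ => (hx i ℓ).1))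
          intro ℓ
          exact (Finset.sum_eq_zero_iff_of_nonneg (fun ℓ _ => (hx i ℓ).1)).1 h2 ℓ
            (Finset.mem_univ _)
        have hL : ∑ ℓ, α ℓ * x i ℓ = 0 := by
          apply Finset.sum_eq_zero
          intro ℓ _
          rw [hzero ℓ, mul_zero]
        rw [hL]
        apply Finset.sum_nonneg
        intro j hj
        exact mul_nonneg (hw0 j hj) (hG0 _)
    -- global chain
    calc ∑ i, ∑ ℓ, α ℓ * x i ℓ
        ≤ ∑ i, ∑ j ∈ range r, (e (j+1) - e j) * G ((comW σ y (e (j+1)) ∩ v i).card) :=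
          Finset.sum_le_sum (fun i _ => keyvoter i)
      _ = ∑ j ∈ range r, (e (j+1) - e j) * (∑ i, G ((comW σ y (e (j+1)) ∩ v i).card)) := by
          rw [Finset.sum_comm]
          exact Finset.sum_congr rfl (fun j _ => by rw [Finset.mul_sum])
      _ ≤ ∑ j ∈ range r, (e (j+1) - e j) * q := by
          apply Finset.sum_le_sum
          intro j hj
          exact mul_le_mul_of_nonneg_left (hcomq j hj) (hw0 j hj)
      _ = q := by rw [← Finset.sum_mul, hw1, one_mul]
  -- assemble
  refine ⟨q, ⟨⟨ystar, xstar, ?_, ?_, hystar_sum, hxstar_cons, hqval⟩, ?_⟩,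
    ⟨ystar, xstar, hystar01, hxstar01, hystar_sum, hxstar_cons, hqval⟩, ?_, ?_⟩
  · intro c
    rcases hystar01 c with h | h <;> rw [h] <;> norm_num
  · intro i ℓ
    rcases hxstar01 i ℓ with h | h <;> rw [h] <;> norm_num
  · rintro val ⟨y, x, hy, hx, hsumy, hcons, hval⟩
    rw [hval]
    exact hLPub y x hy hx hsumy hcons
  · exact ⟨Wstar, hWcard, hWval.symm⟩
  · rintro val ⟨W, hWc, hval⟩
    rw [hval]
    exact hub_com W hWc
end

section
/- Let C be a finite set of m candidates, N = {1,…,n} voters where voter i's preferences are given by a rank function rank_i : C → {1,…,m} (rank 1 most preferred), let k ≤ m, and let w_1 ≥ w_2 ≥ … ≥ w_m ≥ 0 be rationals; set w'_r = w_r − w_{r+1} for r < m and w'_m = w_m. Then the maximum of ∑_{i∈N} ∑_{r=1}^{m} w'_r·x_{i,r} over all binary y ∈ {0,1}^C and x ∈ {0,1}^{N×{1,…,m}} satisfying ∑_{c∈C} y_c = k and x_{i,r} ≤ ∑_{c : rank_i(c) ≤ r} y_c for all i ∈ N and r ∈ {1,…,m}, equals the maximum over all committees W ⊆ C with |W| =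 k of the Chamberlin–Courant value ∑_{i∈N} w_{min_{c∈W} rank_i(c)}. -/
open Finset

lemma stmt8_telescope {m : ℕ} (w w' : Fin m → ℚ)
    (hw' : ∀ r : Fin m,
      w' r = w r - (if h : (r : ℕ) + 1 < m then w ⟨(r : ℕ) + 1, h⟩ else 0))
    (ρ : Fin m) :
    ∑ r ∈ Finset.univ.filter (fun r => ρ ≤ r), w' r = w ρ := by
  set Wn : ℕ → ℚ := fun j => if h : j < m then w ⟨j, h⟩ else 0 with hWn
  have hA : ∀ (j : ℕ) (h : j < m), w' ⟨j, h⟩ = Wn j - Wn (j + 1) := by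
    intro j h
    rw [hw' ⟨j, h⟩]
    simp only [hWn]
    rw [dif_pos h]
  have key : ∀ r : Fin m,
      (if ρ ≤ r then w' r else 0)
        = (if (ρ : ℕ) ≤ (r : ℕ) then Wn r - Wn ((r : ℕ) + 1) else 0) := by
    intro r
    by_cases hr : ρ ≤ r
    · rw [if_pos hr, if_pos (Fin.le_def.mp hr)]
      have := hA r r.isLt
      simpa using this
    · rw [if_neg hr, if_neg (fun h => hr (Fin.le_def.mpr h))]
  have hρm : (ρ : ℕ) ≤ m := le_of_lt ρ.isLt
  calc ∑ r ∈ Finset.univ.filter (fun r => ρ ≤ r), w' r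
      = ∑ r : Fin m, (if ρ ≤ r then w' r else 0) := by rw [Finset.sum_filter]
    _ = ∑ r : Fin m,
        (fun j : ℕ => if (ρ : ℕ) ≤ j then Wn j - Wn (j + 1) else 0) (r : ℕ) :=
        Finset.sum_congr rfl (fun r _ => key r)
    _ = ∑ j ∈ Finset.range m, (if (ρ : ℕ) ≤ j then Wn j - Wn (j + 1) else 0) :=
        Fin.sum_univ_eq_sum_range (fun j : ℕ => if (ρ : ℕ) ≤ j then Wn j - Wn (j + 1) else 0) m
    _ = w ρ := by
        rw [Finset.range_eq_Ico,
          ← Finset.sum_Ico_consecutive _ (Nat.zero_le (ρ : ℕ)) hρm]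
        have h1 : ∑ j ∈ Finset.Ico 0 (ρ : ℕ),
            (if (ρ : ℕ) ≤ j then Wn j - Wn (j + 1) else 0) = 0 := by
          apply Finset.sum_eq_zero
          intro j hj
          rw [Finset.mem_Ico] at hj
          rw [if_neg (by omega)]
        have h2 : ∑ j ∈ Finset.Ico (ρ : ℕ) m,
            (if (ρ : ℕ) ≤ j then Wn j - Wn (j + 1) else 0)
            = ∑ j ∈ Finset.Ico (ρ : ℕ) m, (Wn j - Wn (j + 1)) := by
          apply Finset.sum_congr rfl
          intro j hj
          rw [Finset.mem_Ico] at hj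
          rw [if_pos hj.1]
        rw [h1, h2, zero_add, Finset.sum_Ico_eq_sum_range]
        have h3 := Finset.sum_range_sub' (fun i => Wn ((ρ : ℕ) + i)) (m - (ρ : ℕ))
        have h4 : ∀ i : ℕ, Wn ((ρ : ℕ) + i) - Wn ((ρ : ℕ) + (i + 1))
            = Wn ((ρ : ℕ) + i) - Wn ((ρ : ℕ) + i + 1) := by
          intro i; rw [← Nat.add_assoc]
        calc ∑ i ∈ Finset.range (m - (ρ : ℕ)), (Wn ((ρ : ℕ) + i) - Wn ((ρ : ℕ) + i + 1))
            = ∑ i ∈ Finset.range (m - (ρ : ℕ)), (Wn ((ρ : ℕ) + i) - Wn ((ρ : ℕ) + (i + 1))) := by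
              exact Finset.sum_congr rfl (fun i _ => (h4 i).symm)
          _ = Wn ((ρ : ℕ) + 0) - Wn ((ρ : ℕ) + (m - (ρ : ℕ))) := h3
          _ = w ρ := by
              rw [Nat.add_zero, Nat.add_sub_cancel' hρm]
              simp only [hWn]
              rw [dif_pos ρ.isLt, dif_neg (lt_irrefl m)]
              simp



/-- The integer program (CC-IP) computes an optimal committee under
Chamberlin–Courant with scoring vector `w`.  Candidates are `Fin m`, voter
`i`'s preferences are given by the rank function `rank i : Fin m → Fin m`
(rank `0` is most preferred), `w` is non-increasing and nonnegative, and
`w' r = w r - w (r+1)` (with `w'` of the last rank equal to `w` there).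
The maximum of `∑_i ∑_r w'_r x_{i,r}` over binary `y, x` with `∑_c y_c = k`
and `x_{i,r} ≤ ∑_{c : rank_i c ≤ r} y_c` equals the maximum over committees
`W` of size `k` of `∑_i max {w (rank i c) : c ∈ W}`. -/
theorem stmt8 {n m k : ℕ} (hk0 : 0 < k) (hk : k ≤ m)
    (rank : Fin n → Fin m → Fin m)
    (w : Fin m → ℚ) (hwmono : ∀ r s : Fin m, r ≤ s → w s ≤ w r)
    (hwnonneg : ∀ r, 0 ≤ w r)
    (w' : Fin m → ℚ)
    (hw' : ∀ r : Fin m,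
      w' r = w r - (if h : (r : ℕ) + 1 < m then w ⟨(r : ℕ) + 1, h⟩ else 0)) :
    ∃ q : ℚ,
      IsGreatest {val : ℚ | ∃ (y : Fin m → ℚ) (x : Fin n → Fin m → ℚ),
        (∀ c, y c = 0 ∨ y c = 1) ∧
        (∀ i r, x i r = 0 ∨ x i r = 1) ∧
        (∑ c, y c) = (k : ℚ) ∧
        (∀ i r, x i r ≤ ∑ c ∈ Finset.univ.filter (fun c => rank i c ≤ r), y c) ∧
        val = ∑ i, ∑ r, w' r * x i r} q ∧
      IsGreatest {val : ℚ | ∃ (W : Finset (Fin m)) (hW : W.Nonempty),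
        W.card = k ∧
        val = ∑ i, W.sup' hW (fun c => w (rank i c))} q := by
  classical
  -- nonnegativity of w'
  have hw'nn : ∀ r, 0 ≤ w' r := by
    intro r
    rw [hw' r]
    split
    · have : (r : Fin m) ≤ ⟨(r : ℕ) + 1, by assumption⟩ := by
        rw [Fin.le_def]; exact Nat.le_succ _
      linarith [hwmono r ⟨(r : ℕ) + 1, by assumption⟩ this]
    · linarith [hwnonneg r]
  -- sup' of w ∘ rank equals w of inf' of rank
  have hsup : ∀ (W : Finset (Fin m)) (hW : W.Nonempty) (i : Fin n),
      W.sup' hW (fun c => w (rank i c)) = w (W.inf' hW (rank i)) := by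
    intro W hW i
    apply le_antisymm
    · exact Finset.sup'_le _ _ (fun c hc => hwmono _ _ (Finset.inf'_le _ hc))
    · obtain ⟨c0, hc0, h0⟩ := Finset.exists_mem_eq_inf' hW (rank i)
      rw [h0]
      exact Finset.le_sup' (fun c => w (rank i c)) hc0
  set S : Finset (Finset (Fin m)) := Finset.univ.powersetCard k with hSdef
  have hS : S.Nonempty := by
    rw [hSdef]
    exact Finset.powersetCard_nonempty.mpr (by simpa using hk)
  have hmemS : ∀ W : Finset (Fin m), W ∈ S ↔ W.card = k := by
    intro W
    simp [hSdef, Finset.mem_powersetCard, Finset.subset_univ]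
  set g : Finset (Fin m) → ℚ := fun W =>
    if h : W.Nonempty then ∑ i, W.sup' h (fun c => w (rank i c)) else 0 with hgdef
  set q : ℚ := S.sup' hS g with hqdef
  refine ⟨q, ?_, ?_⟩
  · -- IP side
    obtain ⟨W, hWS, hqW⟩ := Finset.exists_mem_eq_sup' hS g
    have hcard : W.card = k := (hmemS W).mp hWS
    have hne : W.Nonempty := Finset.card_pos.mp (hcard ▸ hk0)
    constructor
    · -- membership: the IP witness built from W
      refine ⟨fun c => if c ∈ W then (1 : ℚ) else 0,
        fun i r => if W.inf' hne (rank i) ≤ r then (1 : ℚ) else 0,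
        fun c => by by_cases h : c ∈ W <;> simp [h],
        fun i r => by by_cases h : W.inf' hne (rank i) ≤ r <;> simp [h],
        ?_, ?_, ?_⟩
      · rw [Finset.sum_ite_mem, Finset.univ_inter, Finset.sum_const, hcard]
        simp
      · intro i r
        dsimp only
        by_cases h : W.inf' hne (rank i) ≤ r
        · rw [if_pos h]
          obtain ⟨c0, hc0, h0⟩ := Finset.exists_mem_eq_inf' hne (rank i)
          have hc0f : c0 ∈ Finset.univ.filter (fun c => rank i c ≤ r) := by
            simp only [Finset.mem_filter, Finset.mem_univ, true_and]
            rw [← h0]; exact h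
          have hle := Finset.single_le_sum
            (f := fun c => if c ∈ W then (1 : ℚ) else 0)
            (fun c _ => by by_cases hc : c ∈ W <;> simp [hc]) hc0f
          simpa [hc0] using hle
        · rw [if_neg h]
          apply Finset.sum_nonneg
          intro c _
          by_cases hc : c ∈ W <;> simp [hc]
      · dsimp only
        rw [hqdef, hqW, hgdef]
        simp only [dif_pos hne]
        apply Finset.sum_congr rfl
        intro i _
        rw [hsup W hne i]
        set ρ := W.inf' hne (rank i)
        rw [← stmt8_telescope w w' hw' ρ, Finset.sum_filter]
        apply Finset.sum_congr rfl
        intro r _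
        by_cases h : ρ ≤ r <;> simp [h]
    · -- upper bound
      rintro v ⟨y, x, hy, hx, hysum, hxle, rfl⟩
      set W : Finset (Fin m) := Finset.univ.filter (fun c => y c = 1) with hWdef
      have hcard : W.card = k := by
        have : (W.card : ℚ) = (k : ℚ) := by
          rw [← hysum]
          rw [hWdef]
          rw [Finset.card_filter]
          push_cast
          apply Finset.sum_congr rfl
          intro c _
          rcases hy c with h | h <;> simp [h]
        exact_mod_cast this
      have hne : W.Nonempty := Finset.card_pos.mp (hcard ▸ hk0)
      have hWS : W ∈ S := (hmemS W).mpr hcard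
      have hbound : ∀ i, ∑ r, w' r * x i r
          ≤ W.sup' hne (fun c => w (rank i c)) := by
        intro i
        set ρ := W.inf' hne (rank i) with hρ
        rw [hsup W hne i, ← stmt8_telescope w w' hw' ρ, Finset.sum_filter]
        apply Finset.sum_le_sum
        intro r _
        by_cases h : ρ ≤ r
        · rw [if_pos h]
          have hx1 : x i r ≤ 1 := by rcases hx i r with h' | h' <;> simp [h']
          calc w' r * x i r ≤ w' r * 1 :=
                mul_le_mul_of_nonneg_left hx1 (hw'nn r)
            _ = w' r := mul_one _
        · rw [if_neg h]
          have hx0 : x i r = 0 := by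
            have hsum0 : ∑ c ∈ Finset.univ.filter (fun c => rank i c ≤ r), y c = 0 := by
              apply Finset.sum_eq_zero
              intro c hc
              rw [Finset.mem_filter] at hc
              rcases hy c with h' | h'
              · exact h'
              · exfalso
                have hcW : c ∈ W := by
                  rw [hWdef, Finset.mem_filter]; exact ⟨Finset.mem_univ c, h'⟩
                exact h (le_trans (Finset.inf'_le (rank i) hcW) hc.2)
            have := (hxle i r).trans hsum0.le
            rcases hx i r with h' | h'
            · exact h'
            · linarith
          rw [hx0, mul_zero]
      calc ∑ i, ∑ r, w' r * x i r
          ≤ ∑ i, W.sup' hne (fun c => w (rank i c)) :=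
            Finset.sum_le_sum (fun i _ => hbound i)
        _ = g W := by rw [hgdef]; simp only [dif_pos hne]
        _ ≤ q := Finset.le_sup' g hWS
  · -- committee side
    constructor
    · obtain ⟨W, hWS, hqW⟩ := Finset.exists_mem_eq_sup' hS g
      have hcard : W.card = k := (hmemS W).mp hWS
      have hne : W.Nonempty := Finset.card_pos.mp (hcard ▸ hk0)
      exact ⟨W, hne, hcard, by rw [hqdef, hqW, hgdef]; simp only [dif_pos hne]⟩
    · rintro v ⟨W, hW, hcard, rfl⟩
      have hWS : W ∈ S := (hmemS W).mpr hcard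
      have : ∑ i, W.sup' hW (fun c => w (rank i c)) = g W := by
        rw [hgdef]; simp only [dif_pos hW]
      rw [this]
      exact Finset.le_sup' g hWS
end

section
/- Let C be a finite set of m candidates and N = {1,…,n} voters, where voter i's preferences are given by a rank function rank_i : C → {1,…,m}. Consider the matrix A with rows indexed by (N × {1,…,m}) ⊎ {⋆} and columns indexed by (N × {1,…,m}) ⊎ C, defined by: A[(i,r), (j,s)] = −1 if (j,s) = (i,r) and 0 otherwise; A[(i,r), c] = 1 if rank_i(c) ≤ r and 0 otherwise; A[⋆, (j,s)] = 0; and A[⋆, c] = 1 for all c ∈ C. If the profile is single-peaked, i.e., there exists a linear order ◁ on C such that for every voter i and every r the set {c ∈ C : rank_i(c) ≤ r} is an interval of ◁, then A is totally unimodular. -/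
namespace Stmt9Aux

lemma mem_S_iff (x : ℚ) : x ∈ ({-1, 0, 1} : Set ℚ) ↔ x = -1 ∨ x = 0 ∨ x = 1 := by
  simp [Set.mem_insert_iff]

lemma one_mem : (1 : ℚ) ∈ ({-1, 0, 1} : Set ℚ) := by simp
lemma zero_mem : (0 : ℚ) ∈ ({-1, 0, 1} : Set ℚ) := by simp

lemma unit_mul_mem {u x : ℚ} (hu : u = 1 ∨ u = -1) (hx : x ∈ ({-1, 0, 1} : Set ℚ)) :
    u * x ∈ ({-1, 0, 1} : Set ℚ) := by
  rw [mem_S_iff] at hx ⊢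
  rcases hu with rfl | rfl <;> rcases hx with rfl | rfl | rfl <;> norm_num

lemma neg_one_pow (e : ℕ) : ((-1 : ℚ) ^ e) = 1 ∨ ((-1 : ℚ) ^ e) = -1 := by
  rcases Nat.even_or_odd e with h | h
  · left; exact h.neg_one_pow
  · right; exact h.neg_one_pow

lemma neg_mem {x : ℚ} (hx : -x ∈ ({-1, 0, 1} : Set ℚ)) : x ∈ ({-1, 0, 1} : Set ℚ) := by
  rw [mem_S_iff] at hx ⊢
  rcases hx with h | h | h
  · right; right; linarith
  · right; left; linarith
  · left; linarith

/-- Remapping of a natural-number "column label" after deleting column `p`. -/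
def remap (k : ℕ) (p : Fin (k + 1)) (c : ℕ) : ℕ :=
  if c < (p : ℕ) then c else if c = (p : ℕ) then k else c - 1

lemma coe_succAbove (k : ℕ) (p : Fin (k + 1)) (j : Fin k) :
    ((p.succAbove j : Fin (k + 1)) : ℕ) = if (j : ℕ) < (p : ℕ) then (j : ℕ) else (j : ℕ) + 1 := by
  rcases lt_or_ge ((j : ℕ)) ((p : ℕ)) with h | h
  · rw [Fin.succAbove_of_castSucc_lt, if_pos h]
    · simp
    · rw [Fin.lt_def]; simpa using h
  · rw [Fin.succAbove_of_le_castSucc, if_neg (not_lt.mpr h)]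
    · simp
    · rw [Fin.le_def]; simpa using h

lemma remap_spec (k : ℕ) (p : Fin (k + 1)) (c : ℕ) (j : Fin k) :
    ((p.succAbove j : Fin (k + 1)) : ℕ) = c ↔ (j : ℕ) = remap k p c := by
  have hj : (j : ℕ) < k := j.isLt
  have hp : (p : ℕ) < k + 1 := p.isLt
  rw [coe_succAbove]
  unfold remap
  split_ifs <;> omega

/-- Determinant of a "network-like" matrix: each row is `e_a - e_b` where the
labels `a b : ℕ` may be out of range (in which case the corresponding unit
vector is zero). -/
lemma net_det : ∀ (k : ℕ) (N : Matrix (Fin k) (Fin k) ℚ) (a b : Fin k → ℕ),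
    (∀ i j, N i j =
      (if (j : ℕ) = a i then 1 else 0) - (if (j : ℕ) = b i then 1 else 0)) →
    N.det ∈ ({-1, 0, 1} : Set ℚ) := by
  intro k
  induction k with
  | zero =>
    intro N a b _
    rw [Matrix.det_fin_zero]
    exact one_mem
  | succ k ih =>
    intro N a b hN
    have sum_ind : ∀ c : ℕ,
        (∑ j : Fin (k + 1), if (j : ℕ) = c then (1 : ℚ) else 0)
          = if c < k + 1 then 1 else 0 := by
      intro c
      by_cases hc : c < k + 1
      · rw [if_pos hc, Finset.sum_eq_single (⟨c, hc⟩ : Fin (k + 1))]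
        · simp
        · intro l _ hl
          rw [if_neg]
          exact fun h => hl (Fin.ext h)
        · simp
      · rw [if_neg hc, Finset.sum_eq_zero]
        intro j _
        rw [if_neg]
        have := j.isLt
        omega
    by_cases hz : ∀ i, (a i < k + 1 ↔ b i < k + 1)
    · -- all rows sum to zero
      right; left
      rw [← Matrix.exists_mulVec_eq_zero_iff]
      refine ⟨fun _ => (1 : ℚ), fun h => one_ne_zero (congrFun h ⟨0, Nat.succ_pos k⟩), ?_⟩
      funext i
      have : (N.mulVec (fun _ => (1 : ℚ))) i = ∑ j : Fin (k + 1), N i j := by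
        simp [Matrix.mulVec, dotProduct]
      rw [this]
      simp_rw [hN i]
      rw [Finset.sum_sub_distrib, sum_ind, sum_ind]
      by_cases h : a i < k + 1
      · rw [if_pos h, if_pos ((hz i).mp h)]; simp
      · rw [if_neg h, if_neg (fun hb => h ((hz i).mpr hb))]; simp
    · push_neg at hz
      obtain ⟨i₀, hi₀⟩ := hz
      have hcases : ∃ (p : Fin (k + 1)) (ε : ℚ), (ε = 1 ∨ ε = -1) ∧
          ∀ j : Fin (k + 1), N i₀ j = if j = p then ε else 0 := by
        by_cases ha : a i₀ < k + 1
        · have hb : ¬ b i₀ < k + 1 := by omega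
          refine ⟨⟨a i₀, ha⟩, 1, Or.inl rfl, fun j => ?_⟩
          rw [hN]
          have hjb : ¬ ((j : ℕ) = b i₀) := by have := j.isLt; omega
          rw [if_neg hjb, sub_zero]
          congr 1
          simp [Fin.ext_iff]
        · have hb : b i₀ < k + 1 := by omega
          refine ⟨⟨b i₀, hb⟩, -1, Or.inr rfl, fun j => ?_⟩
          rw [hN]
          have hja : ¬ ((j : ℕ) = a i₀) := by have := j.isLt; omega
          rw [if_neg hja, zero_sub]
          by_cases h : j = (⟨b i₀, hb⟩ : Fin (k + 1))
          · rw [if_pos (by simpa [Fin.ext_iff] using h), if_pos h]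
          · rw [if_neg (by simpa [Fin.ext_iff] using h), if_neg h, neg_zero]
      obtain ⟨p, ε, hε, hrow⟩ := hcases
      rw [Matrix.det_succ_row N i₀, Finset.sum_eq_single p]
      · rw [hrow, if_pos rfl, mul_assoc]
        refine unit_mul_mem (neg_one_pow _) (unit_mul_mem hε ?_)
        refine ih _ (fun i => remap k p (a (i₀.succAbove i)))
          (fun i => remap k p (b (i₀.succAbove i))) ?_
        intro i j
        rw [Matrix.submatrix_apply, hN]
        congr 1 <;> · congr 1; exact propext (remap_spec k p _ j)
      · intro j _ hj
        rw [hrow, if_neg hj, mul_zero, zero_mul]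
      · intro h
        exact absurd (Finset.mem_univ p) h

/-- Determinant of a matrix whose rows are indicator vectors of intervals
`[a, b)` of column indices. -/
lemma interval_det (k : ℕ) (M : Matrix (Fin k) (Fin k) ℚ) (a b : Fin k → ℕ)
    (hM : ∀ i j, M i j = if a i ≤ (j : ℕ) ∧ (j : ℕ) < b i then 1 else 0) :
    M.det ∈ ({-1, 0, 1} : Set ℚ) := by
  set T : Matrix (Fin k) (Fin k) ℚ := fun l j => if l ≤ j then 1 else 0 with hT
  set N : Matrix (Fin k) (Fin k) ℚ := fun i j =>
    (if (j : ℕ) = a i then 1 else 0) - (if (j : ℕ) = a i + (b i - a i) then 1 else 0) with hNdef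
  have sum_ind_le : ∀ (c : ℕ) (j : Fin k),
      (∑ l : Fin k, (if (l : ℕ) = c then (1 : ℚ) else 0) * (if l ≤ j then 1 else 0))
        = if c ≤ (j : ℕ) then 1 else 0 := by
    intro c j
    by_cases hc : c ≤ (j : ℕ)
    · have hck : c < k := lt_of_le_of_lt hc j.isLt
      rw [if_pos hc, Finset.sum_eq_single (⟨c, hck⟩ : Fin k)]
      · rw [if_pos rfl, if_pos (by rw [Fin.le_def]; exact hc), mul_one]
      · intro l _ hl
        rw [if_neg (fun h => hl (Fin.ext h)), zero_mul]
      · simp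
    · rw [if_neg hc, Finset.sum_eq_zero]
      intro l _
      by_cases h1 : (l : ℕ) = c
      · rw [if_neg (show ¬ l ≤ j by rw [Fin.le_def]; omega), mul_zero]
      · rw [if_neg h1, zero_mul]
  have hMN : M = N * T := by
    ext i j
    rw [Matrix.mul_apply, hM]
    simp_rw [hNdef, hT, sub_mul]
    rw [Finset.sum_sub_distrib, sum_ind_le, sum_ind_le]
    have hj := j.isLt
    split_ifs <;> first | (exfalso; omega) | norm_num
  have hTtri : T.BlockTriangular id := by
    intro i j hij
    simp only [hT]
    rw [if_neg (not_le.mpr (show j < i from hij))]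
  have hTdet : T.det = 1 := by
    rw [Matrix.det_of_upperTriangular hTtri]
    simp [hT]
  rw [hMN, Matrix.det_mul, hTdet, mul_one]
  exact net_det k N a (fun i => a i + (b i - a i)) (fun i j => rfl)

/-- A convex subset of `Fin k` is an interval. -/
lemma convex_interval (k : ℕ) (P : Fin k → Prop) [DecidablePred P]
    (hconv : ∀ j1 j2 j3 : Fin k, j1 ≤ j2 → j2 ≤ j3 → P j1 → P j3 → P j2) :
    ∃ a b : ℕ, ∀ j : Fin k, P j ↔ (a ≤ (j : ℕ) ∧ (j : ℕ) < b) := by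
  by_cases hne : ∃ j, P j
  · obtain ⟨j₀, hj₀⟩ := hne
    set T := Finset.univ.filter P with hTdef
    have hT : T.Nonempty := ⟨j₀, by simp [hTdef, hj₀]⟩
    refine ⟨((T.min' hT : Fin k) : ℕ), ((T.max' hT : Fin k) : ℕ) + 1, fun j => ?_⟩
    constructor
    · intro hj
      have h1 := T.min'_le j (by simp [hTdef, hj])
      have h2 := T.le_max' j (by simp [hTdef, hj])
      rw [Fin.le_def] at h1 h2
      omega
    · rintro ⟨h1, h2⟩
      have hmin : P (T.min' hT) := by
        have := T.min'_mem hT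
        simp [hTdef] at this
        exact this
      have hmax : P (T.max' hT) := by
        have := T.max'_mem hT
        simp [hTdef] at this
        exact this
      exact hconv _ j _ (by rw [Fin.le_def]; omega) (by rw [Fin.le_def]; omega) hmin hmax
  · push_neg at hne
    exact ⟨0, 0, fun j => by simp [hne j]⟩

end Stmt9Aux

/-- The constraint matrix of (CC-IP): rows are indexed by pairs `(i,r)` of a
voter and a rank plus one extra row `⋆`, columns by the variables `x_{j,s}`
and `y_c`.  If the profile of rank functions is single-peaked — there is a
linear order on the candidates (encoded by a bijective position function
`pos`) under which every top-initial segment `{c : rank i c ≤ r}` is an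
interval — then this matrix is totally unimodular. -/
theorem stmt9 {n m : ℕ} (rank : Fin n → Fin m → Fin m)
    (hSP : ∃ pos : Equiv.Perm (Fin m), ∀ (i : Fin n) (r : Fin m) (a b c : Fin m),
      pos a < pos b → pos b < pos c →
      rank i a ≤ r → rank i c ≤ r → rank i b ≤ r) :
    IsTU (Matrix.of fun (row : (Fin n × Fin m) ⊕ Unit)
        (col : (Fin n × Fin m) ⊕ Fin m) =>
      match row, col with
      | Sum.inl ir, Sum.inl js => if js = ir then (-1 : ℚ) else 0
      | Sum.inl ir, Sum.inr c => if rank ir.1 c ≤ ir.2 then 1 else 0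
      | Sum.inr _, Sum.inl _ => 0
      | Sum.inr _, Sum.inr _ => 1) := by
  classical
  obtain ⟨pos, hpos⟩ := hSP
  set A : Matrix ((Fin n × Fin m) ⊕ Unit) ((Fin n × Fin m) ⊕ Fin m) ℚ :=
    Matrix.of fun row col =>
      match row, col with
      | Sum.inl ir, Sum.inl js => if js = ir then (-1 : ℚ) else 0
      | Sum.inl ir, Sum.inr c => if rank ir.1 c ≤ ir.2 then 1 else 0
      | Sum.inr _, Sum.inl _ => 0
      | Sum.inr _, Sum.inr _ => 1 with hA
  show IsTU A
  have hA1 : ∀ ir js, A (Sum.inl ir) (Sum.inl js) = if js = ir then (-1 : ℚ) else 0 :=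
    fun _ _ => rfl
  have hA2 : ∀ ir c, A (Sum.inl ir) (Sum.inr c) = if rank ir.1 c ≤ ir.2 then (1 : ℚ) else 0 :=
    fun _ _ => rfl
  have hA3 : ∀ u js, A (Sum.inr u) (Sum.inl js) = (0 : ℚ) := fun _ _ => rfl
  have hA4 : ∀ u c, A (Sum.inr u) (Sum.inr c) = (1 : ℚ) := fun _ _ => rfl
  intro k
  induction k with
  | zero =>
    intro f g _ _
    rw [Matrix.det_fin_zero]
    exact Stmt9Aux.one_mem
  | succ k ih =>
    intro f g hf hg
    by_cases hL : ∃ (j : Fin (k + 1)) (d : Fin n × Fin m), g j = Sum.inl d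
    · obtain ⟨j₀, d, hj₀⟩ := hL
      have hzero : ∀ i, f i ≠ Sum.inl d → (A.submatrix f g) i j₀ = 0 := by
        intro i hi
        rw [Matrix.submatrix_apply, hj₀]
        cases hfi : f i with
        | inl e =>
          rw [hA1]
          rw [if_neg]
          intro h; exact hi (by rw [hfi, h])
        | inr u => exact hA3 u d
      by_cases hrow : ∃ i, f i = Sum.inl d
      · obtain ⟨i₀, hi₀⟩ := hrow
        rw [Matrix.det_succ_column _ j₀, Finset.sum_eq_single i₀]
        · have hentry : (A.submatrix f g) i₀ j₀ = -1 := by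
            rw [Matrix.submatrix_apply, hj₀, hi₀, hA1, if_pos rfl]
          rw [hentry, Matrix.submatrix_submatrix, mul_assoc]
          refine Stmt9Aux.unit_mul_mem (Stmt9Aux.neg_one_pow _) (Stmt9Aux.unit_mul_mem (Or.inr rfl) ?_)
          exact ih (f ∘ i₀.succAbove) (g ∘ j₀.succAbove)
            (hf.comp Fin.succAbove_right_injective)
            (hg.comp Fin.succAbove_right_injective)
        · intro i _ hi
          rw [hzero i (fun h => hi (hf (by rw [h, hi₀]))), mul_zero, zero_mul]
        · intro h; exact absurd (Finset.mem_univ i₀) h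
      · push_neg at hrow
        right; left
        exact Matrix.det_eq_zero_of_column_eq_zero j₀ (fun i => hzero i (hrow i))
    · push_neg at hL
      have hc : ∀ j, ∃ c : Fin m, g j = Sum.inr c := by
        intro j
        cases hgj : g j with
        | inl d => exact absurd hgj (hL j d)
        | inr c => exact ⟨c, rfl⟩
      choose c hc using hc
      have hcinj : Function.Injective c := fun x y h => hg (by rw [hc x, hc y, h])
      set φ : Fin (k + 1) → Fin m := fun j => pos (c j) with hφ
      have hφinj : Function.Injective φ := pos.injective.comp hcinj
      set σ := Tuple.sort φ with hσ
      have hmono : StrictMono (φ ∘ σ) :=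
        (Tuple.monotone_sort φ).strictMono_of_injective (hφinj.comp σ.injective)
      have hdet : ((A.submatrix f g).submatrix id σ).det ∈ ({-1, 0, 1} : Set ℚ) := by
        rw [Matrix.submatrix_submatrix]
        have hrows : ∀ i : Fin (k + 1), ∃ a b : ℕ, ∀ j,
            (A.submatrix (f ∘ id) (g ∘ σ)) i j
              = if a ≤ (j : ℕ) ∧ (j : ℕ) < b then 1 else 0 := by
          intro i
          cases hfi : f i with
          | inr u =>
            refine ⟨0, k + 1, fun j => ?_⟩
            rw [Matrix.submatrix_apply, Function.comp, Function.comp, id, hfi, hc (σ j), hA4,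
              if_pos ⟨Nat.zero_le _, j.isLt⟩]
          | inl ir =>
            have hconv : ∀ j1 j2 j3 : Fin (k + 1), j1 ≤ j2 → j2 ≤ j3 →
                rank ir.1 (c (σ j1)) ≤ ir.2 → rank ir.1 (c (σ j3)) ≤ ir.2 →
                rank ir.1 (c (σ j2)) ≤ ir.2 := by
              intro j1 j2 j3 h12 h23 h1 h3
              rcases eq_or_lt_of_le h12 with rfl | h12'
              · exact h1
              rcases eq_or_lt_of_le h23 with rfl | h23'
              · exact h3
              exact hpos ir.1 ir.2 (c (σ j1)) (c (σ j2)) (c (σ j3))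
                (hmono h12') (hmono h23') h1 h3
            obtain ⟨a, b, hab⟩ := Stmt9Aux.convex_interval (k + 1)
              (fun j => rank ir.1 (c (σ j)) ≤ ir.2) hconv
            refine ⟨a, b, fun j => ?_⟩
            rw [Matrix.submatrix_apply, Function.comp, Function.comp, id, hfi, hc (σ j), hA2]
            exact if_congr (hab j) rfl rfl
        choose a b hab using hrows
        exact Stmt9Aux.interval_det (k + 1) _ a b hab
      rw [Matrix.det_permute' σ] at hdet
      rcases Int.units_eq_one_or (Equiv.Perm.sign σ) with h | h <;> rw [h] at hdet
      · simpa using hdet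
      · apply Stmt9Aux.neg_mem
        simpa using hdet
end

section
/- Let C be a finite set of m candidates, N = {1,…,n} voters with rank functions rank_i : C → {1,…,m} forming a single-peaked profile (there is a linear order ◁ on C such that every set {c : rank_i(c) ≤ r} is an interval of ◁), let k ≤ m, and let w_1 ≥ … ≥ w_m ≥ 0 be rationals with w'_r = w_r − w_{r+1} for r < m and w'_m = w_m. Then the supremum of ∑_{i∈N} ∑_{r=1}^{m} w'_r·x_{i,r} over all rational y ∈ [0,1]^C and x ∈ [0,1]^{N×{1,…,m}} with ∑_{c∈C} y_c = k and x_{i,r} ≤ ∑_{c : rank_i(c) ≤ r} y_c for all i, r, is attained by an integral solution; in particular it equals the maximum Chamberlin–Courant value ∑_{i∈N} w_{min_{c∈W} rank_i(c)} over committees W ⊆ C with |W| = k. -/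
lemma tele {m : ℕ} (w w' : Fin m → ℚ)
    (hw' : ∀ r : Fin m,
      w' r = w r - (if h : (r : ℕ) + 1 < m then w ⟨(r : ℕ) + 1, h⟩ else 0)) :
    ∀ d (r0 : Fin m), (r0 : ℕ) + d + 1 = m →
      ∑ r ∈ Finset.univ.filter (fun r => r0 ≤ r), w' r = w r0 := by
  intro d
  induction d with
  | zero =>
    intro r0 h
    have hfil : Finset.univ.filter (fun r => r0 ≤ r) = {r0} := by
      ext r
      simp only [Finset.mem_filter, Finset.mem_univ, true_and, Finset.mem_singleton]
      constructor
      · intro hle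
        have := r.isLt
        have : (r : ℕ) ≤ (r0 : ℕ) := by omega
        exact le_antisymm (Fin.le_def.mpr this) hle |>.symm ▸ rfl
      · rintro rfl; exact le_refl _
    rw [hfil, Finset.sum_singleton, hw']
    rw [dif_neg (by omega)]
    ring
  | succ d ih =>
    intro r0 h
    have h1 : (r0 : ℕ) + 1 < m := by omega
    set r1 : Fin m := ⟨(r0 : ℕ) + 1, h1⟩ with hr1
    have hsplit : Finset.univ.filter (fun r => r0 ≤ r)
        = insert r0 (Finset.univ.filter (fun r => r1 ≤ r)) := by
      ext r
      simp only [Finset.mem_filter, Finset.mem_univ, true_and, Finset.mem_insert]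
      rw [Fin.le_def, Fin.le_def]
      constructor
      · intro hle
        rcases eq_or_lt_of_le hle with heq | hlt
        · left; exact (Fin.ext (heq)).symm
        · right; simpa [hr1] using hlt
      · rintro (rfl | hle)
        · exact le_refl _
        · simp only [hr1] at hle; omega
    have hnot : r0 ∉ Finset.univ.filter (fun r => r1 ≤ r) := by
      simp [Fin.le_def, hr1]
    rw [hsplit, Finset.sum_insert hnot, ih r1 (by simp [hr1]; omega), hw', dif_pos h1]
    ring

lemma tele' {m : ℕ} (w w' : Fin m → ℚ)
    (hw' : ∀ r : Fin m,
      w' r = w r - (if h : (r : ℕ) + 1 < m then w ⟨(r : ℕ) + 1, h⟩ else 0))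
    (r0 : Fin m) :
    ∑ r ∈ Finset.univ.filter (fun r => r0 ≤ r), w' r = w r0 :=
  tele w w' hw' (m - 1 - (r0 : ℕ)) r0 (by have := r0.isLt; omega)

lemma countlem {D k : ℕ} (hD : 0 < D) (Nu Nv : ℕ) (hvk : Nv ≤ k * D) :
    min D (Nv - Nu) ≤ ((Finset.range D).filter (fun t : ℕ => ∃ j ∈ Finset.range k,
      (Nu : ℚ) / D < (j : ℚ) + ((t : ℚ) + 1) / D ∧
      (j : ℚ) + ((t : ℚ) + 1) / D ≤ (Nv : ℚ) / D)).card := by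
  rcases le_or_gt Nv Nu with h | h
  · simp [Nat.sub_eq_zero_of_le h]
  set L := min D (Nv - Nu) with hL
  have hLD : L ≤ D := min_le_left _ _
  have hLle : Nu + L ≤ Nv := by omega
  have hmap : ∀ s ∈ Finset.Ico Nu (Nu + L), s % D ∈ (Finset.range D).filter
      (fun t : ℕ => ∃ j ∈ Finset.range k,
      (Nu : ℚ) / D < (j : ℚ) + ((t : ℚ) + 1) / D ∧
      (j : ℚ) + ((t : ℚ) + 1) / D ≤ (Nv : ℚ) / D) := by
    intro s hs
    rw [Finset.mem_Ico] at hs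
    have hsv : s < Nv := by omega
    have hkey : ((s / D : ℕ) : ℚ) + (((s % D : ℕ) : ℚ) + 1) / D = ((s : ℚ) + 1) / D := by
      have h0 : (s : ℚ) = ((s / D : ℕ) : ℚ) * D + ((s % D : ℕ) : ℚ) := by
        rw [← Nat.cast_mul, ← Nat.cast_add, Nat.div_add_mod']
      rw [h0]
      field_simp
      ring
    rw [Finset.mem_filter]
    refine ⟨Finset.mem_range.mpr (Nat.mod_lt _ hD), ⟨s / D, ?_, ?_, ?_⟩⟩
    · rw [Finset.mem_range]
      exact Nat.div_lt_of_lt_mul (by rw [Nat.mul_comm]; omega)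
    · rw [hkey, div_lt_div_iff_of_pos_right (by positivity)]
      have h1 : Nu < s + 1 := by omega
      exact_mod_cast h1
    · rw [hkey, div_le_div_iff_of_pos_right (by positivity)]
      have h1 : s + 1 ≤ Nv := by omega
      exact_mod_cast h1
  have hinj : Set.InjOn (fun s => s % D) (Finset.Ico Nu (Nu + L)) := by
    intro s1 h1 s2 h2 he
    simp only [Finset.coe_Ico, Set.mem_Ico] at h1 h2
    simp only at he
    rcases le_total s1 s2 with hle | hle
    · have hdvd : D ∣ s2 - s1 := (Nat.modEq_iff_dvd' hle).mp he
      rcases Nat.eq_zero_or_pos (s2 - s1) with h0 | h0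
      · omega
      · have := Nat.le_of_dvd h0 hdvd; omega
    · have hdvd : D ∣ s1 - s2 := (Nat.modEq_iff_dvd' hle).mp he.symm
      rcases Nat.eq_zero_or_pos (s1 - s2) with h0 | h0
      · omega
      · have := Nat.le_of_dvd h0 hdvd; omega
  calc L = (Finset.Ico Nu (Nu + L)).card := by rw [Nat.card_Ico]; omega
    _ ≤ _ := Finset.card_le_card_of_injOn _ hmap hinj

lemma commval {n m : ℕ} (rank : Fin n → Fin m → Fin m)
    (w w' : Fin m → ℚ) (hwmono : ∀ r s : Fin m, r ≤ s → w s ≤ w r)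
    (hw' : ∀ r : Fin m,
      w' r = w r - (if h : (r : ℕ) + 1 < m then w ⟨(r : ℕ) + 1, h⟩ else 0))
    (W : Finset (Fin m)) (hW : W.Nonempty) (i : Fin n) :
    ∑ r, w' r * (if ∃ c ∈ W, rank i c ≤ r then 1 else 0)
      = W.sup' hW (fun c => w (rank i c)) := by
  set r0 := W.inf' hW (rank i) with hr0
  have hiff : ∀ r : Fin m, (∃ c ∈ W, rank i c ≤ r) ↔ r0 ≤ r := by
    intro r
    constructor
    · rintro ⟨c, hc, hcr⟩
      exact le_trans (Finset.inf'_le _ hc) hcr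
    · intro hle
      obtain ⟨c, hc, hceq⟩ := Finset.exists_mem_eq_inf' hW (rank i)
      exact ⟨c, hc, hceq ▸ hle⟩
  have h1 : ∑ r, w' r * (if ∃ c ∈ W, rank i c ≤ r then 1 else 0)
      = ∑ r ∈ Finset.univ.filter (fun r => r0 ≤ r), w' r := by
    rw [Finset.sum_filter]
    congr 1; ext r
    by_cases h : r0 ≤ r
    · simp [h, (hiff r).mpr h]
    · have : ¬ ∃ c ∈ W, rank i c ≤ r := fun hc => h ((hiff r).mp hc)
      simp [h, this]
  rw [h1, tele' w w' hw' r0]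
  apply le_antisymm
  · obtain ⟨c, hc, hceq⟩ := Finset.exists_mem_eq_inf' hW (rank i)
    rw [hr0, hceq]
    exact Finset.le_sup' (fun c => w (rank i c)) hc
  · apply Finset.sup'_le
    intro c hc
    exact hwmono _ _ (Finset.inf'_le _ hc)

lemma keylem {n m k : ℕ} (hk0 : 0 < k) (hk : k ≤ m)
    (rank : Fin n → Fin m → Fin m) (pos : Equiv.Perm (Fin m))
    (hSP : ∀ (i : Fin n) (r : Fin m) (a b c : Fin m),
      pos a < pos b → pos b < pos c →
      rank i a ≤ r → rank i c ≤ r → rank i b ≤ r)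
    (w : Fin m → ℚ) (hwmono : ∀ r s : Fin m, r ≤ s → w s ≤ w r)
    (hwnonneg : ∀ r, 0 ≤ w r)
    (w' : Fin m → ℚ)
    (hw' : ∀ r : Fin m,
      w' r = w r - (if h : (r : ℕ) + 1 < m then w ⟨(r : ℕ) + 1, h⟩ else 0))
    (y : Fin m → ℚ) (x : Fin n → Fin m → ℚ)
    (hy : ∀ c, 0 ≤ y c ∧ y c ≤ 1)
    (hx : ∀ i r, 0 ≤ x i r ∧ x i r ≤ 1)
    (hsum : (∑ c, y c) = (k : ℚ))
    (hcons : ∀ i r, x i r ≤ ∑ c ∈ Finset.univ.filter (fun c => rank i c ≤ r), y c) :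
    ∃ (W : Finset (Fin m)) (hW : W.Nonempty), W.card = k ∧
      ∑ i, ∑ r, w' r * x i r ≤ ∑ i, W.sup' hW (fun c => w (rank i c)) := by
  have hm : 0 < m := lt_of_lt_of_le hk0 hk
  have hw'nonneg : ∀ r, 0 ≤ w' r := by
    intro r
    rw [hw']
    split
    · rw [sub_nonneg]
      exact hwmono r _ (by simp [Fin.le_def])
    · simpa using hwnonneg r
  -- candidate by position
  set d : ℕ → Fin m := fun p => pos.symm ⟨p % m, Nat.mod_lt _ hm⟩ with hd
  have hdval : ∀ p, p < m → ((pos (d p) : ℕ)) = p := by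
    intro p hp
    simp [hd, Nat.mod_eq_of_lt hp]
  -- extended y along positions
  set yt : ℕ → ℚ := fun p => if p < m then y (d p) else 0 with hyt
  have hyt0 : ∀ p, 0 ≤ yt p := by
    intro p; simp only [hyt]; split
    · exact (hy _).1
    · exact le_refl 0
  have hyt1 : ∀ p, yt p ≤ 1 := by
    intro p; simp only [hyt]; split
    · exact (hy _).2
    · norm_num
  -- partial sums
  set S : ℕ → ℚ := fun t => ∑ p ∈ Finset.range t, yt p with hSdef
  have hS0 : S 0 = 0 := by simp [hSdef]
  have hSmono : ∀ a b : ℕ, a ≤ b → S a ≤ S b := by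
    intro a b hab
    exact Finset.sum_le_sum_of_subset_of_nonneg
      (Finset.range_subset_range.mpr hab) (fun p _ _ => hyt0 p)
  have hSstep : ∀ p, S (p + 1) = S p + yt p := by
    intro p; simp [hSdef, Finset.sum_range_succ]
  have hSstep1 : ∀ p, S (p + 1) ≤ S p + 1 := by
    intro p; rw [hSstep]; linarith [hyt1 p]
  have hSm : S m = (k : ℚ) := by
    have h1 : S m = ∑ p : Fin m, yt p := by
      rw [hSdef]; exact (Fin.sum_univ_eq_sum_range yt m).symm
    have h2 : ∀ p : Fin m, yt (p : ℕ) = y (d (p : ℕ)) := by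
      intro p; simp [hyt, p.isLt]
    have h3 : ∀ p : Fin m, d (p : ℕ) = pos.symm p := by
      intro p
      simp only [hd]
      congr 1
      exact Fin.ext (Nat.mod_eq_of_lt p.isLt)
    rw [h1]
    calc ∑ p : Fin m, yt (p : ℕ) = ∑ p : Fin m, y (pos.symm p) := by
          refine Finset.sum_congr rfl (fun p _ => ?_)
          rw [h2 p, h3 p]
      _ = ∑ c, y c := Equiv.sum_comp pos.symm y
      _ = (k : ℚ) := hsum
  -- common denominator
  set D : ℕ := ∏ c, (y c).den with hDdef
  have hD : 0 < D := Finset.prod_pos (fun c _ => (y c).pos)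
  have hDQ : (0 : ℚ) < (D : ℚ) := by exact_mod_cast hD
  have hytD : ∀ p : ℕ, ∃ N : ℕ, yt p = (N : ℚ) / D := by
    intro p
    by_cases hp : p < m
    · obtain ⟨e, he⟩ := Finset.dvd_prod_of_mem (fun c => (y c).den)
        (Finset.mem_univ (d p))
      refine ⟨((y (d p)).num).toNat * e, ?_⟩
      have hnum : (((y (d p)).num).toNat : ℚ) = ((y (d p)).num : ℚ) := by
        exact_mod_cast congrArg (fun z : ℤ => (z : ℚ))
          (Int.toNat_of_nonneg (Rat.num_nonneg.mpr (hy _).1))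
      have h0 : y (d p) * ((y (d p)).den : ℚ) = ((y (d p)).num : ℚ) := by
        exact_mod_cast Rat.mul_den_eq_num (y (d p))
      have hytp : yt p = y (d p) := by simp [hyt, hp]
      have hDe : (D : ℚ) = ((y (d p)).den : ℚ) * (e : ℚ) := by
        rw [hDdef]; exact_mod_cast congrArg (fun z : ℕ => (z : ℚ)) he
      rw [hytp, eq_div_iff (ne_of_gt hDQ)]
      push_cast
      rw [hnum, ← h0, hDe]
      ring
    · exact ⟨0, by simp [hyt, hp]⟩
  have hSD : ∀ t : ℕ, ∃ N : ℕ, S t = (N : ℚ) / D := by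
    intro t
    induction t with
    | zero => exact ⟨0, by simp [hS0]⟩
    | succ t ih =>
      obtain ⟨N1, hN1⟩ := ih
      obtain ⟨N2, hN2⟩ := hytD t
      exact ⟨N1 + N2, by rw [hSstep, hN1, hN2]; push_cast; ring⟩
  choose NS hNS using hSD
  -- the threshold rounding
  have hex : ∀ z : ℚ, ∃ p, min z (k : ℚ) ≤ S p :=
    fun z => ⟨m, by rw [hSm]; exact min_le_right _ _⟩
  set Nq : ℚ → ℕ := fun z => Nat.find (hex z) - 1 with hNqdef
  have hNq : ∀ z : ℚ, 0 < z → z ≤ (k : ℚ) →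
      Nq z < m ∧ S (Nq z) < z ∧ z ≤ S (Nq z + 1) := by
    intro z hz0 hzk
    have hmin : min z (k : ℚ) = z := min_eq_left hzk
    have hP1 : 1 ≤ Nat.find (hex z) := by
      rcases Nat.eq_zero_or_pos (Nat.find (hex z)) with h0 | h0
      · exfalso
        have := Nat.find_spec (hex z)
        rw [h0, hS0, hmin] at this
        linarith
      · exact h0
    have hPm : Nat.find (hex z) ≤ m :=
      Nat.find_min' (hex z) (by rw [hSm]; exact min_le_right _ _)
    have hq1 : Nq z + 1 = Nat.find (hex z) := by simp only [hNqdef]; omega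
    refine ⟨by simp only [hNqdef]; omega, ?_, ?_⟩
    · have hnle := Nat.find_min (hex z) (show Nq z < Nat.find (hex z) by omega)
      exact lt_of_not_ge (fun hle => hnle (hmin.le.trans hle))
    · have h := Nat.find_spec (hex z)
      rw [hq1]
      exact le_trans hmin.ge h
  -- location of the rounded point
  have hNqloc : ∀ (z : ℚ) (a b : ℕ), 0 < z → z ≤ (k : ℚ) →
      S a < z → z ≤ S b → a ≤ Nq z ∧ Nq z + 1 ≤ b := by
    intro z a b hz0 hzk hSa hSb
    have hmin : min z (k : ℚ) = z := min_eq_left hzk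
    constructor
    · by_contra hcon
      push_neg at hcon
      have hfind : Nat.find (hex z) ≤ a := by
        have h := hNq z hz0 hzk
        simp only [hNqdef] at hcon ⊢
        omega
      have hsp := le_trans hmin.ge (Nat.find_spec (hex z))
      have := le_trans hsp (hSmono _ _ hfind)
      linarith
    · have : Nat.find (hex z) ≤ b := Nat.find_min' (hex z) (le_trans hmin.le hSb)
      have h := hNq z hz0 hzk
      simp only [hNqdef] at this ⊢
      have h1 : 1 ≤ Nat.find (hex z) := by
        rcases Nat.eq_zero_or_pos (Nat.find (hex z)) with h0 | h0
        · exfalso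
          have hh := le_trans hmin.ge (Nat.find_spec (hex z))
          rw [h0, hS0] at hh
          linarith
        · exact h0
      omega
  -- committees
  set Wc : ℕ → Finset (Fin m) := fun t =>
    (Finset.range k).image (fun j : ℕ => d (Nq ((j : ℚ) + ((t : ℚ) + 1) / D))) with hWc
  have hz0k : ∀ t ∈ Finset.range D, ∀ j ∈ Finset.range k,
      0 < (j : ℚ) + ((t : ℚ) + 1) / D ∧ (j : ℚ) + ((t : ℚ) + 1) / D ≤ (k : ℚ) := by
    intro t ht j hj
    rw [Finset.mem_range] at ht hj
    constructor
    · positivity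
    · have h1 : ((t : ℚ) + 1) / D ≤ 1 := by
        rw [div_le_one hDQ]
        exact_mod_cast Nat.succ_le_of_lt ht
      have h2 : (j : ℚ) ≤ (k : ℚ) - 1 := by
        have : (j : ℚ) + 1 ≤ (k : ℚ) := by exact_mod_cast hj
        linarith
      linarith
  have hqmono : ∀ t ∈ Finset.range D, ∀ j1 ∈ Finset.range k, ∀ j2 ∈ Finset.range k,
      j1 < j2 → Nq ((j1 : ℚ) + ((t : ℚ) + 1) / D) < Nq ((j2 : ℚ) + ((t : ℚ) + 1) / D) := by
    intro t ht j1 hj1 j2 hj2 hlt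
    obtain ⟨hz1, hz1k⟩ := hz0k t ht j1 hj1
    obtain ⟨hz2, hz2k⟩ := hz0k t ht j2 hj2
    set z1 := (j1 : ℚ) + ((t : ℚ) + 1) / D
    set z2 := (j2 : ℚ) + ((t : ℚ) + 1) / D
    obtain ⟨hm1, hlt1, hle1⟩ := hNq z1 hz1 hz1k
    obtain ⟨hm2, hlt2, hle2⟩ := hNq z2 hz2 hz2k
    by_contra hcon
    push_neg at hcon
    have hz12 : z1 + 1 ≤ z2 := by
      have : (j1 : ℚ) + 1 ≤ (j2 : ℚ) := by exact_mod_cast hlt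
      simp only [z1, z2]
      linarith
    have : z2 ≤ S (Nq z2 + 1) := hle2
    have h2 : S (Nq z2 + 1) ≤ S (Nq z1 + 1) := hSmono _ _ (by omega)
    have h3 : S (Nq z1 + 1) ≤ S (Nq z1) + 1 := hSstep1 _
    linarith
  have hcard : ∀ t ∈ Finset.range D, (Wc t).card = k := by
    intro t ht
    rw [hWc]
    rw [Finset.card_image_of_injOn, Finset.card_range]
    intro j1 hj1 j2 hj2 he
    simp only [Finset.coe_range, Set.mem_Iio] at hj1 hj2
    by_contra hne
    rcases Nat.lt_or_ge j1 j2 with h | h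
    · have := hqmono t ht j1 (Finset.mem_range.mpr hj1) j2 (Finset.mem_range.mpr hj2) h
      have := pos.symm.injective he
      simp only [Fin.mk.injEq] at this
      obtain ⟨hm1, _, _⟩ := hNq _ (hz0k t ht j1 (Finset.mem_range.mpr hj1)).1
        (hz0k t ht j1 (Finset.mem_range.mpr hj1)).2
      obtain ⟨hm2, _, _⟩ := hNq _ (hz0k t ht j2 (Finset.mem_range.mpr hj2)).1
        (hz0k t ht j2 (Finset.mem_range.mpr hj2)).2
      rw [Nat.mod_eq_of_lt hm1, Nat.mod_eq_of_lt hm2] at this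
      omega
    · have hlt : j2 < j1 := by omega
      have := hqmono t ht j2 (Finset.mem_range.mpr hj2) j1 (Finset.mem_range.mpr hj1) hlt
      have := pos.symm.injective he
      simp only [Fin.mk.injEq] at this
      obtain ⟨hm1, _, _⟩ := hNq _ (hz0k t ht j1 (Finset.mem_range.mpr hj1)).1
        (hz0k t ht j1 (Finset.mem_range.mpr hj1)).2
      obtain ⟨hm2, _, _⟩ := hNq _ (hz0k t ht j2 (Finset.mem_range.mpr hj2)).1
        (hz0k t ht j2 (Finset.mem_range.mpr hj2)).2
      rw [Nat.mod_eq_of_lt hm1, Nat.mod_eq_of_lt hm2] at this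
      omega
  have hWne : ∀ t : ℕ, (Wc t).Nonempty := by
    intro t
    rw [hWc]
    exact (Finset.nonempty_range_iff.mpr (by omega)).image _
  -- per (i, r) inequality
  have hperIR : ∀ (i : Fin n) (r : Fin m), (D : ℚ) * x i r ≤
      ∑ t ∈ Finset.range D, (if ∃ c ∈ Wc t, rank i c ≤ r then (1 : ℚ) else 0) := by
    intro i r
    set T := Finset.univ.filter (fun c => rank i c ≤ r) with hT
    rcases Finset.eq_empty_or_nonempty T with hTe | hTne
    · have hx0 : x i r ≤ 0 := by
        have := hcons i r
        rw [← hT, hTe] at this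
        simpa using this
      have hx0' : x i r = 0 := le_antisymm hx0 (hx i r).1
      rw [hx0', mul_zero]
      apply Finset.sum_nonneg
      intro t _
      split <;> norm_num
    · -- positions of T form an interval
      set B := (Finset.range m).filter (fun p : ℕ => rank i (d p) ≤ r) with hB
      have hBne : B.Nonempty := by
        obtain ⟨c, hc⟩ := hTne
        rw [hT, Finset.mem_filter] at hc
        refine ⟨(pos c : ℕ), ?_⟩
        rw [hB, Finset.mem_filter, Finset.mem_range]
        have hdc : d ((pos c : ℕ)) = c := by
          simp only [hd]
          rw [show (⟨(pos c : ℕ) % m, Nat.mod_lt _ hm⟩ : Fin m) = pos c from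
            Fin.ext (Nat.mod_eq_of_lt (pos c).isLt)]
          exact pos.symm_apply_apply c
        rw [hdc]
        exact ⟨(pos c).isLt, hc.2⟩
      set a := B.min' hBne with ha
      set b := B.max' hBne with hb
      have haB : a ∈ B := B.min'_mem hBne
      have hbB : b ∈ B := B.max'_mem hBne
      have ham : a < m := by
        rw [hB, Finset.mem_filter, Finset.mem_range] at haB; exact haB.1
      have hbm : b < m := by
        rw [hB, Finset.mem_filter, Finset.mem_range] at hbB; exact hbB.1
      have hab : a ≤ b := B.min'_le _ hbB
      have hconv : ∀ p, a ≤ p → p ≤ b → p ∈ B := by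
        intro p hap hpb
        rcases eq_or_lt_of_le hap with rfl | hap'
        · exact haB
        rcases eq_or_lt_of_le hpb with rfl | hpb'
        · exact hbB
        have hpm : p < m := lt_trans hpb' hbm
        rw [hB, Finset.mem_filter, Finset.mem_range]
        refine ⟨hpm, ?_⟩
        have h1 : pos (d a) < pos (d p) := by
          rw [Fin.lt_def, hdval a ham, hdval p hpm]; exact hap'
        have h2 : pos (d p) < pos (d b) := by
          rw [Fin.lt_def, hdval p hpm, hdval b hbm]; exact hpb'
        have hra : rank i (d a) ≤ r := by
          rw [hB, Finset.mem_filter] at haB; exact haB.2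
        have hrb : rank i (d b) ≤ r := by
          rw [hB, Finset.mem_filter] at hbB; exact hbB.2
        exact hSP i r (d a) (d p) (d b) h1 h2 hra hrb
      have hBI : B = Finset.Ico a (b + 1) := by
        ext p
        rw [Finset.mem_Ico]
        constructor
        · intro hp
          exact ⟨B.min'_le _ hp, Nat.lt_succ_of_le (B.le_max' _ hp)⟩
        · rintro ⟨h1, h2⟩
          exact hconv p h1 (Nat.lt_succ_iff.mp h2)
      -- sum over T equals S (b+1) - S a
      have hyT : ∑ c ∈ T, y c = S (b + 1) - S a := by
        have h1 : ∑ c ∈ T, y c = ∑ p ∈ B, yt p := by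
          refine Finset.sum_nbij' (fun c => ((pos c : ℕ))) (fun p => d p) ?_ ?_ ?_ ?_ ?_
          · intro c hc
            rw [hT, Finset.mem_filter] at hc
            rw [hB, Finset.mem_filter, Finset.mem_range]
            have hdc : d ((pos c : ℕ)) = c := by
              simp only [hd]
              rw [show (⟨(pos c : ℕ) % m, Nat.mod_lt _ hm⟩ : Fin m) = pos c from
                Fin.ext (Nat.mod_eq_of_lt (pos c).isLt)]
              exact pos.symm_apply_apply c
            rw [hdc]
            exact ⟨(pos c).isLt, hc.2⟩
          · intro p hp
            rw [hB, Finset.mem_filter] at hp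
            rw [hT, Finset.mem_filter]
            exact ⟨Finset.mem_univ _, hp.2⟩
          · intro c hc
            simp only [hd]
            rw [show (⟨(pos c : ℕ) % m, Nat.mod_lt _ hm⟩ : Fin m) = pos c from
              Fin.ext (Nat.mod_eq_of_lt (pos c).isLt)]
            exact pos.symm_apply_apply c
          · intro p hp
            rw [hB, Finset.mem_filter, Finset.mem_range] at hp
            exact hdval p hp.1
          · intro c hc
            have hlt : (pos c : ℕ) < m := (pos c).isLt
            have hdc : d ((pos c : ℕ)) = c := by
              simp only [hd]
              rw [show (⟨(pos c : ℕ) % m, Nat.mod_lt _ hm⟩ : Fin m) = pos c from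
                Fin.ext (Nat.mod_eq_of_lt (pos c).isLt)]
              exact pos.symm_apply_apply c
            simp [hyt, hlt, hdc]
        rw [h1, hBI, Finset.sum_Ico_eq_sub yt (by omega)]
      -- apply the counting lemma
      have hNva : S a = (NS a : ℚ) / D := hNS a
      have hNvb : S (b + 1) = (NS (b + 1) : ℚ) / D := hNS (b + 1)
      have hNuv : NS a ≤ NS (b + 1) := by
        have := hSmono a (b + 1) (by omega)
        rw [hNva, hNvb, div_le_div_iff_of_pos_right hDQ] at this
        exact_mod_cast this
      have hvk : NS (b + 1) ≤ k * D := by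
        have h1 : S (b + 1) ≤ (k : ℚ) := by
          rw [← hSm]; exact hSmono _ _ (by omega)
        rw [hNvb, div_le_iff₀ hDQ] at h1
        exact_mod_cast h1
      have hsubset : (Finset.range D).filter (fun t : ℕ => ∃ j ∈ Finset.range k,
          (NS a : ℚ) / D < (j : ℚ) + ((t : ℚ) + 1) / D ∧
          (j : ℚ) + ((t : ℚ) + 1) / D ≤ (NS (b + 1) : ℚ) / D) ⊆
          (Finset.range D).filter (fun t : ℕ => ∃ c ∈ Wc t, rank i c ≤ r) := by
        intro t ht
        rw [Finset.mem_filter] at ht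
        obtain ⟨htD, j, hj, h1, h2⟩ := ht
        rw [Finset.mem_filter]
        refine ⟨htD, ?_⟩
        set z := (j : ℚ) + ((t : ℚ) + 1) / D with hz
        obtain ⟨hz0, hzk⟩ := hz0k t htD j hj
        rw [← hNva] at h1
        rw [← hNvb] at h2
        have hloc := hNqloc z a (b + 1) hz0 hzk h1 h2
        have hqm : Nq z < m := (hNq z hz0 hzk).1
        refine ⟨d (Nq z), ?_, ?_⟩
        · rw [hWc, Finset.mem_image]
          exact ⟨j, hj, rfl⟩
        · have : Nq z ∈ B := hconv (Nq z) hloc.1 (by omega)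
          rw [hB, Finset.mem_filter] at this
          exact this.2
      have hcount := countlem hD (NS a) (NS (b + 1)) hvk
      have hDx : (D : ℚ) * x i r ≤ (min D (NS (b + 1) - NS a) : ℕ) := by
        have hc1 : (D : ℚ) * x i r ≤ D := by
          nlinarith [(hx i r).2, hDQ]
        have hc2 : (D : ℚ) * x i r ≤ (NS (b + 1) : ℚ) - NS a := by
          have := hcons i r
          rw [← hT, hyT, hNva, hNvb] at this
          have h3 : (D : ℚ) * x i r ≤ D * ((NS (b + 1) : ℚ) / D - (NS a : ℚ) / D) := by
            apply mul_le_mul_of_nonneg_left this (le_of_lt hDQ)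
          calc (D : ℚ) * x i r ≤ D * ((NS (b + 1) : ℚ) / D - (NS a : ℚ) / D) := h3
            _ = (NS (b + 1) : ℚ) - NS a := by field_simp
        rw [Nat.cast_min, Nat.cast_sub hNuv]
        exact le_min hc1 hc2
      calc (D : ℚ) * x i r ≤ (min D (NS (b + 1) - NS a) : ℕ) := hDx
        _ ≤ (((Finset.range D).filter (fun t : ℕ => ∃ j ∈ Finset.range k,
              (NS a : ℚ) / D < (j : ℚ) + ((t : ℚ) + 1) / D ∧
              (j : ℚ) + ((t : ℚ) + 1) / D ≤ (NS (b + 1) : ℚ) / D)).card : ℕ) := by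
            exact_mod_cast hcount
        _ ≤ (((Finset.range D).filter
              (fun t : ℕ => ∃ c ∈ Wc t, rank i c ≤ r)).card : ℕ) := by
            exact_mod_cast Finset.card_le_card hsubset
        _ = ∑ t ∈ Finset.range D, (if ∃ c ∈ Wc t, rank i c ≤ r then (1 : ℚ) else 0) := by
            rw [Finset.sum_boole]
  -- assemble
  have hmain : (D : ℚ) * (∑ i, ∑ r, w' r * x i r) ≤
      ∑ t ∈ Finset.range D, ∑ i, (Wc t).sup' (hWne t) (fun c => w (rank i c)) := by
    have hrhs : ∀ t : ℕ, ∑ i, (Wc t).sup' (hWne t) (fun c => w (rank i c))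
        = ∑ i, ∑ r, w' r * (if ∃ c ∈ Wc t, rank i c ≤ r then (1 : ℚ) else 0) :=
      fun t => Finset.sum_congr rfl
        (fun i _ => (commval rank w w' hwmono hw' (Wc t) (hWne t) i).symm)
    calc (D : ℚ) * (∑ i, ∑ r, w' r * x i r)
        = ∑ i, ∑ r, w' r * ((D : ℚ) * x i r) := by
          rw [Finset.mul_sum]
          refine Finset.sum_congr rfl fun i _ => ?_
          rw [Finset.mul_sum]
          refine Finset.sum_congr rfl fun r _ => ?_
          ring
      _ ≤ ∑ i, ∑ r, w' r * (∑ t ∈ Finset.range D,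
            (if ∃ c ∈ Wc t, rank i c ≤ r then (1 : ℚ) else 0)) := by
          refine Finset.sum_le_sum fun i _ => ?_
          refine Finset.sum_le_sum fun r _ => ?_
          exact mul_le_mul_of_nonneg_left (hperIR i r) (hw'nonneg r)
      _ = ∑ i, ∑ r, ∑ t ∈ Finset.range D,
            w' r * (if ∃ c ∈ Wc t, rank i c ≤ r then (1 : ℚ) else 0) := by
          refine Finset.sum_congr rfl fun i _ => ?_
          refine Finset.sum_congr rfl fun r _ => ?_
          rw [Finset.mul_sum]
      _ = ∑ i, ∑ t ∈ Finset.range D, ∑ r,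
            w' r * (if ∃ c ∈ Wc t, rank i c ≤ r then (1 : ℚ) else 0) :=
          Finset.sum_congr rfl (fun i _ => Finset.sum_comm)
      _ = ∑ t ∈ Finset.range D, ∑ i, ∑ r,
            w' r * (if ∃ c ∈ Wc t, rank i c ≤ r then (1 : ℚ) else 0) :=
          Finset.sum_comm
      _ = ∑ t ∈ Finset.range D, ∑ i, (Wc t).sup' (hWne t) (fun c => w (rank i c)) :=
          Finset.sum_congr rfl (fun t _ => (hrhs t).symm)
  have hne : (Finset.range D).Nonempty := Finset.nonempty_range_iff.mpr (by omega)
  have hsumle : ∑ _t ∈ Finset.range D, (∑ i, ∑ r, w' r * x i r) ≤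
      ∑ t ∈ Finset.range D, ∑ i, (Wc t).sup' (hWne t) (fun c => w (rank i c)) := by
    rw [Finset.sum_const, Finset.card_range, nsmul_eq_mul]
    exact hmain
  obtain ⟨t, ht, hle⟩ := Finset.exists_le_of_sum_le hne hsumle
  exact ⟨Wc t, hWne t, hcard t ht, hle⟩

/-- For a single-peaked profile of rank functions, the LP relaxation of
(CC-IP) has an optimal solution that is integral; in particular its optimal
value equals the maximum Chamberlin–Courant value
`∑_i max {w (rank i c) : c ∈ W}` over committees `W` of size `k`. -/
theorem stmt10 {n m k : ℕ} (hk0 : 0 < k) (hk : k ≤ m)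
    (rank : Fin n → Fin m → Fin m)
    (hSP : ∃ pos : Equiv.Perm (Fin m), ∀ (i : Fin n) (r : Fin m) (a b c : Fin m),
      pos a < pos b → pos b < pos c →
      rank i a ≤ r → rank i c ≤ r → rank i b ≤ r)
    (w : Fin m → ℚ) (hwmono : ∀ r s : Fin m, r ≤ s → w s ≤ w r)
    (hwnonneg : ∀ r, 0 ≤ w r)
    (w' : Fin m → ℚ)
    (hw' : ∀ r : Fin m,
      w' r = w r - (if h : (r : ℕ) + 1 < m then w ⟨(r : ℕ) + 1, h⟩ else 0)) :
    ∃ q : ℚ,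
      IsGreatest {val : ℚ | ∃ (y : Fin m → ℚ) (x : Fin n → Fin m → ℚ),
        (∀ c, 0 ≤ y c ∧ y c ≤ 1) ∧
        (∀ i r, 0 ≤ x i r ∧ x i r ≤ 1) ∧
        (∑ c, y c) = (k : ℚ) ∧
        (∀ i r, x i r ≤ ∑ c ∈ Finset.univ.filter (fun c => rank i c ≤ r), y c) ∧
        val = ∑ i, ∑ r, w' r * x i r} q ∧
      (∃ (y : Fin m → ℚ) (x : Fin n → Fin m → ℚ),
        (∀ c, y c = 0 ∨ y c = 1) ∧
        (∀ i r, x i r = 0 ∨ x i r = 1) ∧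
        (∑ c, y c) = (k : ℚ) ∧
        (∀ i r, x i r ≤ ∑ c ∈ Finset.univ.filter (fun c => rank i c ≤ r), y c) ∧
        q = ∑ i, ∑ r, w' r * x i r) ∧
      IsGreatest {val : ℚ | ∃ (W : Finset (Fin m)) (hW : W.Nonempty),
        W.card = k ∧
        val = ∑ i, W.sup' hW (fun c => w (rank i c))} q := by
  obtain ⟨pos, hSPp⟩ := hSP
  classical
  -- best committee
  have h𝒞ne : (Finset.powersetCard k (Finset.univ : Finset (Fin m))).Nonempty :=
    Finset.powersetCard_nonempty.mpr (by simpa using hk)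
  obtain ⟨Wst, hWst𝒞, hWstmax⟩ := Finset.exists_max_image
    (Finset.powersetCard k (Finset.univ : Finset (Fin m)))
    (fun W : Finset (Fin m) =>
      if h : W.Nonempty then ∑ i, W.sup' h (fun c => w (rank i c)) else 0) h𝒞ne
  have hWstcard : Wst.card = k := Finset.mem_powersetCard_univ.mp hWst𝒞
  have hWstne : Wst.Nonempty := Finset.card_pos.mp (hWstcard ▸ hk0)
  set M := ∑ i, Wst.sup' hWstne (fun c => w (rank i c)) with hM
  have hub : ∀ (W : Finset (Fin m)) (hW : W.Nonempty), W.card = k →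
      ∑ i, W.sup' hW (fun c => w (rank i c)) ≤ M := by
    intro W hW hcard
    have h := hWstmax W (Finset.mem_powersetCard_univ.mpr hcard)
    rw [dif_pos hW, dif_pos hWstne] at h
    exact h
  -- integral solution from best committee
  set y0 : Fin m → ℚ := fun c => if c ∈ Wst then 1 else 0 with hy0
  set x0 : Fin n → Fin m → ℚ := fun i r =>
    if ∃ c ∈ Wst, rank i c ≤ r then 1 else 0 with hx0
  have hy001 : ∀ c, y0 c = 0 ∨ y0 c = 1 := by
    intro c; by_cases h : c ∈ Wst
    · right; simp [hy0, h]
    · left; simp [hy0, h]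
  have hx001 : ∀ i r, x0 i r = 0 ∨ x0 i r = 1 := by
    intro i r; by_cases h : ∃ c ∈ Wst, rank i c ≤ r
    · right; simp only [hx0]; rw [if_pos h]
    · left; simp only [hx0]; rw [if_neg h]
  have hy0b : ∀ c, 0 ≤ y0 c ∧ y0 c ≤ 1 := by
    intro c; rcases hy001 c with h | h <;> rw [h] <;> norm_num
  have hx0b : ∀ i r, 0 ≤ x0 i r ∧ x0 i r ≤ 1 := by
    intro i r; rcases hx001 i r with h | h <;> rw [h] <;> norm_num
  have hy0sum : (∑ c, y0 c) = (k : ℚ) := by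
    rw [hy0]
    rw [Finset.sum_boole]
    rw [Finset.filter_mem_eq_inter, Finset.univ_inter, hWstcard]
  have hcons0 : ∀ i r, x0 i r ≤ ∑ c ∈ Finset.univ.filter (fun c => rank i c ≤ r), y0 c := by
    intro i r
    have hnn : ∀ c ∈ Finset.univ.filter (fun c => rank i c ≤ r), 0 ≤ y0 c :=
      fun c _ => (hy0b c).1
    by_cases h : ∃ c ∈ Wst, rank i c ≤ r
    case pos =>
      have hx1 : x0 i r = 1 := by simp only [hx0]; rw [if_pos h]
      rw [hx1]
      obtain ⟨c0, hc0W, hc0r⟩ := h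
      have hmem : c0 ∈ Finset.univ.filter (fun c => rank i c ≤ r) := by
        simp [hc0r]
      have h1 : y0 c0 = 1 := by simp [hy0, hc0W]
      calc (1 : ℚ) = y0 c0 := h1.symm
        _ ≤ _ := Finset.single_le_sum hnn hmem
    case neg =>
      have hx1 : x0 i r = 0 := by simp only [hx0]; rw [if_neg h]
      rw [hx1]
      exact Finset.sum_nonneg hnn
  have hval0 : M = ∑ i, ∑ r, w' r * x0 i r := by
    rw [hM]
    refine Finset.sum_congr rfl fun i _ => ?_
    exact (commval rank w w' hwmono hw' Wst hWstne i).symm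
  refine ⟨M, ⟨⟨y0, x0, hy0b, hx0b, hy0sum, hcons0, hval0⟩, ?_⟩,
    ⟨y0, x0, hy001, hx001, hy0sum, hcons0, hval0⟩,
    ⟨⟨Wst, hWstne, hWstcard, rfl⟩, ?_⟩⟩
  · rintro val ⟨y, x, hy, hx, hsum, hcons, rfl⟩
    obtain ⟨W, hW, hcard, hle⟩ := keylem hk0 hk rank pos hSPp w hwmono hwnonneg w' hw'
      y x hy hx hsum hcons
    exact le_trans hle (hub W hW hcard)
  · rintro val ⟨W, hW, hcard, rfl⟩
    exact hub W hW hcard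
end

section
/- Let C be a finite set of m candidates, N = {1,…,n} voters with rank functions rank_i : C → {1,…,m}, let k ≤ m, let α_1 ≥ … ≥ α_k ≥ 0 and w_1 ≥ … ≥ w_m ≥ 0 be rationals, and set w'_r = w_r − w_{r+1} for r < m and w'_m = w_m. Then the maximum of ∑_{i∈N} ∑_{ℓ=1}^{k} ∑_{r=1}^{m} α_ℓ·w'_r·x_{i,ℓ,r} over all binary y ∈ {0,1}^C and x ∈ {0,1}^{N×{1,…,k}×{1,…,m}} satisfying ∑_{c∈C} y_c = k and ∑_{ℓ=1}^{k} x_{i,ℓ,r} ≤ ∑_{c : rank_i(c) ≤ r} y_c for all i ∈ N and r ∈ {1,…,m}, equals the maximum over all committees W ⊆ C with |W| = k of the OWA value ∑_{i∈N} ∑_{ℓ=1}^{k} α_ℓ·w_{ρ_i(ℓ)}, where ρ_i(1) ≤ ρ_i(2) ≤ … ≤ ρ_i(k) is the multiset {rank_i(c) : c ∈ W} sorted in non-decreasing order. -/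
/-!
Telescoping gives `w s = ∑_{r ≥ s} w' r`, so a committee `W` whose ranks for voter `i` sorted
increasingly are `ρ i` is encoded by `y = 𝟙_W` and `x i ℓ r = [ρ i ℓ ≤ r]`, with the same value.
Conversely, a feasible `y` is the indicator of a committee `W`. For each voter `i` and rank `r`,
the positions `ℓ` with `x i ℓ r = 1` are at most as many as those of the initial segment
`{ℓ | ρ i ℓ ≤ r}`; as `α` is non-increasing and nonnegative, their `α`-weight is at most that of
the segment. Weighting by `w' r ≥ 0` and summing bounds the value of `(y, x)` by that of `W`.
-/

open Finset

theorem exists_isGreatest_of_subset_of_forall_exists_le {α : Type*} [LinearOrder α]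
    {S T : Set α} (hT : T.Finite) (hTne : T.Nonempty) (hTS : T ⊆ S)
    (hST : ∀ a ∈ S, ∃ b ∈ T, a ≤ b) : ∃ q, IsGreatest S q ∧ IsGreatest T q := by
  obtain ⟨q, hq, hqT⟩ := Set.exists_max_image T id hT hTne
  refine ⟨q, ⟨hTS hq, fun a ha => ?_⟩, hq, hqT⟩
  obtain ⟨b, hb, hab⟩ := hST a ha
  exact hab.trans (hqT b hb)

theorem exists_finset_eq_ite_of_zero_or_one {ι R : Type*} [Fintype ι] [DecidableEq ι]
    [Zero R] [One R] {z : ι → R} (hz : ∀ i, z i = 0 ∨ z i = 1) :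
    ∃ S : Finset ι, z = fun i => if i ∈ S then 1 else 0 := by
  classical
  refine ⟨univ.filter (z · = 1), funext fun i => ?_⟩
  rcases hz i with h | h <;> simp [h]

theorem Multiset.exists_monotone_fin_map_eq {β : Type*} [LinearOrder β] {k : ℕ}
    (s : Multiset β) (hs : Multiset.card s = k) :
    ∃ f : Fin k → β, Monotone f ∧ (univ : Finset (Fin k)).val.map f = s := by
  subst hs
  set l := s.sort (· ≤ ·)
  have hl : l.length = Multiset.card s := s.length_sort (· ≤ ·)
  refine ⟨fun i => l.get (Fin.cast hl.symm i), fun i j hij => ?_, ?_⟩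
  · exact (s.pairwise_sort _).rel_get_of_le hij
  · have : List.ofFn (fun i => l.get (Fin.cast hl.symm i)) = l :=
      List.ext_get (by simp [hl]) fun j _ _ => by simp
    rw [Fin.univ_val_map, this, Multiset.sort_eq]

theorem exists_monotone_map_eq_of_card_eq {ι C β : Type*} [LinearOrder β] {k : ℕ}
    (rank : ι → C → β) (W : Finset C) (hW : #W = k) :
    ∃ ρ : ι → Fin k → β, (∀ i, Monotone (ρ i)) ∧
      ∀ i, W.val.map (rank i) = (univ : Finset (Fin k)).val.map (ρ i) := by
  choose ρ hρ hWρ using fun i =>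
    (W.val.map (rank i)).exists_monotone_fin_map_eq (by simpa using hW)
  exact ⟨ρ, hρ, fun i => (hWρ i).symm⟩

theorem card_filter_eq_of_map_eq {C ι β : Type*} [Fintype ι] {f : C → β} {g : ι → β}
    {W : Finset C} (h : W.val.map f = (univ : Finset ι).val.map g) (p : β → Prop)
    [DecidablePred p] : #(W.filter fun c => p (f c)) = #(univ.filter fun i => p (g i)) := by
  simpa [Multiset.countP_map, ← Finset.filter_val, Finset.card_val]
    using congrArg (Multiset.countP p) h

theorem sum_filter_le_ite_mem_eq_card_of_map_eq {C ι β R : Type*} [Fintype C] [DecidableEq C]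
    [Fintype ι] [LinearOrder β] [AddCommMonoidWithOne R] {f : C → β} {g : ι → β}
    {W : Finset C} (h : W.val.map f = (univ : Finset ι).val.map g) (r : β) :
    ∑ c ∈ univ.filter (fun c => f c ≤ r), (if c ∈ W then (1 : R) else 0)
      = #(univ.filter fun i => g i ≤ r) := by
  rw [sum_boole, filter_filter, ← card_filter_eq_of_map_eq h (· ≤ r)]
  congr 2
  ext c
  simp [and_comm]

theorem sum_ite_le_eq_of_forall_eq_sub_succ {G : Type*} [AddCommGroup G] {m : ℕ}
    (w w' : Fin m → G)
    (hw' : ∀ r : Fin m,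
      w' r = w r - (if h : (r : ℕ) + 1 < m then w ⟨(r : ℕ) + 1, h⟩ else 0))
    (s : Fin m) : ∑ r, (if s ≤ r then w' r else 0) = w s := by
  set v : ℕ → G := fun j => if h : j < m then w ⟨j, h⟩ else 0
  have hv : ∀ r : Fin m, w' r = -(v (r + 1) - v r) := fun r => by simp [v, hw', r.isLt]
  calc ∑ r, (if s ≤ r then w' r else 0)
      = ∑ j ∈ range m, if (s : ℕ) ≤ j then -(v (j + 1) - v j) else 0 := by
        rw [← Fin.sum_univ_eq_sum_range]; simp only [hv, Fin.le_def]
    _ = -∑ j ∈ Ico (s : ℕ) m, (v (j + 1) - v j) := by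
        rw [← sum_filter, sum_neg_distrib]; congr 2; ext j; simp [and_comm]
    _ = w s := by rw [sum_Ico_sub _ s.isLt.le]; simp [v]

theorem sub_succ_nonneg_of_antitone {R : Type*} [AddCommGroup R] [PartialOrder R]
    [IsOrderedAddMonoid R] {m : ℕ} {w w' : Fin m → R} (hw : Antitone w) (hw0 : ∀ r, 0 ≤ w r)
    (hw' : ∀ r : Fin m,
      w' r = w r - (if h : (r : ℕ) + 1 < m then w ⟨(r : ℕ) + 1, h⟩ else 0))
    (r : Fin m) : 0 ≤ w' r := by
  rw [hw' r]
  split_ifs with h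
  · exact sub_nonneg.2 (hw (Fin.le_def.2 (Nat.le_succ _)))
  · simpa using hw0 r

theorem sum_mul_eq_sum_sum_mul_ite {ι R : Type*} [Fintype ι] [CommRing R] {m : ℕ}
    (w w' : Fin m → R)
    (hw' : ∀ r : Fin m,
      w' r = w r - (if h : (r : ℕ) + 1 < m then w ⟨(r : ℕ) + 1, h⟩ else 0))
    (α : ι → R) (ρ : ι → Fin m) :
    ∑ ℓ, α ℓ * w (ρ ℓ) = ∑ ℓ, ∑ r, α ℓ * w' r * if ρ ℓ ≤ r then 1 else 0 := by
  refine sum_congr rfl fun ℓ _ => ?_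
  rw [← sum_ite_le_eq_of_forall_eq_sub_succ w w' hw' (ρ ℓ), mul_sum]
  exact sum_congr rfl fun r _ => by split_ifs <;> ring

theorem sum_le_sum_of_isLowerSet_of_card_le {ι R : Type*} [LinearOrder ι] [AddCommMonoid R]
    [PartialOrder R] [IsOrderedAddMonoid R] {α : ι → R} (hα : Antitone α)
    (hα0 : ∀ i, 0 ≤ α i) {S I : Finset ι} (hI : IsLowerSet (I : Set ι)) (h : #S ≤ #I) :
    ∑ i ∈ S, α i ≤ ∑ i ∈ I, α i := by
  classical
  suffices ∑ i ∈ S \ I, α i ≤ ∑ i ∈ I \ S, α i by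
    rw [← sum_inter_add_sum_sdiff S I, ← sum_inter_add_sum_sdiff I S, inter_comm]
    exact add_le_add_right this _
  obtain hSI | hne := (S \ I).eq_empty_or_nonempty
  · rw [hSI, sum_empty]; exact sum_nonneg fun i _ => hα0 i
  set b := (S \ I).min' hne
  have hcard : #(S \ I) ≤ #(I \ S) := by
    have := card_sdiff_add_card_inter S I
    have := card_sdiff_add_card_inter I S
    rw [inter_comm] at this
    omega
  have hIb : ∀ i ∈ I \ S, i ≤ b := fun i hi => le_of_not_ge fun hbi =>
    (mem_sdiff.1 ((S \ I).min'_mem hne)).2 (hI hbi (mem_sdiff.1 hi).1)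
  calc ∑ i ∈ S \ I, α i ≤ #(S \ I) • α b :=
        sum_le_card_nsmul _ _ _ fun i hi => hα ((S \ I).min'_le i hi)
    _ ≤ #(I \ S) • α b := nsmul_le_nsmul_left (hα0 b) hcard
    _ ≤ ∑ i ∈ I \ S, α i := card_nsmul_le_sum _ _ _ fun i hi => hα (hIb i hi)

theorem sum_mul_le_sum_of_isLowerSet {ι R : Type*} [Fintype ι] [LinearOrder ι] [CommRing R]
    [LinearOrder R] [IsStrictOrderedRing R] {α : ι → R} (hα : Antitone α) (hα0 : ∀ i, 0 ≤ α i)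
    {z : ι → R} (hz : ∀ i, z i = 0 ∨ z i = 1) {I : Finset ι} (hI : IsLowerSet (I : Set ι))
    (h : ∑ i, z i ≤ #I) : ∑ i, α i * z i ≤ ∑ i ∈ I, α i := by
  classical
  obtain ⟨S, rfl⟩ := exists_finset_eq_ite_of_zero_or_one hz
  simp only [sum_boole, mul_ite, mul_one, mul_zero, sum_ite_mem, univ_inter, filter_univ_mem]
    at h ⊢
  exact sum_le_sum_of_isLowerSet_of_card_le hα hα0 hI (by exact_mod_cast h)

theorem sum_sum_mul_le_sum_sum_mul_ite {ι β R : Type*} [Fintype ι] [LinearOrder ι] [Fintype β]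
    [LinearOrder β] [CommRing R] [LinearOrder R] [IsStrictOrderedRing R] {α : ι → R}
    (hα : Antitone α) (hα0 : ∀ i, 0 ≤ α i) {v : β → R} (hv0 : ∀ r, 0 ≤ v r) {ρ : ι → β}
    (hρ : Monotone ρ) {x : ι → β → R} (hx : ∀ ℓ r, x ℓ r = 0 ∨ x ℓ r = 1)
    (hxρ : ∀ r, ∑ ℓ, x ℓ r ≤ #(univ.filter fun ℓ => ρ ℓ ≤ r)) :
    ∑ ℓ, ∑ r, α ℓ * v r * x ℓ r ≤ ∑ ℓ, ∑ r, α ℓ * v r * if ρ ℓ ≤ r then 1 else 0 := by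
  rw [sum_comm]
  conv_rhs => rw [sum_comm]
  refine sum_le_sum fun r _ => ?_
  have hI : IsLowerSet ((univ.filter fun ℓ => ρ ℓ ≤ r : Finset ι) : Set ι) := fun a b hba ha => by
    simp only [coe_filter, mem_univ, true_and, Set.mem_ofPred_eq] at ha ⊢
    exact (hρ hba).trans ha
  calc ∑ ℓ, α ℓ * v r * x ℓ r = v r * ∑ ℓ, α ℓ * x ℓ r := by
        rw [mul_sum]; exact sum_congr rfl fun ℓ _ => by ring
    _ ≤ v r * ∑ ℓ ∈ univ.filter fun ℓ => ρ ℓ ≤ r, α ℓ :=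
        mul_le_mul_of_nonneg_left (sum_mul_le_sum_of_isLowerSet hα hα0 (hx · r) hI (hxρ r)) (hv0 r)
    _ = ∑ ℓ, α ℓ * v r * if ρ ℓ ≤ r then 1 else 0 := by
        rw [sum_filter, mul_sum]; exact sum_congr rfl fun ℓ _ => by split_ifs <;> ring

/-- The integer program (OWA-IP) computes an optimal committee under the
OWA-based rule given by a non-increasing nonnegative OWA vector `α` and a
non-increasing nonnegative scoring vector `w` (with `w' r = w r - w (r+1)`,
and `w'` of the last rank equal to `w` there).  The value of a committee
`W` of size `k` is `∑_i ∑_ℓ α_ℓ · w (ρ i ℓ)`, where `ρ i` enumerates the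
multiset of ranks `{rank i c : c ∈ W}` in non-decreasing order. -/
theorem stmt11 {n m k : ℕ} (hk : k ≤ m)
    (rank : Fin n → Fin m → Fin m)
    (α : Fin k → ℚ) (hαmono : ∀ i j : Fin k, i ≤ j → α j ≤ α i)
    (hαnonneg : ∀ ℓ, 0 ≤ α ℓ)
    (w : Fin m → ℚ) (hwmono : ∀ r s : Fin m, r ≤ s → w s ≤ w r)
    (hwnonneg : ∀ r, 0 ≤ w r)
    (w' : Fin m → ℚ)
    (hw' : ∀ r : Fin m,
      w' r = w r - (if h : (r : ℕ) + 1 < m then w ⟨(r : ℕ) + 1, h⟩ else 0)) :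
    ∃ q : ℚ,
      IsGreatest {val : ℚ | ∃ (y : Fin m → ℚ) (x : Fin n → Fin k → Fin m → ℚ),
        (∀ c, y c = 0 ∨ y c = 1) ∧
        (∀ i ℓ r, x i ℓ r = 0 ∨ x i ℓ r = 1) ∧
        (∑ c, y c) = (k : ℚ) ∧
        (∀ i r, (∑ ℓ, x i ℓ r) ≤
          ∑ c ∈ Finset.univ.filter (fun c => rank i c ≤ r), y c) ∧
        val = ∑ i, ∑ ℓ, ∑ r, α ℓ * w' r * x i ℓ r} q ∧
      IsGreatest {val : ℚ | ∃ (W : Finset (Fin m)) (ρ : Fin n → Fin k → Fin m),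
        W.card = k ∧
        (∀ i, Monotone (ρ i)) ∧
        (∀ i, W.val.map (rank i) = (Finset.univ : Finset (Fin k)).val.map (ρ i)) ∧
        val = ∑ i, ∑ ℓ, α ℓ * w (ρ i ℓ)} q := by
  refine exists_isGreatest_of_subset_of_forall_exists_le ?_ ?_ ?_ ?_
  · refine (Set.finite_range fun p : Finset (Fin m) × (Fin n → Fin k → Fin m) =>
      ∑ i, ∑ ℓ, α ℓ * w (p.2 i ℓ)).subset ?_
    rintro _ ⟨W, ρ, -, -, -, rfl⟩
    exact ⟨(W, ρ), rfl⟩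
  · obtain ⟨W, -, hW⟩ := exists_subset_card_eq (s := (univ : Finset (Fin m))) (by simpa using hk)
    obtain ⟨ρ, hρ, hWρ⟩ := exists_monotone_map_eq_of_card_eq rank W hW
    exact ⟨_, W, ρ, hW, hρ, hWρ, rfl⟩
  · rintro _ ⟨W, ρ, hW, -, hWρ, rfl⟩
    refine ⟨fun c => if c ∈ W then 1 else 0, fun i ℓ r => if ρ i ℓ ≤ r then 1 else 0,
      fun c => ?_, fun i ℓ r => ?_, by simp [hW], fun i r => ?_,
      by simp only [sum_mul_eq_sum_sum_mul_ite w w' hw']⟩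
    · dsimp only; split_ifs <;> simp
    · dsimp only; split_ifs <;> simp
    · rw [sum_filter_le_ite_mem_eq_card_of_map_eq (hWρ i), sum_boole]
  · rintro _ ⟨y, x, hy, hx, hyk, hxy, rfl⟩
    obtain ⟨W, rfl⟩ := exists_finset_eq_ite_of_zero_or_one hy
    have hW : #W = k := by simpa [sum_boole] using hyk
    obtain ⟨ρ, hρ, hWρ⟩ := exists_monotone_map_eq_of_card_eq rank W hW
    refine ⟨_, ⟨W, ρ, hW, hρ, hWρ, rfl⟩, sum_le_sum fun i _ => ?_⟩
    rw [sum_mul_eq_sum_sum_mul_ite w w' hw']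
    exact sum_sum_mul_le_sum_sum_mul_ite hαmono hαnonneg
      (sub_succ_nonneg_of_antitone hwmono hwnonneg hw') (hρ i) (hx i)
      fun r => (hxy i r).trans_eq (sum_filter_le_ite_mem_eq_card_of_map_eq (hWρ i) r)
end

section
/- Let C be a finite set of m candidates, N = {1,…,n} voters with rank functions rank_i : C → {1,…,m}, and k ≥ 1. Consider the matrix A with rows indexed by (N × {1,…,m}) ⊎ {⋆} and columns indexed by (N × {1,…,k} × {1,…,m}) ⊎ C, defined by: A[(i,r), (j,ℓ,s)] = −1 if j = i and s = r, and 0 otherwise; A[(i,r), c] = 1 if rank_i(c) ≤ r and 0 otherwise; A[⋆, (j,ℓ,s)] = 0; and A[⋆, c] = 1 for all c ∈ C. If the profile is single-peaked, i.e., there exists a linear order ◁ on C such that every set {c ∈ C : rank_i(c) ≤ r} is an interval of ◁, then A is totally unimodular. -/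
section Aux

private lemma memS_iff {x : ℚ} : x ∈ ({-1, 0, 1} : Set ℚ) ↔ x = -1 ∨ x = 0 ∨ x = 1 := by
  simp [Set.mem_insert_iff]

private lemma neg_one_memS : (-1 : ℚ) ∈ ({-1, 0, 1} : Set ℚ) := by simp
private lemma zero_memS : (0 : ℚ) ∈ ({-1, 0, 1} : Set ℚ) := by simp
private lemma one_memS : (1 : ℚ) ∈ ({-1, 0, 1} : Set ℚ) := by simp

private lemma neg_memS {x : ℚ} (hx : x ∈ ({-1, 0, 1} : Set ℚ)) :
    -x ∈ ({-1, 0, 1} : Set ℚ) := by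
  rw [memS_iff] at hx ⊢
  rcases hx with h | h | h <;> subst h <;> norm_num

private lemma mul_memS {x y : ℚ} (hx : x ∈ ({-1, 0, 1} : Set ℚ))
    (hy : y ∈ ({-1, 0, 1} : Set ℚ)) : x * y ∈ ({-1, 0, 1} : Set ℚ) := by
  rw [memS_iff] at hx hy ⊢
  rcases hx with h | h | h <;> rcases hy with h' | h' | h' <;> subst h <;> subst h' <;> norm_num

private lemma pow_neg_one_memS (e : ℕ) : ((-1 : ℚ)) ^ e ∈ ({-1, 0, 1} : Set ℚ) := by
  rcases Nat.even_or_odd e with h | h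
  · rw [h.neg_one_pow]; exact one_memS
  · rw [h.neg_one_pow]; exact neg_one_memS

/-- A square matrix each of whose rows has entries in `{-1,0,1}` with at most one `+1`
and at most one `-1` has determinant in `{-1,0,1}`. -/
private lemma det_rowPattern : ∀ (p : ℕ) (M : Matrix (Fin p) (Fin p) ℚ),
    (∀ r c, M r c ∈ ({-1, 0, 1} : Set ℚ)) →
    (∀ r c c', M r c = 1 → M r c' = 1 → c = c') →
    (∀ r c c', M r c = -1 → M r c' = -1 → c = c') →
    M.det ∈ ({-1, 0, 1} : Set ℚ) := by
  intro p
  induction p with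
  | zero =>
    intro M _ _ _
    rw [Matrix.det_fin_zero]; exact one_memS
  | succ p IH =>
    intro M hval hone hneg
    by_cases hall : ∀ r, (∃ c, M r c = 1) ∧ (∃ c, M r c = -1)
    · -- every row has a +1 and a -1, hence all row sums vanish and the determinant is 0
      have hdet : M.det = 0 := by
        rw [← Matrix.exists_mulVec_eq_zero_iff]
        refine ⟨fun _ => 1, ?_, ?_⟩
        · intro h
          have := congrFun h 0
          norm_num at this
        · funext r
          obtain ⟨⟨cp, hcp⟩, ⟨cm, hcm⟩⟩ := hall r
          have hne : cp ≠ cm := by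
            intro h; rw [h, hcm] at hcp; norm_num at hcp
          have hrow : ∀ c, M r c
              = (if c = cp then (1 : ℚ) else 0) + (if c = cm then (-1 : ℚ) else 0) := by
            intro c
            by_cases h1 : c = cp
            · subst h1
              rw [if_pos rfl, if_neg hne, hcp]; ring
            · by_cases h2 : c = cm
              · subst h2
                rw [if_neg h1, if_pos rfl, hcm]; ring
              · rw [if_neg h1, if_neg h2]
                rcases memS_iff.mp (hval r c) with h | h | h
                · exact absurd (hneg r c cm h hcm) h2
                · rw [h]; ring
                · exact absurd (hone r c cp h hcp) h1
          show ∑ c, M r c * 1 = 0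
          calc ∑ c, M r c * 1
              = ∑ c, ((if c = cp then (1 : ℚ) else 0) + (if c = cm then (-1 : ℚ) else 0)) := by
                refine Finset.sum_congr rfl fun c _ => ?_
                rw [mul_one]; exact hrow c
            _ = 0 := by
                rw [Finset.sum_add_distrib, Finset.sum_ite_eq', Finset.sum_ite_eq']
                simp
      rw [hdet]; exact zero_memS
    · push_neg at hall
      obtain ⟨r, hr⟩ := hall
      by_cases hz : ∀ c, M r c = 0
      · rw [Matrix.det_eq_zero_of_row_eq_zero r hz]; exact zero_memS
      · push_neg at hz
        obtain ⟨c0, hc0⟩ := hz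
        -- c0 is the unique nonzero entry of row r
        have huniq : ∀ c, c ≠ c0 → M r c = 0 := by
          intro c hc
          by_contra hcz
          rcases memS_iff.mp (hval r c) with h | h | h
          · rcases memS_iff.mp (hval r c0) with h' | h' | h'
            · exact hc (hneg r c c0 h h')
            · exact hc0 h'
            · exact (hr ⟨c0, h'⟩) c h
          · exact hcz h
          · rcases memS_iff.mp (hval r c0) with h' | h' | h'
            · exact (hr ⟨c, h⟩) c0 h'
            · exact hc0 h'
            · exact hc (hone r c c0 h h')
        rw [Matrix.det_succ_row M r, Finset.sum_eq_single c0]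
        · refine mul_memS (mul_memS (pow_neg_one_memS _) (hval r c0)) ?_
          refine IH _ (fun a b => hval _ _) ?_ ?_
          · intro a b b' h h'
            exact Fin.succAbove_right_injective (hone _ _ _ h h')
          · intro a b b' h h'
            exact Fin.succAbove_right_injective (hneg _ _ _ h h')
        · intro c _ hc
          rw [huniq c hc]; ring
        · intro h
          exact absurd (Finset.mem_univ c0) h

/-- A square `0/1` matrix whose rows are "convex" (consecutive ones) has determinant
in `{-1,0,1}`. -/
private lemma det_convex (p : ℕ) (M : Matrix (Fin p) (Fin p) ℚ)
    (hval : ∀ r c, M r c = 0 ∨ M r c = 1)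
    (hconv : ∀ r (t1 t2 t3 : Fin p), t1 ≤ t2 → t2 ≤ t3 →
      M r t1 = 1 → M r t3 = 1 → M r t2 = 1) :
    M.det ∈ ({-1, 0, 1} : Set ℚ) := by
  classical
  set D : Matrix (Fin p) (Fin p) ℚ :=
    Matrix.of fun s t => if s = t then (1 : ℚ) else if (s : ℕ) + 1 = (t : ℕ) then -1 else 0
    with hD
  have hDtri : D.BlockTriangular id := by
    intro i j hij
    have hij' : (j : ℕ) < (i : ℕ) := hij
    show (if i = j then (1 : ℚ) else if (i : ℕ) + 1 = (j : ℕ) then -1 else 0) = 0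
    rw [if_neg (by intro h; subst h; exact lt_irrefl _ hij'), if_neg (by omega)]
  have hDdet : D.det = 1 := by
    rw [Matrix.det_of_upperTriangular hDtri]
    apply Finset.prod_eq_one
    intro i _
    show (if i = i then (1 : ℚ) else _) = 1
    rw [if_pos rfl]
  -- the prefix-difference of each row
  set P : Fin p → Fin p → ℚ :=
    fun r t => if h : 0 < (t : ℕ) then M r ⟨(t : ℕ) - 1, by omega⟩ else 0 with hP
  have hB : ∀ r t, (M * D) r t = M r t - P r t := by
    intro r t
    rw [Matrix.mul_apply]
    have hterm : ∀ s : Fin p, M r s * D s t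
        = (if s = t then M r t else 0) + (if (s : ℕ) + 1 = (t : ℕ) then -(M r s) else 0) := by
      intro s
      show M r s * (if s = t then (1 : ℚ) else if (s : ℕ) + 1 = (t : ℕ) then -1 else 0) = _
      by_cases h1 : s = t
      · subst h1
        rw [if_pos rfl, if_pos rfl, if_neg (by omega), mul_one, add_zero]
      · rw [if_neg h1, if_neg h1]
        by_cases h2 : (s : ℕ) + 1 = (t : ℕ)
        · rw [if_pos h2, if_pos h2]; ring
        · rw [if_neg h2, if_neg h2]; ring
    rw [Finset.sum_congr rfl fun s _ => hterm s, Finset.sum_add_distrib, Finset.sum_ite_eq',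
      if_pos (Finset.mem_univ t)]
    have h2 : (∑ s : Fin p, if (s : ℕ) + 1 = (t : ℕ) then -(M r s) else 0) = -(P r t) := by
      by_cases ht : 0 < (t : ℕ)
      · simp only [hP]
        rw [Finset.sum_eq_single (⟨(t : ℕ) - 1, by omega⟩ : Fin p)]
        · rw [if_pos (by simp; omega), dif_pos ht]
        · intro s _ hs
          rw [if_neg]
          intro h
          apply hs
          apply Fin.ext
          simp
          omega
        · intro h; exact absurd (Finset.mem_univ _) h
      · simp only [hP]
        rw [dif_neg ht, neg_zero]
        apply Finset.sum_eq_zero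
        intro s _
        rw [if_neg (by omega)]
    rw [h2, sub_eq_add_neg]
  have hPval : ∀ r t, P r t = 0 ∨ P r t = 1 := by
    intro r t
    simp only [hP]
    by_cases h : 0 < (t : ℕ)
    · rw [dif_pos h]; exact hval r _
    · rw [dif_neg h]; left; rfl
  have hone : ∀ r t, (M * D) r t = 1 → M r t = 1 ∧ P r t = 0 := by
    intro r t h
    rw [hB] at h
    rcases hval r t with h1 | h1 <;> rcases hPval r t with h2 | h2 <;>
      rw [h1, h2] at h <;> norm_num at h <;> exact ⟨h1, h2⟩
  have hminus : ∀ r t, (M * D) r t = -1 → M r t = 0 ∧ P r t = 1 := by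
    intro r t h
    rw [hB] at h
    rcases hval r t with h1 | h1 <;> rcases hPval r t with h2 | h2 <;>
      rw [h1, h2] at h <;> norm_num at h <;> exact ⟨h1, h2⟩
  have hMD : (M * D).det ∈ ({-1, 0, 1} : Set ℚ) := by
    apply det_rowPattern
    · intro r t
      rw [hB, memS_iff]
      rcases hval r t with h1 | h1 <;> rcases hPval r t with h2 | h2 <;> rw [h1, h2] <;> norm_num
    · -- at most one +1 per row
      have key : ∀ r (c c' : Fin p), (c : ℕ) < (c' : ℕ) →
          (M * D) r c = 1 → (M * D) r c' = 1 → False := by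
        intro r c c' hlt h h'
        obtain ⟨hm, hp⟩ := hone r c h
        obtain ⟨hm', hp'⟩ := hone r c' h'
        have hc' : 0 < (c' : ℕ) := by omega
        simp only [hP] at hp'
        rw [dif_pos hc'] at hp'
        have : M r ⟨(c' : ℕ) - 1, by omega⟩ = 1 := by
          apply hconv r c _ c' _ _ hm hm'
          · show (c : ℕ) ≤ (c' : ℕ) - 1; omega
          · show (c' : ℕ) - 1 ≤ (c' : ℕ); omega
        rw [this] at hp'
        norm_num at hp'
      intro r c c' h h'
      rcases lt_trichotomy (c : ℕ) (c' : ℕ) with hlt | heq | hlt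
      · exact absurd (key r c c' hlt h h') id
      · exact Fin.ext heq
      · exact absurd (key r c' c hlt h' h) id
    · -- at most one -1 per row
      have key : ∀ r (c c' : Fin p), (c : ℕ) < (c' : ℕ) →
          (M * D) r c = -1 → (M * D) r c' = -1 → False := by
        intro r c c' hlt h h'
        obtain ⟨hm, hp⟩ := hminus r c h
        obtain ⟨hm', hp'⟩ := hminus r c' h'
        simp only [hP] at hp hp'
        have hc : 0 < (c : ℕ) := by
          by_contra hc
          rw [dif_neg hc] at hp
          norm_num at hp
        have hc' : 0 < (c' : ℕ) := by omega
        rw [dif_pos hc] at hp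
        rw [dif_pos hc'] at hp'
        have : M r c = 1 := by
          apply hconv r ⟨(c : ℕ) - 1, by omega⟩ c ⟨(c' : ℕ) - 1, by omega⟩ _ _ hp hp'
          · show (c : ℕ) - 1 ≤ (c : ℕ); omega
          · show (c : ℕ) ≤ (c' : ℕ) - 1; omega
        rw [this] at hm
        norm_num at hm
      intro r c c' h h'
      rcases lt_trichotomy (c : ℕ) (c' : ℕ) with hlt | heq | hlt
      · exact absurd (key r c c' hlt h h') id
      · exact Fin.ext heq
      · exact absurd (key r c' c hlt h' h) id
  rw [Matrix.det_mul, hDdet, mul_one] at hMD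
  exact hMD

end Aux

/-- The constraint matrix of (OWA-IP): rows are indexed by pairs `(i,r)` of
a voter and a rank plus one extra row `⋆`, columns by the variables
`x_{j,ℓ,s}` and `y_c`.  If the profile of rank functions is single-peaked —
there is a linear order on the candidates (encoded by a bijective position
function `pos`) under which every top-initial segment `{c : rank i c ≤ r}`
is an interval — then this matrix is totally unimodular. -/
theorem stmt12 {n m k : ℕ} (hk : 1 ≤ k)
    (rank : Fin n → Fin m → Fin m)
    (hSP : ∃ pos : Equiv.Perm (Fin m), ∀ (i : Fin n) (r : Fin m) (a b c : Fin m),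
      pos a < pos b → pos b < pos c →
      rank i a ≤ r → rank i c ≤ r → rank i b ≤ r) :
    IsTU (Matrix.of fun (row : (Fin n × Fin m) ⊕ Unit)
        (col : (Fin n × Fin k × Fin m) ⊕ Fin m) =>
      match row, col with
      | Sum.inl ir, Sum.inl jls =>
          if jls.1 = ir.1 ∧ jls.2.2 = ir.2 then (-1 : ℚ) else 0
      | Sum.inl ir, Sum.inr c => if rank ir.1 c ≤ ir.2 then 1 else 0
      | Sum.inr _, Sum.inl _ => 0
      | Sum.inr _, Sum.inr _ => 1) := by
  classical
  obtain ⟨pos, hpos⟩ := hSP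
  set A : Matrix ((Fin n × Fin m) ⊕ Unit) ((Fin n × Fin k × Fin m) ⊕ Fin m) ℚ :=
    Matrix.of fun row col =>
      match row, col with
      | Sum.inl ir, Sum.inl jls =>
          if jls.1 = ir.1 ∧ jls.2.2 = ir.2 then (-1 : ℚ) else 0
      | Sum.inl ir, Sum.inr c => if rank ir.1 c ≤ ir.2 then 1 else 0
      | Sum.inr _, Sum.inl _ => 0
      | Sum.inr _, Sum.inr _ => 1
    with hA
  intro K
  induction K with
  | zero =>
    intro f g _ _
    rw [Matrix.det_fin_zero]
    exact one_memS
  | succ p IH =>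
    intro f g hf hg
    by_cases hL : ∃ q jls, g q = Sum.inl jls
    · obtain ⟨q, ⟨j, l, s⟩, hq⟩ := hL
      by_cases hrow : ∃ t, f t = Sum.inl (j, s)
      · obtain ⟨t0, ht0⟩ := hrow
        rw [Matrix.det_succ_column _ q, Finset.sum_eq_single t0]
        · have hentry : (A.submatrix f g) t0 q = -1 := by
            rw [Matrix.submatrix_apply, ht0, hq]
            show (if j = j ∧ s = s then (-1 : ℚ) else 0) = -1
            rw [if_pos ⟨rfl, rfl⟩]
          rw [hentry, Matrix.submatrix_submatrix]
          refine mul_memS (mul_memS (pow_neg_one_memS _) neg_one_memS) ?_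
          exact IH (f ∘ t0.succAbove) (g ∘ q.succAbove)
            (hf.comp Fin.succAbove_right_injective) (hg.comp Fin.succAbove_right_injective)
        · intro t _ ht
          have hzero : (A.submatrix f g) t q = 0 := by
            rw [Matrix.submatrix_apply, hq]
            cases hft : f t with
            | inl ir =>
              show (if j = ir.1 ∧ s = ir.2 then (-1 : ℚ) else 0) = 0
              rw [if_neg]
              rintro ⟨h1, h2⟩
              apply ht
              apply hf
              rw [hft, ht0]
              congr 1
              exact Prod.ext h1.symm h2.symm
            | inr u => rfl
          rw [hzero]; ring
        · intro h; exact absurd (Finset.mem_univ t0) h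
      · have hdet : (A.submatrix f g).det = 0 := by
          apply Matrix.det_eq_zero_of_column_eq_zero q
          intro t
          rw [Matrix.submatrix_apply, hq]
          cases hft : f t with
          | inl ir =>
            show (if j = ir.1 ∧ s = ir.2 then (-1 : ℚ) else 0) = 0
            rw [if_neg]
            rintro ⟨h1, h2⟩
            exact hrow ⟨t, by rw [hft]; exact congrArg Sum.inl (Prod.ext h1.symm h2.symm)⟩
          | inr u => rfl
        rw [hdet]; exact zero_memS
    · -- every selected column is a `y_c` column; use single-peakedness
      have hc : ∀ q, ∃ cc, g q = Sum.inr cc := by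
        intro q
        cases hgq : g q with
        | inl jls => exact absurd ⟨q, jls, hgq⟩ hL
        | inr cc => exact ⟨cc, rfl⟩
      choose c hcg using hc
      have hcinj : Function.Injective c := by
        intro a b h
        apply hg
        rw [hcg, hcg, h]
      set key : Fin (p + 1) → Fin m := fun q => pos (c q) with hkey
      have hkeyinj : Function.Injective key := (Equiv.injective pos).comp hcinj
      set σ := Tuple.sort key with hσ
      have hmono : StrictMono (key ∘ σ) :=
        (Tuple.monotone_sort key).strictMono_of_injective (hkeyinj.comp σ.injective)
      have hperm := Matrix.det_permute' σ (A.submatrix f g)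
      have hMS : ((A.submatrix f g).submatrix id σ).det ∈ ({-1, 0, 1} : Set ℚ) := by
        apply det_convex
        · intro t q
          rw [Matrix.submatrix_apply, Matrix.submatrix_apply, id_eq, hcg (σ q)]
          cases f t with
          | inl ir =>
            show (if rank ir.1 (c (σ q)) ≤ ir.2 then (1 : ℚ) else 0) = 0 ∨
              (if rank ir.1 (c (σ q)) ≤ ir.2 then (1 : ℚ) else 0) = 1
            by_cases h : rank ir.1 (c (σ q)) ≤ ir.2
            · right; rw [if_pos h]
            · left; rw [if_neg h]
          | inr u => right; rfl
        · intro t q1 q2 q3 h12 h23 h1 h3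
          rw [Matrix.submatrix_apply, Matrix.submatrix_apply, id_eq, hcg (σ q2)]
          rw [Matrix.submatrix_apply, Matrix.submatrix_apply, id_eq, hcg (σ q1)] at h1
          rw [Matrix.submatrix_apply, Matrix.submatrix_apply, id_eq, hcg (σ q3)] at h3
          cases hft : f t with
          | inl ir =>
            rw [hft] at h1 h3
            have h1' : rank ir.1 (c (σ q1)) ≤ ir.2 := by
              by_contra h
              rw [show A (Sum.inl ir) (Sum.inr (c (σ q1)))
                  = if rank ir.1 (c (σ q1)) ≤ ir.2 then (1 : ℚ) else 0 from rfl, if_neg h] at h1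
              norm_num at h1
            have h3' : rank ir.1 (c (σ q3)) ≤ ir.2 := by
              by_contra h
              rw [show A (Sum.inl ir) (Sum.inr (c (σ q3)))
                  = if rank ir.1 (c (σ q3)) ≤ ir.2 then (1 : ℚ) else 0 from rfl, if_neg h] at h3
              norm_num at h3
            show (if rank ir.1 (c (σ q2)) ≤ ir.2 then (1 : ℚ) else 0) = 1
            rcases eq_or_lt_of_le h12 with he | hlt12
            · rw [he] at h1'
              rw [if_pos h1']
            · rcases eq_or_lt_of_le h23 with he | hlt23
              · rw [← he] at h3'
                rw [if_pos h3']
              · have hp12 : pos (c (σ q1)) < pos (c (σ q2)) := hmono hlt12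
                have hp23 : pos (c (σ q2)) < pos (c (σ q3)) := hmono hlt23
                rw [if_pos (hpos ir.1 ir.2 _ _ _ hp12 hp23 h1' h3')]
          | inr u => rfl
      rw [Matrix.submatrix_submatrix, Function.comp_id] at hMS
      rcases Int.units_eq_one_or (Equiv.Perm.sign σ) with hs | hs <;>
        rw [hs] at hperm <;> norm_num at hperm
      · rw [← hperm]; exact hMS
      · have h2 := neg_memS hMS
        rw [hperm, neg_neg] at h2
        exact h2
end
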